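/- arXiv:1506.03530 — 10 statements merged into one kernel-verified Lean document; each statement's English description precedes it below -/
import Mathlib

section
/- For every n ≥ 3 and every integer q with q ≥ 3⌊(n+1)/4⌋, the complete tripartite graph K_{n,n,n} has an equitable (q, 3)-tree-coloring; consequently the strong equitable vertex 3-arboricity satisfies va₃≡(K_{n,n,n}) ≤ 3⌊(n+1)/4⌋. -/
set_option maxHeartbeats 1000000

open SimpleGraph

/-- `G` has an equitable `(t,k)`-tree-coloring: a map `f : V → Fin t` whose color
classes have sizes differing by at most 1, and each color class induces a forest
(each component a tree) of maximum degree at most `k`. -/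
def EqTreeColorable {V : Type} [Fintype V] (G : SimpleGraph V) (t k : ℕ) : Prop :=
  ∃ f : V → Fin t,
    (∀ i j : Fin t, ({v | f v = i} : Set V).ncard ≤ ({v | f v = j} : Set V).ncard + 1) ∧
    (∀ i : Fin t, (G.induce {v | f v = i}).IsAcyclic) ∧
    (∀ i : Fin t, ∀ v, ((G.induce {v | f v = i}).neighborSet v).ncard ≤ k)

/-- The strong equitable vertex `k`-arboricity: the least `t` such that `G` has an
equitable `(t',k)`-tree-coloring for every `t' ≥ t`. -/
noncomputable def vaStrong {V : Type} [Fintype V] (G : SimpleGraph V) (k : ℕ) : ℕ :=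
  sInf {t | ∀ t', t ≤ t' → EqTreeColorable G t' k}

/-- The complete tripartite graph `K_{n,n,n}`. -/
def K3 (n : ℕ) : SimpleGraph (Σ _ : Fin 3, Fin n) :=
  completeMultipartiteGraph (fun _ => Fin n)

lemma noadj_acyclic {W : Type*} (H : SimpleGraph W) (h : ∀ a b, ¬ H.Adj a b) :
    H.IsAcyclic := by
  intro v c hc
  cases c with
  | nil => exact hc.not_nil Walk.nil_nil
  | cons h1 p => exact h _ _ h1

lemma star_acyclic {W : Type*} (H : SimpleGraph W) (v0 : W)
    (h : ∀ a b, H.Adj a b → a = v0 ∨ b = v0) : H.IsAcyclic := by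
  intro v c hc
  cases c with
  | nil => exact hc.not_nil Walk.nil_nil
  | cons h1 p =>
    rename_i w
    cases p with
    | nil => exact H.irrefl h1
    | cons h2 p2 =>
      rename_i x
      have hnd : w ∉ p2.support ∧ p2.support.Nodup := by
        have := hc.2
        simpa using this
      have hwx : w ≠ x := fun hh => hnd.1 (hh ▸ p2.start_mem_support)
      have hwv : w ≠ v := fun hh => hnd.1 (hh ▸ p2.end_mem_support)
      rcases h _ _ h1 with hv | hw
      · rcases h _ _ h2 with hw2 | hx
        · exact hwv (by rw [hw2, hv])
        · -- x = v0 = v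
          have hxv : x = v := by rw [hx, hv]
          cases p2 with
          | nil =>
            have := hc.three_le_length
            simp at this
          | cons h3 p3 =>
            have hnd2 : x ∉ p3.support := by
              have := hnd.2
              rw [Walk.support_cons, List.nodup_cons] at this
              exact this.1
            exact hnd2 (hxv ▸ p3.end_mem_support)
      · -- w = v0
        cases p2 with
        | nil =>
          have := hc.three_le_length
          simp at this
        | cons h3 p3 =>
          rename_i y
          rcases h _ _ h3 with hx | hy
          · exact hwx (by rw [hw, hx])
          · have hwy : w = y := by rw [hw, hy]
            apply hnd.1
            rw [hwy, Walk.support_cons]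
            exact List.mem_cons_of_mem _ p3.start_mem_support

def GoodBlock (n a b : ℕ) : Prop :=
  a ≤ b ∧
  ((∃ p, p ≤ 2 ∧ n * p ≤ a ∧ b ≤ n * (p+1)) ∨
   (∃ p, 1 ≤ p ∧ p ≤ 2 ∧ a + 1 = n * p ∧ b ≤ n * p + 3) ∨
   (∃ p, 1 ≤ p ∧ p ≤ 2 ∧ b = n * p + 1 ∧ n * p ≤ a + 3 ∧ n * (p-1) ≤ a))

/-- Prefix-sum function for a layout of blocks: three segments, each made of
`y_k` blocks of size `D+1` followed by `x_k` blocks of size `D`. -/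
def PP (D y1 x1 y2 x2 y3 x3 i : ℕ) : ℕ :=
  D*i + min i y1 + min (i - (y1+x1)) y2 + min (i - (y1+x1+y2+x2)) y3

lemma master (n q D y1 x1 y2 x2 y3 x3 s1 s2 s3 : ℕ) (hn : 3 ≤ n)
    (hD1 : 1 ≤ D) (hDn : D ≤ n)
    (hq : q = y1+x1+y2+x2+y3+x3)
    (hs1 : s1 = (y1+x1)*D + y1) (hs2 : s2 = (y2+x2)*D + y2) (hs3 : s3 = (y3+x3)*D + y3)
    (hr1 : n - 1 ≤ s1) (hr2 : s1 ≤ n+1) (hr3 : 2*n - 1 ≤ s1 + s2) (hr4 : s1+s2 ≤ 2*n+1)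
    (htot : s1 + s2 + s3 = 3*n)
    (hC1 : s1 = n+1 → 1 ≤ x1 ∨ D ≤ 3)
    (hC2 : s1 = n-1 → y2 = 0 ∨ D ≤ 3)
    (hC3 : s1+s2 = 2*n+1 → 1 ≤ x2 ∨ D ≤ 3)
    (hC4 : s1+s2 = 2*n-1 → y3 = 0 ∨ D ≤ 3)
    (hD4 : D ≤ 4 ∨ (s1 = n ∧ s1+s2 = 2*n)) :
    ∃ P : ℕ → ℕ, P 0 = 0 ∧ P q = 3*n ∧ Monotone P ∧
      (∀ i j, i < q → j < q → P (i+1) - P i ≤ (P (j+1) - P j) + 1) ∧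
      (∀ i, i < q → GoodBlock n (P i) (P (i+1))) := by
  have hstepD : ∀ k, PP D y1 x1 y2 x2 y3 x3 k + D ≤ PP D y1 x1 y2 x2 y3 x3 (k+1) ∧
      PP D y1 x1 y2 x2 y3 x3 (k+1) ≤ PP D y1 x1 y2 x2 y3 x3 k + D + 1 := by
    intro k
    have h1 : D * (k+1) = D * k + D := by ring
    simp only [PP]
    omega
  have hsmallstep : ∀ k, ¬(k < y1 ∨ (y1+x1 ≤ k ∧ k < y1+x1+y2) ∨
      (y1+x1+y2+x2 ≤ k ∧ k < y1+x1+y2+x2+y3)) →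
      PP D y1 x1 y2 x2 y3 x3 (k+1) = PP D y1 x1 y2 x2 y3 x3 k + D := by
    intro k hk
    have h1 : D * (k+1) = D * k + D := by ring
    simp only [PP]
    omega
  have hmono : Monotone (PP D y1 x1 y2 x2 y3 x3) := by
    apply monotone_nat_of_le_succ
    intro k
    have := hstepD k
    omega
  have hstrict : StrictMono (PP D y1 x1 y2 x2 y3 x3) := by
    apply strictMono_nat_of_lt_succ
    intro k
    have := hstepD k
    omega
  have hPN1 : PP D y1 x1 y2 x2 y3 x3 (y1+x1) = s1 := by
    simp only [PP]
    have h1 : D * (y1+x1) = (y1+x1) * D := by ring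
    omega
  have hPN2 : PP D y1 x1 y2 x2 y3 x3 (y1+x1+y2+x2) = s1 + s2 := by
    simp only [PP]
    have h1 : D * (y1+x1+y2+x2) = (y1+x1) * D + (y2+x2) * D := by ring
    omega
  have hPq : PP D y1 x1 y2 x2 y3 x3 q = 3*n := by
    simp only [PP]
    have h1 : D * q = (y1+x1) * D + (y2+x2) * D + (y3+x3) * D := by rw [hq]; ring
    omega
  refine ⟨PP D y1 x1 y2 x2 y3 x3, by simp [PP], hPq, hmono, ?_, ?_⟩
  · intro i j hi hj
    have := hstepD i
    have := hstepD j
    omega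
  · intro i hi
    have hub := hstepD i
    by_cases hseg1 : i < y1 + x1
    · -- segment 1
      have hble : PP D y1 x1 y2 x2 y3 x3 (i+1) ≤ s1 := hPN1 ▸ hmono (by omega)
      by_cases hbn : PP D y1 x1 y2 x2 y3 x3 (i+1) ≤ n
      · exact ⟨by omega, Or.inl ⟨0, by omega, by omega, by omega⟩⟩
      · have hs1n : s1 = n+1 := by omega
        have hi1 : i + 1 = y1 + x1 := by
          by_contra hne
          have := hstrict (show i+1 < y1+x1 by omega)
          omega
        have ht4 : PP D y1 x1 y2 x2 y3 x3 (i+1) ≤ PP D y1 x1 y2 x2 y3 x3 i + 4 := by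
          rcases hC1 hs1n with hx | hD3
          · have hD4' : D ≤ 4 := by
              rcases hD4 with h | h
              · exact h
              · omega
            have := hsmallstep i (by omega)
            omega
          · omega
        refine ⟨by omega, Or.inr (Or.inr ⟨1, le_refl 1, by omega, by omega, by omega, by omega⟩)⟩
    · by_cases hseg2 : i < y1 + x1 + y2 + x2
      · -- segment 2
        have hage : s1 ≤ PP D y1 x1 y2 x2 y3 x3 i := hPN1 ▸ hmono (by omega)
        have hble : PP D y1 x1 y2 x2 y3 x3 (i+1) ≤ s1 + s2 := hPN2 ▸ hmono (by omega)
        by_cases han : n ≤ PP D y1 x1 y2 x2 y3 x3 i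
        · by_cases hb2n : PP D y1 x1 y2 x2 y3 x3 (i+1) ≤ 2*n
          · exact ⟨by omega, Or.inl ⟨1, by omega, by omega, by omega⟩⟩
          · have hs12 : s1 + s2 = 2*n+1 := by omega
            have hi1 : i + 1 = y1 + x1 + y2 + x2 := by
              by_contra hne
              have := hstrict (show i+1 < y1+x1+y2+x2 by omega)
              omega
            have ht4 : PP D y1 x1 y2 x2 y3 x3 (i+1) ≤ PP D y1 x1 y2 x2 y3 x3 i + 4 := by
              rcases hC3 hs12 with hx | hD3
              · have hD4' : D ≤ 4 := by
                  rcases hD4 with h | h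
                  · exact h
                  · omega
                have := hsmallstep i (by omega)
                omega
              · omega
            refine ⟨by omega, Or.inr (Or.inr ⟨2, by omega, le_refl 2, by omega, by omega, by omega⟩)⟩
        · -- first block of segment 2 crossing at n*1
          have ha : PP D y1 x1 y2 x2 y3 x3 i = n - 1 := by omega
          have hs1n : s1 = n - 1 := by omega
          have hieq : i = y1 + x1 := by
            by_contra hne
            have := hstrict (show y1+x1 < i by omega)
            omega
          have ht4 : PP D y1 x1 y2 x2 y3 x3 (i+1) ≤ PP D y1 x1 y2 x2 y3 x3 i + 4 := by
            rcases hC2 hs1n with hy | hD3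
            · have hD4' : D ≤ 4 := by
                rcases hD4 with h | h
                · exact h
                · omega
              have := hsmallstep i (by omega)
              omega
            · omega
          refine ⟨by omega, Or.inr (Or.inl ⟨1, le_refl 1, by omega, by omega, by omega⟩)⟩
      · -- segment 3
        have hage : s1 + s2 ≤ PP D y1 x1 y2 x2 y3 x3 i := hPN2 ▸ hmono (by omega)
        have hble : PP D y1 x1 y2 x2 y3 x3 (i+1) ≤ 3*n := hPq ▸ hmono (by omega)
        by_cases ha2n : 2*n ≤ PP D y1 x1 y2 x2 y3 x3 i
        · exact ⟨by omega, Or.inl ⟨2, by omega, by omega, by omega⟩⟩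
        · have ha : PP D y1 x1 y2 x2 y3 x3 i = 2*n - 1 := by omega
          have hs12 : s1 + s2 = 2*n - 1 := by omega
          have hieq : i = y1 + x1 + y2 + x2 := by
            by_contra hne
            have := hstrict (show y1+x1+y2+x2 < i by omega)
            omega
          have ht4 : PP D y1 x1 y2 x2 y3 x3 (i+1) ≤ PP D y1 x1 y2 x2 y3 x3 i + 4 := by
            rcases hC4 hs12 with hy | hD3
            · have hD4' : D ≤ 4 := by
                rcases hD4 with h | h
                · exact h
                · omega
              have := hsmallstep i (by omega)
              omega
            · omega
          refine ⟨by omega, Or.inr (Or.inl ⟨2, by omega, le_refl 2, by omega, by omega⟩)⟩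

lemma graph_layer (n q : ℕ) (hn : 3 ≤ n) (P : ℕ → ℕ)
    (hP0 : P 0 = 0) (hPq : P q = 3 * n) (hmono : Monotone P)
    (hsize : ∀ i j, i < q → j < q → P (i+1) - P i ≤ (P (j+1) - P j) + 1)
    (hgood : ∀ i, i < q → GoodBlock n (P i) (P (i+1))) :
    EqTreeColorable (K3 n) q 3 := by
  have hq1 : 1 ≤ q := by
    by_contra hq
    have : q = 0 := by omega
    rw [this, hP0] at hPq; omega
  set V := (Σ _ : Fin 3, Fin n) with hV
  let ℓ : V → ℕ := fun v => v.1.val * n + v.2.val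
  have hl3 : ∀ v : V, ℓ v < 3 * n := by
    intro v
    have h1 : v.1.val ≤ 2 := by have := v.1.isLt; omega
    have h2 : v.2.val < n := v.2.isLt
    have h3 : v.1.val * n ≤ 2 * n := Nat.mul_le_mul_right n h1
    show v.1.val * n + v.2.val < 3 * n
    omega
  -- the inverse map
  let Φ : ℕ → V := fun m => ⟨⟨min (m / n) 2, by omega⟩, ⟨m % n, Nat.mod_lt _ (by omega)⟩⟩
  have hΦℓ : ∀ v : V, Φ (ℓ v) = v := by
    rintro ⟨⟨a, ha⟩, ⟨b, hb⟩⟩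
    show (⟨⟨min ((a * n + b) / n) 2, _⟩, ⟨(a * n + b) % n, _⟩⟩ : V) = _
    have hdiv : (a * n + b) / n = a :=
      Nat.div_eq_of_lt_le (Nat.le_add_right _ _)
        (by have h5 : (a+1) * n = a * n + n := by ring
            omega)
    have hmod : (a * n + b) % n = b := by
      have h6 := Nat.div_add_mod (a * n + b) n
      rw [hdiv] at h6
      have h7 : n * a = a * n := Nat.mul_comm _ _
      omega
    simp only [hdiv, hmod]
    congr 1
    · ext; simp; omega
  have hℓΦ : ∀ m, m < 3 * n → ℓ (Φ m) = m := by
    intro m hm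
    have hd : m / n < 3 := by
      rw [Nat.div_lt_iff_lt_mul (by omega)]; omega
    show (min (m / n) 2) * n + m % n = m
    rw [min_eq_left (by omega)]
    rw [mul_comm]
    exact Nat.div_add_mod m n
  have hinj : Function.Injective ℓ := by
    intro u w h
    have : Φ (ℓ u) = Φ (ℓ w) := by rw [h]
    rwa [hΦℓ, hΦℓ] at this
  -- part determination
  have hpart : ∀ (v : V) (p : ℕ), n * p ≤ ℓ v → ℓ v < n * (p+1) → v.1.val = p := by
    intro v p h1 h2
    have hlv : ℓ v = v.1.val * n + v.2.val := rfl
    have hdiv : ℓ v / n = v.1.val := by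
      rw [hlv]
      exact Nat.div_eq_of_lt_le (Nat.le_add_right _ _)
        (by have h5 : (v.1.val+1) * n = v.1.val * n + n := by ring
            have h6 := v.2.isLt
            omega)
    have : ℓ v / n = p :=
      Nat.div_eq_of_lt_le (by rw [mul_comm]; exact h1) (by rw [mul_comm]; exact h2)
    omega
  -- the coloring
  have hex : ∀ v : V, ∃ i, ℓ v < P (i + 1) := by
    intro v
    refine ⟨q - 1, ?_⟩
    have : q - 1 + 1 = q := by omega
    rw [this, hPq]
    exact hl3 v
  let f : V → Fin q := fun v => ⟨Nat.find (hex v), by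
    have h1 : Nat.find (hex v) ≤ q - 1 := Nat.find_le (by
      have : q - 1 + 1 = q := by omega
      rw [this, hPq]; exact hl3 v)
    omega⟩
  have hchar : ∀ (v : V) (i : ℕ), i < q → ((Nat.find (hex v) = i) ↔ (P i ≤ ℓ v ∧ ℓ v < P (i+1))) := by
    intro v i hi
    constructor
    · intro hfind
      constructor
      · rcases Nat.eq_zero_or_pos i with h0 | h0
        · rw [h0, hP0]; exact Nat.zero_le _
        · have := Nat.find_min (hex v) (m := i - 1) (by omega)
          push_neg at this
          have hii : i - 1 + 1 = i := by omega
          rwa [hii] at this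
      · rw [← hfind]; exact Nat.find_spec (hex v)
    · rintro ⟨h1, h2⟩
      have hle : Nat.find (hex v) ≤ i := Nat.find_min' (hex v) h2
      rcases Nat.lt_or_ge (Nat.find (hex v)) i with hlt | hge
      · exfalso
        have hspec := Nat.find_spec (hex v)
        have : P (Nat.find (hex v) + 1) ≤ P i := hmono (by omega)
        omega
      · omega
  have hfchar : ∀ (v : V) (i : Fin q), (f v = i) ↔ (P i.val ≤ ℓ v ∧ ℓ v < P (i.val+1)) := by
    intro v i
    rw [show (f v = i) ↔ (Nat.find (hex v) = i.val) from by
      constructor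
      · intro h; exact congrArg Fin.val h
      · intro h; exact Fin.ext h]
    exact hchar v i.val i.isLt
  -- image of a class
  have himg : ∀ i : Fin q, ℓ '' {v | f v = i} = Set.Ico (P i.val) (P (i.val+1)) := by
    intro i
    ext m
    constructor
    · rintro ⟨v, hv, rfl⟩
      exact (hfchar v i).mp hv
    · intro hm
      simp only [Set.mem_Ico] at hm
      have hm3 : m < 3 * n := by
        have : P (i.val + 1) ≤ P q := hmono (by omega)
        omega
      refine ⟨Φ m, ?_, hℓΦ m hm3⟩
      show f (Φ m) = i
      rw [hfchar]
      rw [hℓΦ m hm3]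
      exact hm
  have hncard : ∀ i : Fin q, ({v | f v = i} : Set V).ncard = P (i.val+1) - P i.val := by
    intro i
    rw [← Set.ncard_image_of_injective _ hinj, himg, ← Finset.coe_Ico,
      Set.ncard_coe_finset, Nat.card_Ico]
  refine ⟨f, ?_, ?_, ?_⟩
  · intro i j
    rw [hncard, hncard]
    exact hsize i.val j.val i.isLt j.isLt
  · -- acyclicity
    intro i
    have hg := hgood i.val i.isLt
    set S : Set V := {v | f v = i} with hS
    have hSmem : ∀ v : V, v ∈ S ↔ (P i.val ≤ ℓ v ∧ ℓ v < P (i.val+1)) := fun v => hfchar v i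
    have hAdj : ∀ (u w : ↥S), ((K3 n).induce S).Adj u w ↔ u.val.1 ≠ w.val.1 := by
      intro u w; simp [K3]
    rcases hg.2 with ⟨p, hp2, hpa, hpb⟩ | ⟨p, hp1, hp2, hpa, hpb⟩ | ⟨p, hp1, hp2, hpb, hpa3, hpa⟩
    · -- mono
      apply noadj_acyclic
      intro u w hadj
      have hu : u.val.1.val = p := hpart _ p (le_trans hpa ((hSmem _).mp u.prop).1)
        (lt_of_lt_of_le ((hSmem _).mp u.prop).2 hpb)
      have hw : w.val.1.val = p := hpart _ p (le_trans hpa ((hSmem _).mp w.prop).1)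
        (lt_of_lt_of_le ((hSmem _).mp w.prop).2 hpb)
      exact ((hAdj u w).mp hadj) (Fin.ext (hu.trans hw.symm))
    · -- starL : v0 at position n*p - 1 = P i
      have hcp : p = 1 ∨ p = 2 := by omega
      let v0 : V := ⟨⟨p-1, by omega⟩, ⟨n-1, by omega⟩⟩
      have hv0l : ℓ v0 = n * p - 1 := by
        show (p-1) * n + (n-1) = n * p - 1
        rcases hcp with h | h <;> subst h <;> simp <;> omega
      have hv0a : ℓ v0 = P i.val := by omega
      have hnp3 : n * p + 3 ≤ n * (p+1) := by
        have : n * (p+1) = n * p + n := by ring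
        omega
      have hothers : ∀ v : V, v ∈ S → v ≠ v0 → v.1.val = p := by
        intro v hv hne
        have hm := (hSmem v).mp hv
        have hla : ℓ v ≠ P i.val := fun h => hne (hinj (h.trans hv0a.symm))
        exact hpart v p (by omega) (by omega)
      by_cases hv0S : v0 ∈ S
      · apply star_acyclic _ (⟨v0, hv0S⟩ : ↥S)
        intro aa bb hadj
        by_contra hcon
        push_neg at hcon
        have ha : aa.val ≠ v0 := fun h => hcon.1 (Subtype.ext h)
        have hb : bb.val ≠ v0 := fun h => hcon.2 (Subtype.ext h)
        exact ((hAdj aa bb).mp hadj)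
          (Fin.ext ((hothers _ aa.prop ha).trans (hothers _ bb.prop hb).symm))
      · apply noadj_acyclic
        intro aa bb hadj
        have ha : aa.val ≠ v0 := fun h => hv0S (h ▸ aa.prop)
        have hb : bb.val ≠ v0 := fun h => hv0S (h ▸ bb.prop)
        exact ((hAdj aa bb).mp hadj)
          (Fin.ext ((hothers _ aa.prop ha).trans (hothers _ bb.prop hb).symm))
    · -- starR : v0 at position n*p = P (i+1) - 1
      have hcp : p = 1 ∨ p = 2 := by omega
      let v0 : V := ⟨⟨p, by omega⟩, ⟨0, by omega⟩⟩
      have hv0l : ℓ v0 = n * p := by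
        show p * n + 0 = n * p
        rw [mul_comm]; omega
      have hothers : ∀ v : V, v ∈ S → v ≠ v0 → v.1.val = p - 1 := by
        intro v hv hne
        have hm := (hSmem v).mp hv
        have hla : ℓ v ≠ n * p := fun h => hne (hinj (h.trans hv0l.symm))
        have hp1' : p - 1 + 1 = p := by omega
        apply hpart v (p-1) (by omega)
        rw [hp1']
        omega
      by_cases hv0S : v0 ∈ S
      · apply star_acyclic _ (⟨v0, hv0S⟩ : ↥S)
        intro aa bb hadj
        by_contra hcon
        push_neg at hcon
        have ha : aa.val ≠ v0 := fun h => hcon.1 (Subtype.ext h)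
        have hb : bb.val ≠ v0 := fun h => hcon.2 (Subtype.ext h)
        exact ((hAdj aa bb).mp hadj)
          (Fin.ext ((hothers _ aa.prop ha).trans (hothers _ bb.prop hb).symm))
      · apply noadj_acyclic
        intro aa bb hadj
        have ha : aa.val ≠ v0 := fun h => hv0S (h ▸ aa.prop)
        have hb : bb.val ≠ v0 := fun h => hv0S (h ▸ bb.prop)
        exact ((hAdj aa bb).mp hadj)
          (Fin.ext ((hothers _ aa.prop ha).trans (hothers _ bb.prop hb).symm))
  · -- degrees
    intro i v
    have hg := hgood i.val i.isLt
    have hSmem : ∀ u : V, u ∈ {v | f v = i} ↔ (P i.val ≤ ℓ u ∧ ℓ u < P (i.val+1)) :=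
      fun u => hfchar u i
    have hAdj : ∀ (u w : ↥{v | f v = i}), ((K3 n).induce {v | f v = i}).Adj u w ↔ u.val.1 ≠ w.val.1 := by
      intro u w; simp [K3]
    have key : ∀ (c d : ℕ),
        (∀ w : ↥{v | f v = i}, w ∈ ((K3 n).induce {v | f v = i}).neighborSet v → c ≤ ℓ w.val ∧ ℓ w.val < d) →
        (((K3 n).induce {v | f v = i}).neighborSet v).ncard ≤ d - c := by
      intro c d hsub
      have hginj : Function.Injective (fun (w : ↥{v | f v = i}) => ℓ w.val) :=
        fun u w h => Subtype.ext (hinj h)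
      rw [← Set.ncard_image_of_injective _ hginj]
      have hssub : (fun (w : ↥{v | f v = i}) => ℓ w.val) '' (((K3 n).induce {v | f v = i}).neighborSet v) ⊆ Set.Ico c d := by
        rintro m ⟨w, hw, rfl⟩
        exact Set.mem_Ico.mpr (hsub w hw)
      calc ((fun (w : ↥{v | f v = i}) => ℓ w.val) '' (((K3 n).induce {v | f v = i}).neighborSet v)).ncard
            ≤ (Set.Ico c d).ncard := Set.ncard_le_ncard hssub (Set.finite_Ico c d)
        _ = d - c := by rw [← Finset.coe_Ico, Set.ncard_coe_finset, Nat.card_Ico]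
    rcases hg.2 with ⟨p, hp2, hpa, hpb⟩ | ⟨p, hp1, hp2, hpa, hpb⟩ | ⟨p, hp1, hp2, hpb, hpa3, hpa⟩
    · -- mono: no neighbors at all
      have h0 := key (P (i.val+1)) (P (i.val+1)) (by
        intro w hw
        exfalso
        have hadj : ((K3 n).induce {v | f v = i}).Adj v w := hw
        have hu : v.val.1.val = p := hpart _ p (le_trans hpa ((hSmem _).mp v.prop).1)
          (lt_of_lt_of_le ((hSmem _).mp v.prop).2 hpb)
        have hwp : w.val.1.val = p := hpart _ p (le_trans hpa ((hSmem _).mp w.prop).1)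
          (lt_of_lt_of_le ((hSmem _).mp w.prop).2 hpb)
        exact ((hAdj v w).mp hadj) (Fin.ext (hu.trans hwp.symm)))
      exact le_trans h0 (by omega)
    · -- starL
      have hcp : p = 1 ∨ p = 2 := by omega
      let v0 : V := ⟨⟨p-1, by omega⟩, ⟨n-1, by omega⟩⟩
      have hv0l : ℓ v0 = n * p - 1 := by
        show (p-1) * n + (n-1) = n * p - 1
        rcases hcp with h | h <;> subst h <;> simp <;> omega
      have hv0a : ℓ v0 = P i.val := by omega
      have hothers : ∀ u : V, u ∈ {v | f v = i} → u ≠ v0 → u.1.val = p := by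
        intro u hu hne
        have hm := (hSmem u).mp hu
        have hla : ℓ u ≠ P i.val := fun h => hne (hinj (h.trans hv0a.symm))
        have hnp3 : n * p + 3 ≤ n * (p+1) := by
          have : n * (p+1) = n * p + n := by ring
          omega
        exact hpart u p (by omega) (by omega)
      by_cases hveq : v.val = v0
      · have h0 := key (n * p) (P (i.val+1)) (by
          intro w hw
          have hadj : ((K3 n).induce {v | f v = i}).Adj v w := hw
          have hwne : w.val ≠ v0 := by
            intro h
            exact ((hAdj v w).mp hadj) (by rw [hveq, h])
          have hm := (hSmem w.val).mp w.prop
          have hla : ℓ w.val ≠ P i.val := fun h => hwne (hinj (h.trans hv0a.symm))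
          exact ⟨by omega, hm.2⟩)
        exact le_trans h0 (by omega)
      · have h0 := key (P i.val) (P i.val + 1) (by
          intro w hw
          have hadj : ((K3 n).induce {v | f v = i}).Adj v w := hw
          have hwv0 : w.val = v0 := by
            by_contra hwne
            exact ((hAdj v w).mp hadj)
              (Fin.ext ((hothers _ v.prop hveq).trans (hothers _ w.prop hwne).symm))
          have heq : ℓ w.val = P i.val := by rw [hwv0, hv0a]
          omega)
        exact le_trans h0 (by omega)
    · -- starR
      have hcp : p = 1 ∨ p = 2 := by omega
      let v0 : V := ⟨⟨p, by omega⟩, ⟨0, by omega⟩⟩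
      have hv0l : ℓ v0 = n * p := by
        show p * n + 0 = n * p
        rw [mul_comm]; omega
      have hothers : ∀ u : V, u ∈ {v | f v = i} → u ≠ v0 → u.1.val = p - 1 := by
        intro u hu hne
        have hm := (hSmem u).mp hu
        have hla : ℓ u ≠ n * p := fun h => hne (hinj (h.trans hv0l.symm))
        have hp1' : p - 1 + 1 = p := by omega
        apply hpart u (p-1) (by omega)
        rw [hp1']
        omega
      by_cases hveq : v.val = v0
      · have h0 := key (P i.val) (n * p) (by
          intro w hw
          have hadj : ((K3 n).induce {v | f v = i}).Adj v w := hw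
          have hwne : w.val ≠ v0 := by
            intro h
            exact ((hAdj v w).mp hadj) (by rw [hveq, h])
          have hm := (hSmem w.val).mp w.prop
          have hla : ℓ w.val ≠ n * p := fun h => hwne (hinj (h.trans hv0l.symm))
          exact ⟨hm.1, by omega⟩)
        exact le_trans h0 (by omega)
      · have h0 := key (n * p) (n * p + 1) (by
          intro w hw
          have hadj : ((K3 n).induce {v | f v = i}).Adj v w := hw
          have hwv0 : w.val = v0 := by
            by_contra hwne
            exact ((hAdj v w).mp hadj)
              (Fin.ext ((hothers _ v.prop hveq).trans (hothers _ w.prop hwne).symm))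
          have heq : ℓ w.val = n * p := by rw [hwv0, hv0l]
          omega)
        exact le_trans h0 (by omega)

lemma exists_P (n q : ℕ) (hn : 3 ≤ n) (hq : 3 * ((n+1)/4) ≤ q) :
    ∃ P : ℕ → ℕ, P 0 = 0 ∧ P q = 3*n ∧ Monotone P ∧
      (∀ i j, i < q → j < q → P (i+1) - P i ≤ (P (j+1) - P j) + 1) ∧
      (∀ i, i < q → GoodBlock n (P i) (P (i+1))) := by
  have hq3 : 3 ≤ q := by omega
  by_cases hbig : 3*n < q
  · -- more colors than vertices: all classes of size ≤ 1
    refine ⟨fun i => min i (3*n), by simp, by simp; omega, ?_, ?_, ?_⟩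
    · apply monotone_nat_of_le_succ
      intro k
      show min k (3*n) ≤ min (k+1) (3*n)
      omega
    · intro i j hi hj
      show min (i+1) (3*n) - min i (3*n) ≤ min (j+1) (3*n) - min j (3*n) + 1
      omega
    · intro i hi
      show GoodBlock n (min i (3*n)) (min (i+1) (3*n))
      by_cases hin : i < 3*n
      · -- singleton block [i, i+1)
        have hd := Nat.div_add_mod i n
        have hm : i % n < n := Nat.mod_lt _ (by omega)
        have hp3 : i / n < 3 := by
          rw [Nat.div_lt_iff_lt_mul (by omega : 0 < n)]
          omega
        have hmul : n * (i/n + 1) = n * (i/n) + n := by ring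
        refine ⟨by omega, Or.inl ⟨i/n, by omega, by omega, by omega⟩⟩
      · refine ⟨by omega, Or.inl ⟨2, le_refl 2, by omega, by omega⟩⟩
  · -- q ≤ 3n
    push_neg at hbig
    have hDR := Nat.div_add_mod (3*n) q
    set D := 3*n/q with hD
    set R := 3*n%q with hR
    have hRq : R < q := Nat.mod_lt _ (by omega)
    clear_value R
    have hD1 : 1 ≤ D := by
      rw [hD]
      rw [Nat.le_div_iff_mul_le (by omega : 0 < q)]
      omega
    by_cases hD5 : 5 ≤ D
    · -- q must be divisible by 3 here; use one segment per part
      have h5q : q * 5 ≤ q * D := Nat.mul_le_mul_left q hD5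
      clear_value D
      have hq30 : q % 3 = 0 := by omega
      have hc := Nat.div_add_mod q 3
      set c := q/3 with hc3
      clear_value c
      have hc1 : 1 ≤ c := by omega
      have hcn : c ≤ n := by
        by_contra hcc
        push_neg at hcc
        have h1q : q * 1 ≤ q * D := Nat.mul_le_mul_left q hD1
        omega
      have hnc := Nat.div_add_mod n c
      have hncm : n % c < c := Nat.mod_lt _ (by omega)
      set E := n/c with hE
      set y := n%c with hy
      clear_value E y
      have hE1 : 1 ≤ E := by
        rcases Nat.eq_zero_or_pos E with h0 | h0
        · rw [h0, Nat.mul_zero] at hnc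
          omega
        · exact h0
      have hEn : E ≤ n := by
        rcases Nat.eq_zero_or_pos y with h0 | h0 <;> nlinarith
      have hmul : (y + (c - y)) * E = c * E := by
        congr 1
        omega
      have hmul2 : c * E = E * c := by ring
      exact master n q E y (c - y) y (c - y) y (c - y) n n n hn
        hE1 hEn (by omega)
        (by rw [hmul]; omega) (by rw [hmul]; omega) (by rw [hmul]; omega)
        (by omega) (by omega) (by omega) (by omega) (by omega)
        (by omega) (by omega) (by omega) (by omega)
        (Or.inr ⟨rfl, by omega⟩)
    · push_neg at hD5
      have hDcase : D = 1 ∨ D = 2 ∨ D = 3 ∨ D = 4 := by omega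
      clear hD
      clear_value D
      rcases hDcase with h1 | h2 | h3 | h4
      · -- D = 1 : block sizes 1 and 2
        subst h1
        rw [mul_one] at hDR
        set y1 := min R ((n+1)/2) with hy1
        have hy1f : y1 ≤ R ∧ 2*y1 ≤ n+1 ∧ (y1 = R ∨ n ≤ 2*y1) := by omega
        clear_value y1
        clear hy1
        set y2 := min (R - y1) (n/2) with hy2
        have hy2f : y2 ≤ R - y1 ∧ 2*y2 ≤ n ∧ (y2 = R - y1 ∨ n - 1 ≤ 2*y2) := by omega
        clear_value y2
        clear hy2
        refine master n q 1 y1 (n+1 - 2*y1) y2 (n - 2*y2)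
          (R - y1 - y2) ((n-1) - 2*(R - y1 - y2))
          (n+1) n (n-1) hn (by omega) (by omega) (by omega) (by omega) (by omega)
          (by omega) (by omega) (by omega) (by omega) (by omega) (by omega)
          (by omega) (by omega) (by omega) (by omega) (by omega)
      · -- D = 2 : sizes 2 and 3
        subst h2
        set y1 := R/3 with hy1
        have hy1f : 3*y1 ≤ R ∧ R ≤ 3*y1 + 2 := by omega
        clear_value y1
        clear hy1
        set y2 := (R - y1)/2 with hy2
        have hy2f : 2*y2 ≤ R - y1 ∧ R - y1 ≤ 2*y2 + 1 := by omega
        clear_value y2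
        clear hy2
        set s1 := n - 1 + ((y1 + (n-1)) % 2) with hs1d
        have hs1f : n - 1 ≤ s1 ∧ s1 ≤ n ∧ (s1 + y1) % 2 = 0 := by omega
        clear_value s1
        clear hs1d
        set s12 := 2*n - 1 + ((y1 + y2 + (2*n - 1)) % 2) with hs12d
        have hs12f : 2*n - 1 ≤ s12 ∧ s12 ≤ 2*n ∧ (s12 + y1 + y2) % 2 = 0 := by omega
        clear_value s12
        clear hs12d
        set x1 := (s1 - 3*y1)/2 with hx1
        have hx1f : 2*x1 + 3*y1 = s1 := by omega
        clear_value x1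
        clear hx1
        set x2 := (s12 - s1 - 3*y2)/2 with hx2
        have hx2f : 2*x2 + 3*y2 = s12 - s1 := by omega
        clear_value x2
        clear hx2
        set x3 := (3*n - s12 - 3*(R - y1 - y2))/2 with hx3
        have hx3f : 2*x3 + 3*(R - y1 - y2) = 3*n - s12 := by omega
        clear_value x3
        clear hx3
        refine master n q 2 y1 x1 y2 x2 (R - y1 - y2) x3
          s1 (s12 - s1) (3*n - s12) hn (by omega) (by omega) (by omega) (by omega)
          (by omega) (by omega) (by omega) (by omega) (by omega) (by omega) (by omega)
          (by omega) (by omega) (by omega) (by omega) (by omega)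
      · -- D = 3 : sizes 3 and 4
        subst h3
        set y1 := R/3 with hy1
        have hy1f : 3*y1 ≤ R ∧ R ≤ 3*y1 + 2 := by omega
        clear_value y1
        clear hy1
        set y2 := (R - y1)/2 with hy2
        have hy2f : 2*y2 ≤ R - y1 ∧ R - y1 ≤ 2*y2 + 1 := by omega
        clear_value y2
        clear hy2
        set s1 := n - 1 + ((y1 + 2*(n-1)) % 3) with hs1d
        have hs1f : n - 1 ≤ s1 ∧ s1 ≤ n + 1 ∧ (s1 + 2*y1) % 3 = 0 := by omega
        clear_value s1
        clear hs1d
        set s12 := 2*n - 1 + ((y1 + y2 + 2*(2*n - 1)) % 3) with hs12d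
        have hs12f : 2*n - 1 ≤ s12 ∧ s12 ≤ 2*n + 1 ∧ (s12 + 2*(y1 + y2)) % 3 = 0 := by omega
        clear_value s12
        clear hs12d
        set x1 := (s1 - 4*y1)/3 with hx1
        have hx1f : 3*x1 + 4*y1 = s1 := by omega
        clear_value x1
        clear hx1
        set x2 := (s12 - s1 - 4*y2)/3 with hx2
        have hx2f : 3*x2 + 4*y2 = s12 - s1 := by omega
        clear_value x2
        clear hx2
        set x3 := (3*n - s12 - 4*(R - y1 - y2))/3 with hx3
        have hx3f : 3*x3 + 4*(R - y1 - y2) = 3*n - s12 := by omega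
        clear_value x3
        clear hx3
        refine master n q 3 y1 x1 y2 x2 (R - y1 - y2) x3
          s1 (s12 - s1) (3*n - s12) hn (by omega) (by omega) (by omega) (by omega)
          (by omega) (by omega) (by omega) (by omega) (by omega) (by omega) (by omega)
          (by omega) (by omega) (by omega) (by omega) (by omega)
      · -- D = 4 : sizes 4 and 5
        subst h4
        have hcase : (R = 0 ∧ n%4 = 0) ∨ (R = 3 ∧ n%4 = 1) ∨ (R = 2 ∧ n%4 = 2)
            ∨ (R = 6 ∧ n%4 = 2) := by
          have h4n : n%4 = 0 ∨ n%4 = 1 ∨ n%4 = 2 ∨ n%4 = 3 := by omega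
          rcases h4n with h | h | h | h
          · exact Or.inl ⟨by omega, h⟩
          · exact Or.inr (Or.inl ⟨by omega, h⟩)
          · have h26 : R = 2 ∨ R = 6 := by omega
            rcases h26 with h2 | h2
            · exact Or.inr (Or.inr (Or.inl ⟨h2, h⟩))
            · exact Or.inr (Or.inr (Or.inr ⟨h2, h⟩))
          · exfalso; omega
        rcases hcase with ⟨hR0, hn4⟩ | ⟨hR0, hn4⟩ | ⟨hR0, hn4⟩ | ⟨hR0, hn4⟩
        · refine master n q 4 0 (n/4) 0 (n/4) 0 (n/4) n n n hn (by omega) (by omega)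
            (by omega) (by omega) (by omega) (by omega) (by omega) (by omega)
            (by omega) (by omega) (by omega)
            (by omega) (by omega) (by omega) (by omega) (by omega)
        · refine master n q 4 1 ((n-5)/4) 1 ((n-5)/4) 1 ((n-5)/4) n n n hn (by omega)
            (by omega) (by omega) (by omega) (by omega) (by omega) (by omega) (by omega)
            (by omega) (by omega) (by omega)
            (by omega) (by omega) (by omega) (by omega) (by omega)
        · -- R = 2 : y = (1,0,1), s = (n-1, n+2, n-1)
          refine master n q 4 1 ((n-6)/4) 0 ((n+2)/4) 1 ((n-6)/4) (n-1) (n+2) (n-1) hn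
            (by omega) (by omega) (by omega) (by omega) (by omega) (by omega) (by omega)
            (by omega) (by omega) (by omega) (by omega)
            (by omega) (by omega) ?_ (by omega) (by omega)
          intro _
          left
          have h42 : 4 ≤ n + 2 := by omega
          omega
        · refine master n q 4 2 ((n-10)/4) 2 ((n-10)/4) 2 ((n-10)/4) n n n hn (by omega)
            (by omega) (by omega) (by omega) (by omega) (by omega) (by omega) (by omega)
            (by omega) (by omega) (by omega) (by omega) (by omega) (by omega) (by omega)
            (by omega)

theorem stmt1 (n : ℕ) (hn : 3 ≤ n) :
    (∀ q : ℕ, 3 * ((n + 1) / 4) ≤ q → EqTreeColorable (K3 n) q 3) ∧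
    vaStrong (K3 n) 3 ≤ 3 * ((n + 1) / 4) := by
  have main : ∀ q : ℕ, 3 * ((n + 1) / 4) ≤ q → EqTreeColorable (K3 n) q 3 := by
    intro q hq
    obtain ⟨P, h0, hq', hm, hs, hg⟩ := exists_P n q hn hq
    exact graph_layer n q hn P h0 hq' hm hs hg
  refine ⟨main, ?_⟩
  show sInf {t | ∀ t', t ≤ t' → EqTreeColorable (K3 n) t' 3} ≤ 3 * ((n + 1) / 4)
  exact Nat.sInf_le (fun t' ht' => main t' ht')
end

section
/- For all integers k ≥ 5m with m ≥ 0 and k ≠ 0, the strong equitable vertex 3-arboricity of K_{4k,4k,4k} satisfies va₃≡(K_{4k,4k,4k}) ≤ 3k − 3m. -/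
open SimpleGraph

/-!
A color class of `K_{n,n,n}` induces a forest of maximum degree at most 3 as soon as it lies in
one part, or consists of one vertex of a part and at most three of another (a star). A coloring
can therefore be prescribed by the list of part sizes of its classes: any such list whose entries
add up to `n` in every part is realised by some coloring.

If `s * ⌈t/3⌉ ≤ n ≤ (s + 1) * ⌊t/3⌋`, the `t` colors can be shared out evenly among the three
parts and each part cut into classes of sizes `s` and `s + 1`. For `n = 4k` and `t ≥ 3⌈4k/5⌉`
some `s ≤ 4` works, except for `t ∈ {4k - 1, 4k, 4k + 1}` when `3 ∤ k`; there a few stars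
spanning two parts absorb the remainders of `4k` modulo 3.
-/

theorem exists_fun_ncard_fiber_eq {α β : Type*} [Fintype α] [Fintype β] (g : β → ℕ)
    (h : ∑ b, g b = Fintype.card α) :
    ∃ f : α → β, ∀ b, {a | f a = b}.ncard = g b := by
  let e : α ≃ Σ b, Fin (g b) := Fintype.equivOfCardEq (by simp [h])
  refine ⟨fun a => (e a).1, fun b => ?_⟩
  have : {a | (e a).1 = b} = e.symm '' (Sigma.mk b '' Set.univ) := by
    ext a
    simp
  rw [this, Set.ncard_image_of_injective _ e.symm.injective,
    Set.ncard_image_of_injective _ sigma_mk_injective, Set.ncard_univ, Nat.card_eq_fintype_card,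
    Fintype.card_fin]

theorem exists_list_sum_eq_single {ι : Type*} [DecidableEq ι] (i : ι) {n m s : ℕ}
    (h₁ : s * m ≤ n) (h₂ : n ≤ (s + 1) * m) :
    ∃ B : List (ι → ℕ), B.length = m ∧ B.sum = Pi.single i n ∧
      ∀ p ∈ B, ∃ a, p = Pi.single i a ∧ s ≤ a ∧ a ≤ s + 1 := by
  obtain ⟨r, rfl⟩ := Nat.exists_eq_add_of_le h₁
  obtain ⟨d, rfl⟩ : ∃ d, m = r + d := Nat.exists_eq_add_of_le (by nlinarith)
  refine ⟨List.replicate r (Pi.single i (s + 1)) ++ List.replicate d (Pi.single i s), by simp,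
    ?_, ?_⟩
  · simp only [List.sum_append, List.sum_replicate, ← Pi.single_smul, ← Pi.single_add]
    congr 1
    simp only [smul_eq_mul]
    ring
  · simp only [List.mem_append, List.mem_replicate]
    rintro p (⟨-, rfl⟩ | ⟨-, rfl⟩)
    exacts [⟨s + 1, rfl, by omega, le_rfl⟩, ⟨s, rfl, le_rfl, by omega⟩]

namespace SimpleGraph

variable {ι : Type*} {α : ι → Type*}

/-- A vertex `w ≠ v₀` of a cycle would have two neighbours on it, yet `v₀` is its only one. -/
theorem isAcyclic_of_forall_adj_eq {V : Type*} {G : SimpleGraph V} (v₀ : V)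
    (h : ∀ a b, G.Adj a b → a = v₀ ∨ b = v₀) : G.IsAcyclic := by
  rintro u (_ | ⟨hux, p⟩) hc
  · exact hc.not_nil Walk.Nil.nil
  · obtain ⟨w, hw, hwv⟩ : ∃ w ∈ (Walk.cons hux p).support, w ≠ v₀ := by
      by_cases hu : u = v₀
      · exact ⟨_, by simp, hu ▸ hux.ne'⟩
      · exact ⟨u, by simp, hu⟩
    have hsub : (Walk.cons hux p).toSubgraph.neighborSet w ⊆ {v₀} := fun x hx =>
      (h w x ((Walk.cons hux p).toSubgraph.adj_sub hx)).resolve_left hwv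
    have := Set.ncard_le_ncard hsub
    rw [hc.ncard_neighborSet_toSubgraph_eq_two hw, Set.ncard_singleton] at this
    omega

noncomputable def partSizes (S : Set (Σ i, α i)) (i : ι) : ℕ := {a : α i | ⟨i, a⟩ ∈ S}.ncard

/-- On a vertex set with these part sizes, a complete multipartite graph induces an edgeless
graph or a star `K_{1,a}` with `a ≤ 3`. -/
def IsStarProfile (p : ι → ℕ) : Prop :=
  (∃ i, ∀ j ≠ i, p j = 0) ∨ ∃ i j, i ≠ j ∧ p i = 1 ∧ p j ≤ 3 ∧ ∀ l, l ≠ i → l ≠ j → p l = 0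

theorem fst_ne_of_partSizes_eq_zero [∀ i, Finite (α i)] {S : Set (Σ i, α i)} {j : ι}
    (h : partSizes S j = 0) {v : Σ i, α i} (hv : v ∈ S) : v.1 ≠ j := by
  rintro rfl
  rw [partSizes, Set.ncard_eq_zero] at h
  exact h.subset hv

theorem induce_completeMultipartiteGraph_eq_bot {S : Set (Σ i, α i)} (i : ι)
    (h : ∀ v ∈ S, v.1 = i) : (completeMultipartiteGraph α).induce S = ⊥ := by
  rw [eq_bot_iff_forall_not_adj]
  rintro ⟨v, hv⟩ ⟨w, hw⟩ hadj
  exact hadj (by simp [h v hv, h w hw])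

theorem isAcyclic_induce_and_ncard_neighborSet_le_of_star [∀ i, Finite (α i)]
    {S : Set (Σ i, α i)} {v₀ : Σ i, α i} {j : ι} (hv₀ : v₀ ∈ S)
    (hS : ∀ v ∈ S, v = v₀ ∨ v.1 = j) (hj : partSizes S j ≤ 3) :
    ((completeMultipartiteGraph α).induce S).IsAcyclic ∧
      ∀ v, (((completeMultipartiteGraph α).induce S).neighborSet v).ncard ≤ 3 := by
  set c : S := ⟨v₀, hv₀⟩
  have hstar : ∀ v w : S, ((completeMultipartiteGraph α).induce S).Adj v w → v = c ∨ w = c := by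
    rintro ⟨v, hv⟩ ⟨w, hw⟩ hadj
    rcases hS v hv with rfl | hvj
    · exact Or.inl rfl
    rcases hS w hw with rfl | hwj
    · exact Or.inr rfl
    exact absurd (hvj.trans hwj.symm) hadj
  refine ⟨isAcyclic_of_forall_adj_eq c hstar, fun v => ?_⟩
  by_cases hv : v = c
  · subst hv
    have hnbr : Subtype.val '' ((completeMultipartiteGraph α).induce S).neighborSet c ⊆
        Sigma.mk j '' {b | ⟨j, b⟩ ∈ S} := by
      rintro _ ⟨⟨⟨l, b⟩, hw⟩, hadj, rfl⟩
      rcases hS _ hw with h | h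
      · exact absurd (congrArg Sigma.fst h) (Ne.symm hadj)
      · subst h; exact ⟨b, hw, rfl⟩
    calc _ = (Subtype.val '' ((completeMultipartiteGraph α).induce S).neighborSet c).ncard :=
          (Set.ncard_image_of_injective _ Subtype.val_injective).symm
      _ ≤ (Sigma.mk j '' {b | ⟨j, b⟩ ∈ S}).ncard :=
          Set.ncard_le_ncard hnbr ((Set.toFinite _).image _)
      _ ≤ 3 := by rwa [Set.ncard_image_of_injective _ sigma_mk_injective]
  · calc _ ≤ ({c} : Set S).ncard :=
          Set.ncard_le_ncard fun w hw => (hstar v w hw).resolve_left hv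
      _ ≤ 3 := by simp

theorem IsStarProfile.isAcyclic_induce_and_ncard_neighborSet_le [∀ i, Finite (α i)]
    {S : Set (Σ i, α i)} (hS : IsStarProfile (partSizes S)) :
    ((completeMultipartiteGraph α).induce S).IsAcyclic ∧
      ∀ v, (((completeMultipartiteGraph α).induce S).neighborSet v).ncard ≤ 3 := by
  rcases hS with ⟨i, hi⟩ | ⟨i, j, -, hi, hj, hrest⟩
  · rw [induce_completeMultipartiteGraph_eq_bot i fun v hv => by
      by_contra h; exact fst_ne_of_partSizes_eq_zero (hi _ h) hv rfl]
    simp [isAcyclic_bot]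
  · obtain ⟨a₀, ha₀⟩ := Set.ncard_eq_one.1 hi
    refine isAcyclic_induce_and_ncard_neighborSet_le_of_star
      (show a₀ ∈ {a : α i | ⟨i, a⟩ ∈ S} from ha₀ ▸ rfl) ?_ hj
    rintro ⟨l, a⟩ hv
    by_cases hli : l = i
    · subst hli
      have : a ∈ ({a₀} : Set (α l)) := ha₀ ▸ hv
      exact Or.inl (by rw [Set.mem_singleton_iff.1 this])
    · by_contra! h
      exact fst_ne_of_partSizes_eq_zero (hrest l hli h.2) hv rfl

theorem isStarProfile_single {ι : Type*} [DecidableEq ι] (i : ι) (a : ℕ) :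
    IsStarProfile (Pi.single i a) :=
  Or.inl ⟨i, fun _ hj => Pi.single_eq_of_ne hj _⟩

instance {ι : Type*} [Fintype ι] [DecidableEq ι] : DecidablePred (IsStarProfile (ι := ι)) :=
  fun _ => by unfold IsStarProfile; infer_instance

theorem ncard_eq_sum_partSizes [Fintype ι] [∀ i, Fintype (α i)] (S : Set (Σ i, α i)) :
    S.ncard = ∑ i, partSizes S i := by
  classical
  have : S.toFinset = Finset.univ.sigma fun i => {a : α i | ⟨i, a⟩ ∈ S}.toFinset := by
    ext ⟨i, a⟩; simp
  simp only [partSizes, Set.ncard_eq_toFinset_card', this, Finset.card_sigma]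

theorem eqTreeColorable_completeMultipartiteGraph_of_profiles {ι : Type} [Fintype ι]
    {α : ι → Type} [∀ i, Fintype (α i)] (L : List (ι → ℕ)) (s : ℕ)
    (hsum : L.sum = fun i => Fintype.card (α i))
    (hL : ∀ p ∈ L, IsStarProfile p ∧ s ≤ ∑ i, p i ∧ ∑ i, p i ≤ s + 1) :
    EqTreeColorable (completeMultipartiteGraph α) L.length 3 := by
  choose F hF using fun i =>
    exists_fun_ncard_fiber_eq (fun c : Fin L.length => L[c.1] i)
      (by rw [← Finset.sum_apply, Fin.sum_univ_getElem, hsum])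
  let f : (Σ i, α i) → Fin L.length := fun v => F v.1 v.2
  have hparts (c : Fin L.length) : partSizes {v | f v = c} = L[c.1] := funext fun i => hF i c
  have hclass (c : Fin L.length) := hL _ (L.getElem_mem c.2)
  have hforest (c : Fin L.length) :=
    IsStarProfile.isAcyclic_induce_and_ncard_neighborSet_le (hparts c ▸ (hclass c).1)
  refine ⟨f, fun c c' => ?_, fun c => (hforest c).1, fun c => (hforest c).2⟩
  rw [ncard_eq_sum_partSizes, ncard_eq_sum_partSizes, hparts, hparts]
  have := hclass c
  have := hclass c'
  omega

end SimpleGraph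

theorem eqTreeColorable_K3_of_profiles {n t : ℕ} (s : ℕ) (L : List (Fin 3 → ℕ))
    (hlen : L.length = t) (hsum : L.sum = fun _ => n)
    (hL : ∀ p ∈ L, IsStarProfile p ∧ s ≤ ∑ i, p i ∧ ∑ i, p i ≤ s + 1) :
    EqTreeColorable (K3 n) t 3 :=
  hlen ▸ eqTreeColorable_completeMultipartiteGraph_of_profiles (α := fun _ : Fin 3 => Fin n) L s
    (by simpa using hsum) hL

/-- Each part `i` receives `(t + i) / 3` colors, whose classes have `s` or `s + 1` vertices. -/
theorem eqTreeColorable_K3_of_le {n s t : ℕ} (h₁ : s * ((t + 2) / 3) ≤ n)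
    (h₂ : n ≤ (s + 1) * (t / 3)) : EqTreeColorable (K3 n) t 3 := by
  have hm (i : Fin 3) : s * ((t + i) / 3) ≤ n ∧ n ≤ (s + 1) * ((t + i) / 3) :=
    ⟨h₁.trans' (Nat.mul_le_mul_left _ (Nat.div_le_div_right (by omega))),
      h₂.trans (Nat.mul_le_mul_left _ (Nat.div_le_div_right (by omega)))⟩
  choose B hlen hsum hmem using fun i : Fin 3 => exists_list_sum_eq_single i (hm i).1 (hm i).2
  refine eqTreeColorable_K3_of_profiles s (B 0 ++ B 1 ++ B 2) ?_ ?_ ?_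
  · simp only [List.length_append, hlen]
    omega
  · funext j
    fin_cases j <;> simp [hsum]
  · simp only [List.mem_append]
    rintro p ((hp | hp) | hp) <;>
    · obtain ⟨a, rfl, ha⟩ := hmem _ p hp
      exact ⟨isStarProfile_single _ a, by simpa using ha⟩

/- The four colorings below cover the values of `t` missed by `eqTreeColorable_K3_of_le`; each
uses one or two stars spanning two parts. -/

theorem eqTreeColorable_K3_three_mul_add_one_self {x : ℕ} (hx : 1 ≤ x) :
    EqTreeColorable (K3 (3 * x + 1)) (3 * x + 1) 3 := by
  refine eqTreeColorable_K3_of_profiles 3 (List.replicate x ![3, 0, 0] ++ [![1, 2, 0]] ++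
    List.replicate (x - 1) ![0, 3, 0] ++ [![0, 2, 1]] ++ List.replicate x ![0, 0, 3]) ?_ ?_ ?_
  · simp only [List.length_append, List.length_replicate, List.length_cons, List.length_nil]
    omega
  · funext j
    fin_cases j <;> simp <;> omega
  · simp only [List.mem_append, List.mem_replicate, List.mem_singleton]
    rintro p ((((⟨-, rfl⟩ | rfl) | ⟨-, rfl⟩) | rfl) | ⟨-, rfl⟩) <;> decide

theorem eqTreeColorable_K3_three_mul_add_one_succ {x : ℕ} (hx : 1 ≤ x) :
    EqTreeColorable (K3 (3 * x + 1)) (3 * x + 2) 3 := by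
  refine eqTreeColorable_K3_of_profiles 2 (List.replicate x ![3, 0, 0] ++ [![1, 1, 0]] ++
    List.replicate x ![0, 3, 0] ++ List.replicate 2 ![0, 0, 2] ++
    List.replicate (x - 1) ![0, 0, 3]) ?_ ?_ ?_
  · simp only [List.length_append, List.length_replicate, List.length_cons, List.length_nil]
    omega
  · funext j
    fin_cases j <;> simp <;> omega
  · simp only [List.mem_append, List.mem_replicate, List.mem_singleton]
    rintro p ((((⟨-, rfl⟩ | rfl) | ⟨-, rfl⟩) | ⟨-, rfl⟩) | ⟨-, rfl⟩) <;> decide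

theorem eqTreeColorable_K3_three_mul_add_two_self (x : ℕ) :
    EqTreeColorable (K3 (3 * x + 2)) (3 * x + 2) 3 := by
  refine eqTreeColorable_K3_of_profiles 3 (List.replicate x ![3, 0, 0] ++ [![2, 1, 0]] ++
    List.replicate x ![0, 3, 0] ++ [![0, 1, 2]] ++ List.replicate x ![0, 0, 3]) ?_ ?_ ?_
  · simp only [List.length_append, List.length_replicate, List.length_cons, List.length_nil]
    omega
  · funext j
    fin_cases j <;> simp <;> omega
  · simp only [List.mem_append, List.mem_replicate, List.mem_singleton]
    rintro p ((((⟨-, rfl⟩ | rfl) | ⟨-, rfl⟩) | rfl) | ⟨-, rfl⟩) <;> decide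

theorem eqTreeColorable_K3_three_mul_add_two_pred {x : ℕ} (hx : 2 ≤ x) :
    EqTreeColorable (K3 (3 * x + 2)) (3 * x + 1) 3 := by
  refine eqTreeColorable_K3_of_profiles 3 ([![4, 0, 0]] ++ List.replicate (x - 1) ![3, 0, 0] ++
    [![1, 3, 0], ![0, 4, 0]] ++ List.replicate (x - 2) ![0, 3, 0] ++ [![0, 1, 2]] ++
    List.replicate x ![0, 0, 3]) ?_ ?_ ?_
  · simp only [List.length_append, List.length_replicate, List.length_cons, List.length_nil]
    omega
  · funext j
    fin_cases j <;> simp <;> omega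
  · simp only [List.mem_append, List.mem_replicate, List.mem_cons,
      List.not_mem_nil, or_false]
    rintro p (((((rfl | ⟨-, rfl⟩) | rfl | rfl) | ⟨-, rfl⟩) | rfl) | ⟨-, rfl⟩) <;> decide

theorem eqTreeColorable_K3_four_mul {k t : ℕ} (ht : 4 * k ≤ 5 * (t / 3)) :
    EqTreeColorable (K3 (4 * k)) t 3 := by
  by_cases h₁ : 3 * ((t + 2) / 3) ≤ 4 * k
  · by_cases h : t ≤ 3 * k
    · exact eqTreeColorable_K3_of_le (s := 4) (by omega) (by omega)
    · exact eqTreeColorable_K3_of_le (s := 3) (by omega) (by omega)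
  by_cases h₂ : 4 * k ≤ 3 * (t / 3)
  · by_cases h : t ≤ 6 * k
    · exact eqTreeColorable_K3_of_le (s := 2) (by omega) (by omega)
    by_cases h' : t ≤ 12 * k
    · exact eqTreeColorable_K3_of_le (s := 1) (by omega) (by omega)
    · exact eqTreeColorable_K3_of_le (s := 0) (by omega) (by omega)
  obtain ⟨x, hx⟩ : ∃ x, x = 4 * k / 3 := ⟨_, rfl⟩
  rcases (by omega : 4 * k = 3 * x + 1 ∧ (t = 3 * x + 1 ∨ t = 3 * x + 2) ∨
      4 * k = 3 * x + 2 ∧ (t = 3 * x + 1 ∨ t = 3 * x + 2)) with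
    ⟨hk, rfl | rfl⟩ | ⟨hk, rfl | rfl⟩ <;> rw [hk]
  · exact eqTreeColorable_K3_three_mul_add_one_self (by omega)
  · exact eqTreeColorable_K3_three_mul_add_one_succ (by omega)
  · exact eqTreeColorable_K3_three_mul_add_two_pred (by omega)
  · exact eqTreeColorable_K3_three_mul_add_two_self x

theorem stmt4_general (k m : ℕ) (hk : 5 * m ≤ k) :
    vaStrong (K3 (4 * k)) 3 ≤ 3 * k - 3 * m :=
  Nat.sInf_le fun _ ht => eqTreeColorable_K3_four_mul (by omega)

theorem stmt4 (k m : ℕ) (hk : 5 * m ≤ k) (hk0 : k ≠ 0) :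
    vaStrong (K3 (4 * k)) 3 ≤ 3 * k - 3 * m :=
  stmt4_general k m hk
end

section
/- If k ≡ 1 (mod 5), then the complete tripartite graph K_{4k,4k,4k} has no equitable (12m+2, 3)-tree-coloring where k = 5m+1; hence va₃≡(K_{4k,4k,4k}) ≥ (12k+3)/5. -/
open SimpleGraph

/-!
Equitability forces every colour class to have at least 5 vertices, as `5 (12m + 2) < 60m + 12`
is the number of vertices. A complete multipartite forest of maximum degree 3 on at least 5
vertices has no edges, so every colour class lies inside one part. A part of `20m + 4` vertices
then holds at most `4m` classes, leaving room for only `12m < 12m + 2` colours. The bound on the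
strong equitable vertex arboricity follows, as `(12k + 3) / 5 = 12m + 3`.
-/

open Finset

namespace SimpleGraph

variable {V : Type*} {G : SimpleGraph V}

lemma IsAcyclic.commonNeighbors_subsingleton (hG : G.IsAcyclic) {a b : V} (hab : a ≠ b) :
    (G.commonNeighbors a b).Subsingleton := by
  intro x hx y hy
  rw [mem_commonNeighbors] at hx hy
  let p : G.Path a b := ⟨.cons hx.1 (.cons hx.2.symm .nil), by simp [hx.1.ne, hx.2.ne', hab]⟩
  let q : G.Path a b := ⟨.cons hy.1 (.cons hy.2.symm .nil), by simp [hy.1.ne, hy.2.ne', hab]⟩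
  have hpq : p = q := (hG.subsingleton_path a b).elim p q
  simpa [p, q] using congrArg (fun r : G.Path a b => r.1.support) hpq

lemma exists_ne_not_adj_of_ncard_neighborSet_add_one_lt (v : V)
    (h : (G.neighborSet v).ncard + 1 < Nat.card V) : ∃ w, w ≠ v ∧ ¬ G.Adj v w := by
  have : Finite V := Nat.finite_of_card_ne_zero (by omega)
  by_contra! hadj
  have huniv : (Set.univ : Set V) ⊆ insert v (G.neighborSet v) := fun w _ =>
    (eq_or_ne w v).imp id (hadj w)
  have := (Set.ncard_le_ncard huniv).trans (Set.ncard_insert_le v _)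
  rw [Set.ncard_univ] at this
  omega

/-- Given an edge `uv`, the degree bound yields non-neighbours `u'` of `u` and `v'` of `v`; as
non-adjacency is transitive, `u v u' v'` is then a 4-cycle. -/
lemma IsCompleteMultipartite.eq_bot_of_isAcyclic (hG : G.IsCompleteMultipartite)
    (hacyc : G.IsAcyclic) (hdeg : ∀ v, (G.neighborSet v).ncard ≤ 3) (hcard : 5 ≤ Nat.card V) :
    G = ⊥ := by
  ext u v
  simp only [bot_adj, iff_false]
  intro huv
  have partner : ∀ x, ∃ x', x' ≠ x ∧ ¬ G.Adj x x' := fun x =>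
    exists_ne_not_adj_of_ncard_neighborSet_add_one_lt x (by linarith [hdeg x])
  obtain ⟨u', hu'u, huu'⟩ := partner u
  obtain ⟨v', hv'v, hvv'⟩ := partner v
  have adj_of_not_adj : ∀ {x y z}, G.Adj x z → ¬ G.Adj x y → G.Adj y z := fun hxz hxy => by
    by_contra hyz
    exact hG.trans _ _ _ hxy hyz hxz
  have hvu' : G.Adj v u' := (adj_of_not_adj huv huu').symm
  have huv' : G.Adj u v' := (adj_of_not_adj huv.symm hvv').symm
  have hu'v' : G.Adj u' v' := adj_of_not_adj huv' huu'
  exact hv'v (hacyc.commonNeighbors_subsingleton hu'u.symm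
    ((G.mem_commonNeighbors).2 ⟨huv', hu'v'⟩) ((G.mem_commonNeighbors).2 ⟨huv, hvu'.symm⟩))

end SimpleGraph

section Counting

variable {V α : Type*} [Fintype V] [DecidableEq α]

lemma ncard_setOf_eq_card_filter (f : V → α) (i : α) :
    {v | f v = i}.ncard = #{v | f v = i} := by
  rw [Set.ncard_eq_toFinset_card', Set.toFinset_ofPred]

variable [Fintype α]

lemma card_le_card_mul_ncard_add_one (f : V → α)
    (hf : ∀ i j, {v | f v = i}.ncard ≤ {v | f v = j}.ncard + 1) (i : α) :
    Fintype.card V ≤ Fintype.card α * ({v | f v = i}.ncard + 1) :=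
  calc Fintype.card V = ∑ j, #{v | f v = j} :=
        card_eq_sum_card_fiberwise fun v _ => mem_univ (f v)
    _ ≤ ∑ _j : α, ({v | f v = i}.ncard + 1) :=
        sum_le_sum fun j _ => ncard_setOf_eq_card_filter f j ▸ hf j i
    _ = Fintype.card α * ({v | f v = i}.ncard + 1) := by simp

lemma mul_card_filter_le_card_filter_comp {β : Type*} [DecidableEq β] (f : V → α) (g : α → β)
    {s : ℕ} (hs : ∀ i, s ≤ #{v | f v = i}) (b : β) :
    s * #{i | g i = b} ≤ #{v | g (f v) = b} := by
  rw [card_eq_sum_card_fiberwise (f := f) (t := {i | g i = b}) fun v hv => by simpa using hv,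
    mul_comm]
  exact card_nsmul_le_sum _ _ _ fun i hi =>
    (hs i).trans (card_le_card fun v hv => by simp_all)

end Counting

lemma card_filter_sigma_fst {ι : Type*} [Fintype ι] [DecidableEq ι] {β : ι → Type*}
    [∀ i, Fintype (β i)] (i : ι) : #{v : Σ i, β i | v.1 = i} = Fintype.card (β i) := by
  rw [← Fintype.card_subtype]
  exact Fintype.card_congr (Equiv.sigmaSubtype i)

lemma eqTreeColorable_of_card_le {V : Type} [Fintype V] (G : SimpleGraph V) {t : ℕ} (k : ℕ)
    (h : Fintype.card V ≤ t) : EqTreeColorable G t k := by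
  obtain ⟨f⟩ : Nonempty (V ↪ Fin t) := Function.Embedding.nonempty_of_card_le (by simpa using h)
  have hsub : ∀ i, ({v | f v = i} : Set V).Subsingleton := fun i a ha b hb =>
    f.injective (ha.trans hb.symm)
  refine ⟨f, fun i j => ?_, fun i => ?_, fun i v => ?_⟩
  · exact (Set.ncard_le_one_iff_subsingleton.2 (hsub i)).trans (Nat.le_add_left 1 _)
  · have := (hsub i).coe_sort
    exact IsAcyclic.of_subsingleton
  · have := (hsub i).coe_sort
    simp

lemma fst_eq_of_isAcyclic_induce {ι : Type*} {V : ι → Type*} {S : Set (Σ i, V i)}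
    (hacyc : ((completeMultipartiteGraph V).induce S).IsAcyclic)
    (hdeg : ∀ v, (((completeMultipartiteGraph V).induce S).neighborSet v).ncard ≤ 3)
    (hcard : 5 ≤ S.ncard) {a b : Σ i, V i} (ha : a ∈ S) (hb : b ∈ S) : a.1 = b.1 := by
  have hbot := (completeMultipartiteGraph.isCompleteMultipartite V).induce.eq_bot_of_isAcyclic
    hacyc hdeg (by rwa [Nat.card_coe_set_eq])
  by_contra hne
  have hadj : ((completeMultipartiteGraph V).induce S).Adj ⟨a, ha⟩ ⟨b, hb⟩ := hne
  rw [hbot] at hadj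
  exact hadj

lemma not_eqTreeColorable_K3 (m : ℕ) :
    ¬ EqTreeColorable (K3 (4 * (5 * m + 1))) (12 * m + 2) 3 := by
  rintro ⟨f, hequit, hacyc, hdeg⟩
  have hfive : ∀ i, 5 ≤ #{v | f v = i} := fun i => by
    have := card_le_card_mul_ncard_add_one f hequit i
    simp only [Fintype.card_sigma, Fintype.card_fin, sum_const, card_univ, smul_eq_mul,
      ncard_setOf_eq_card_filter] at this
    by_contra!
    nlinarith
  have hpart : Function.FactorsThrough (fun v => v.1) f := fun v w h =>
    fst_eq_of_isAcyclic_induce (hacyc (f w)) (hdeg (f w))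
      (by rw [ncard_setOf_eq_card_filter]; exact hfive _) h rfl
  set g := Function.extend f (fun v => v.1) (fun _ => 0)
  have hcount : ∀ b, 5 * #{i | g i = b} ≤ 4 * (5 * m + 1) := fun b => by
    simpa [g, hpart.extend_apply, card_filter_sigma_fst] using
      mul_card_filter_le_card_filter_comp f g hfive b
  have htotal : 12 * m + 2 = ∑ b : Fin 3, #{i | g i = b} := by
    simpa using card_eq_sum_card_fiberwise fun i (_ : i ∈ univ) => mem_univ (g i)
  rw [Fin.sum_univ_three] at htotal
  have := hcount 0
  have := hcount 1
  have := hcount 2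
  omega

theorem stmt5 (k m : ℕ) (hk : k = 5 * m + 1) :
    ¬ EqTreeColorable (K3 (4 * k)) (12 * m + 2) 3 ∧
    (12 * k + 3) / 5 ≤ vaStrong (K3 (4 * k)) 3 := by
  subst hk
  refine ⟨not_eqTreeColorable_K3 m, ?_⟩
  have hne : {t | ∀ t', t ≤ t' → EqTreeColorable (K3 (4 * (5 * m + 1))) t' 3}.Nonempty :=
    ⟨_, fun _ ht' => eqTreeColorable_of_card_le _ _ ht'⟩
  refine le_csInf hne fun t ht => ?_
  by_contra! hlt
  exact not_eqTreeColorable_K3 m (ht _ (by omega))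
end

section
/- If k ≡ 2 (mod 5), say k = 5m+2, then K_{4k,4k,4k} has no equitable (12m+5, 3)-tree-coloring; hence va₃≡(K_{4k,4k,4k}) ≥ (12k+6)/5. -/
open SimpleGraph

lemma four_cycle_not_acyclic {V : Type*} (G : SimpleGraph V) (a b c d : V)
    (hab : a ≠ b) (hcd : c ≠ d) (hac : G.Adj a c) (hcb : G.Adj c b)
    (hbd : G.Adj b d) (hda : G.Adj d a) : ¬ G.IsAcyclic := by
  intro h
  have hac' := hac.ne
  have hcb' := hcb.ne
  have hbd' := hbd.ne
  have hda' := hda.ne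
  refine h (Walk.cons hac (Walk.cons hcb (Walk.cons hbd (Walk.cons hda Walk.nil)))) ?_
  constructor
  · constructor
    · rw [Walk.isTrail_def]
      simp [Sym2.eq_iff]
      aesop
    · simp
  · simp [Walk.support]
    aesop

lemma K3_adj {n : ℕ} (u w : Σ _ : Fin 3, Fin n) : (K3 n).Adj u w ↔ u.1 ≠ w.1 := by
  simp [K3, completeMultipartiteGraph, top_adj]

lemma single_part {n : ℕ} (s : Set (Σ _ : Fin 3, Fin n))
    (hcard : s.ncard = 5)
    (hacy : ((K3 n).induce s).IsAcyclic)
    (hdeg : ∀ v, (((K3 n).induce s).neighborSet v).ncard ≤ 3) :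
    ∀ v ∈ s, ∀ w ∈ s, v.1 = w.1 := by
  classical
  have hfin : s.Finite := Set.toFinite s
  set S : Finset (Σ _ : Fin 3, Fin n) := hfin.toFinset with hS
  have hmem : ∀ x, x ∈ S ↔ x ∈ s := fun x => hfin.mem_toFinset
  have hScard : S.card = 5 := by
    rw [hS, ← Set.ncard_eq_toFinset_card s hfin, hcard]
  -- step A: for u ∈ s, the same-part vertices in S number ≥ 2
  have stepA : ∀ u (hu : u ∈ s), 2 ≤ (S.filter (fun w => w.1 = u.1)).card := by
    intro u hu
    have hdeg' := hdeg ⟨u, hu⟩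
    have himg : Subtype.val '' (((K3 n).induce s).neighborSet ⟨u, hu⟩)
        = ↑(S.filter (fun w => w.1 ≠ u.1)) := by
      ext x
      simp only [Set.mem_image, mem_neighborSet, comap_adj, Finset.coe_filter,
        Set.mem_setOf_eq, hmem]
      constructor
      · rintro ⟨⟨y, hy⟩, hadj, rfl⟩
        exact ⟨hy, ((K3_adj _ _).1 hadj).symm⟩
      · rintro ⟨hx, hne⟩
        exact ⟨⟨x, hx⟩, by rw [Function.Embedding.coe_subtype]; exact (K3_adj u x).2 (Ne.symm hne), rfl⟩
    have hB : (S.filter (fun w => w.1 ≠ u.1)).card ≤ 3 := by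
      have h2 := Set.ncard_image_of_injective (((K3 n).induce s).neighborSet ⟨u, hu⟩)
        Subtype.val_injective
      rw [himg, Set.ncard_coe_finset] at h2
      omega
    have hsplit := Finset.card_filter_add_card_filter_not
      (s := S) (p := fun w => w.1 = u.1)
    simp only [hScard] at hsplit
    have : (Finset.filter (fun w => ¬ w.1 = u.1) S).card ≤ 3 := hB
    omega
  -- step B
  intro v hv w hw
  by_contra hne
  obtain ⟨a, ha, b, hb, hab⟩ := Finset.one_lt_card.mp (lt_of_lt_of_le one_lt_two (stepA v hv))
  obtain ⟨c, hc, d, hd, hcd⟩ := Finset.one_lt_card.mp (lt_of_lt_of_le one_lt_two (stepA w hw))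
  simp only [Finset.mem_filter, hmem] at ha hb hc hd
  have adj : ∀ x y : (Σ _ : Fin 3, Fin n), x.1 = v.1 → y.1 = w.1 → (K3 n).Adj x y := by
    intro x y hx hy
    exact (K3_adj x y).2 (by rw [hx, hy]; exact hne)
  have key := four_cycle_not_acyclic ((K3 n).induce s)
    ⟨a, ha.1⟩ ⟨b, hb.1⟩ ⟨c, hc.1⟩ ⟨d, hd.1⟩
    (by simpa [Subtype.ext_iff] using hab) (by simpa [Subtype.ext_iff] using hcd)
    (by simpa [comap_adj, Function.Embedding.coe_subtype] using adj a c ha.2 hc.2)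
    (by simpa [comap_adj, Function.Embedding.coe_subtype] using (adj b c hb.2 hc.2).symm)
    (by simpa [comap_adj, Function.Embedding.coe_subtype] using adj b d hb.2 hd.2)
    (by simpa [comap_adj, Function.Embedding.coe_subtype] using (adj a d ha.2 hd.2).symm)
  exact key hacy


lemma edgeless_acyclic {V : Type*} (G : SimpleGraph V) (h : ∀ a b, ¬ G.Adj a b) :
    G.IsAcyclic := by
  intro v w hw
  cases w with
  | nil => exact hw.ne_nil rfl
  | cons ha p => exact h _ _ ha

lemma colorable_of_card_le {n t : ℕ}
    (h : Fintype.card (Σ _ : Fin 3, Fin n) ≤ t) :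
    EqTreeColorable (K3 n) t 3 := by
  obtain ⟨f⟩ := Function.Embedding.nonempty_iff_card_le.2 (h.trans_eq (Fintype.card_fin t).symm)
  refine ⟨f, ?_, ?_, ?_⟩
  · intro i j
    have : ({v : Σ _ : Fin 3, Fin n | f v = i} : Set _).ncard ≤ 1 := by
      rw [Set.ncard_le_one]
      intro a ha b hb
      exact f.injective (ha.trans hb.symm)
    omega
  · intro i
    refine edgeless_acyclic _ ?_
    rintro ⟨a, ha⟩ ⟨b, hb⟩ hadj
    have : a = b := f.injective ((ha : f a = i).trans (hb : f b = i).symm)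
    exact hadj.ne (Subtype.ext this)
  · intro i v
    have : ((K3 n).induce {v | f v = i}).neighborSet v = ∅ := by
      ext ⟨b, hb⟩
      simp only [mem_neighborSet, Set.mem_empty_iff_false, iff_false]
      intro hadj
      have : (v : Σ _ : Fin 3, Fin n) = b := f.injective ((v.2 : f v.1 = i).trans (hb : f b = i).symm)
      exact hadj.ne (Subtype.ext this)
    rw [this]
    simp


lemma part1 (k m : ℕ) (hk : k = 5 * m + 2) :
    ¬ EqTreeColorable (K3 (4 * k)) (12 * m + 5) 3 := by
  classical
  rintro ⟨f, heq, hacy, hdeg⟩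
  let V := (Σ _ : Fin 3, Fin (4 * k))
  set C : Fin (12 * m + 5) → Finset V := fun i => Finset.univ.filter (fun v => f v = i) with hCdef
  have hC : ∀ i, ({v | f v = i} : Set V).ncard = (C i).card := by
    intro i
    rw [show ({v | f v = i} : Set V) = ↑(C i) by ext v; simp [hCdef]]
    exact Set.ncard_coe_finset _
  have hcardV : Fintype.card V = 60 * m + 24 := by
    show Fintype.card (Σ _ : Fin 3, Fin (4 * k)) = 60 * m + 24
    rw [Fintype.card_sigma]
    simp [hk]
    ring
  have hsum : ∑ i : Fin (12 * m + 5), (C i).card = 60 * m + 24 := by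
    rw [← hcardV, ← Finset.card_univ]
    exact (Finset.card_eq_sum_card_fiberwise (fun x _ => Finset.mem_univ (f x))).symm
  have heq' : ∀ i j, (C i).card ≤ (C j).card + 1 := by
    intro i j
    have := heq i j
    rwa [hC i, hC j] at this
  -- all classes have size ≤ 5
  have hle5 : ∀ i, (C i).card ≤ 5 := by
    by_contra hcon
    push_neg at hcon
    obtain ⟨i0, hi0⟩ := hcon
    have h5 : ∀ j : Fin (12 * m + 5), 5 ≤ (C j).card := fun j => by have := heq' i0 j; omega
    have : Finset.univ.card • 5 ≤ ∑ j : Fin (12 * m + 5), (C j).card :=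
      Finset.card_nsmul_le_sum _ _ _ (fun j _ => h5 j)
    simp [Finset.card_univ] at this
    omega
  -- at least 12m+4 classes of size exactly 5
  set T : Finset (Fin (12 * m + 5)) := Finset.univ.filter (fun i => (C i).card = 5) with hT
  have hTcard : 12 * m + 4 ≤ T.card := by
    have hs1 : ∑ i ∈ T, (C i).card ≤ T.card • 5 :=
      Finset.sum_le_card_nsmul _ _ _ (fun i hi => by
        simp only [hT, Finset.mem_filter] at hi; omega)
    have hs2 : ∑ i ∈ Finset.univ.filter (fun i => ¬ (C i).card = 5), (C i).card
        ≤ (Finset.univ.filter (fun i => ¬ (C i).card = 5)).card • 4 :=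
      Finset.sum_le_card_nsmul _ _ _ (fun i hi => by
        simp only [Finset.mem_filter] at hi
        have := hle5 i; omega)
    have hsplit := Finset.sum_filter_add_sum_filter_not Finset.univ
      (fun i => (C i).card = 5) (fun i => (C i).card)
    have hcards := Finset.card_filter_add_card_filter_not
      (s := (Finset.univ : Finset (Fin (12 * m + 5)))) (p := fun i => (C i).card = 5)
    simp only [Finset.card_univ, Fintype.card_fin] at hcards
    rw [hsum] at hsplit
    rw [← hT] at hsplit hcards
    simp only [smul_eq_mul] at hs1 hs2
    omega
  -- assign a part to each class of size 5
  set g : Fin (12 * m + 5) → Fin 3 := fun i =>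
    if h : (C i).Nonempty then (h.choose).1 else 0 with hg
  have hgmem : ∀ i ∈ T, ∀ v ∈ C i, v.1 = g i := by
    intro i hi v hv
    simp only [hT, Finset.mem_filter] at hi
    have hne : (C i).Nonempty := Finset.card_pos.mp (by omega)
    have hsp := single_part {v | f v = i} (by rw [hC]; exact hi.2) (hacy i) (hdeg i)
    have hv' : v ∈ {v : V | f v = i} := by
      simp only [hCdef, Finset.mem_filter] at hv
      exact hv.2
    have hw' : hne.choose ∈ {v : V | f v = i} := by
      have := hne.choose_spec
      simp only [hCdef, Finset.mem_filter] at this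
      exact this.2
    rw [hg]
    simp only [dif_pos hne]
    exact hsp v hv' hne.choose hw'
  -- per-part counting
  have hpart : ∀ p : Fin 3, (T.filter (fun i => g i = p)).card ≤ 4 * m + 1 := by
    intro p
    set Tp := T.filter (fun i => g i = p) with hTp
    have hdisj : ∀ i ∈ Tp, ∀ j ∈ Tp, i ≠ j → Disjoint (C i) (C j) := by
      intro i _ j _ hij
      refine Finset.disjoint_left.mpr ?_
      intro v hvi hvj
      simp only [hCdef, Finset.mem_filter] at hvi hvj
      exact hij (hvi.2 ▸ hvj.2 ▸ rfl)
    have hsub : Tp.biUnion C ⊆ Finset.univ.filter (fun v : V => v.1 = p) := by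
      intro v hv
      simp only [Finset.mem_biUnion] at hv
      obtain ⟨i, hi, hvi⟩ := hv
      simp only [hTp, Finset.mem_filter] at hi
      simp only [Finset.mem_filter, Finset.mem_univ, true_and]
      rw [← hi.2]
      exact hgmem i hi.1 v hvi
    have hPp : (Finset.univ.filter (fun v : V => v.1 = p)).card = 4 * k := by
      rw [show Finset.univ.filter (fun v : V => v.1 = p)
          = Finset.univ.image (fun x : Fin (4 * k) => (⟨p, x⟩ : V)) by
        ext v
        simp only [Finset.mem_filter, Finset.mem_univ, true_and, Finset.mem_image]
        constructor
        · intro h; exact ⟨v.2, by cases v; cases h; rfl⟩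
        · rintro ⟨x, rfl⟩; rfl]
      rw [Finset.card_image_of_injective _ (fun a b hab => by
        simpa using congrArg Sigma.snd hab)]
      simp
    have hbu : (Tp.biUnion C).card = ∑ i ∈ Tp, (C i).card :=
      Finset.card_biUnion hdisj
    have h5 : ∀ i ∈ Tp, (C i).card = 5 := by
      intro i hi
      simp only [hTp, hT, Finset.mem_filter] at hi
      exact hi.1.2
    have : ∑ i ∈ Tp, (C i).card = 5 * Tp.card := by
      rw [Finset.sum_congr rfl h5]
      simp [mul_comm]
    have hcle := Finset.card_le_card hsub
    rw [hbu, this, hPp, hk] at hcle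
    omega
  -- combine
  have hfib : T.card = ∑ p : Fin 3, (T.filter (fun i => g i = p)).card :=
    Finset.card_eq_sum_card_fiberwise (fun x _ => Finset.mem_univ (g x))
  have : T.card ≤ 12 * m + 3 := by
    rw [hfib]
    calc ∑ p : Fin 3, (T.filter (fun i => g i = p)).card
        ≤ ∑ _p : Fin 3, (4 * m + 1) := Finset.sum_le_sum (fun p _ => hpart p)
      _ = 12 * m + 3 := by simp; ring
  omega

theorem stmt6 (k m : ℕ) (hk : k = 5 * m + 2) :
    ¬ EqTreeColorable (K3 (4 * k)) (12 * m + 5) 3 ∧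
    (12 * k + 6) / 5 ≤ vaStrong (K3 (4 * k)) 3 := by
  have hnot := part1 k m hk
  refine ⟨hnot, ?_⟩
  have hset : (12 * k) ∈ {t | ∀ t', t ≤ t' → EqTreeColorable (K3 (4 * k)) t' 3} := by
    intro t' ht'
    refine colorable_of_card_le ?_
    rw [Fintype.card_sigma]
    simp
    omega
  have hmem := Nat.sInf_mem (⟨12 * k, hset⟩ :
    {t | ∀ t', t ≤ t' → EqTreeColorable (K3 (4 * k)) t' 3}.Nonempty)
  by_contra hcon
  push_neg at hcon
  unfold vaStrong at hcon
  subst hk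
  have h1 : sInf {t | ∀ t', t ≤ t' → EqTreeColorable (K3 (4 * (5 * m + 2))) t' 3}
      ≤ 12 * m + 5 := by omega
  exact hnot (hmem (12 * m + 5) h1)
end

section
/- If k ≡ 3 (mod 5), say k = 5m+3, then K_{4k,4k,4k} has an equitable (12m+8, 3)-tree-coloring, and combined with the upper bound va₃≡(K_{4k,4k,4k}) ≤ (12k+9)/5 this yields va₃≡(K_{4k,4k,4k}) ≤ (12k+4)/5. -/
open SimpleGraph

lemma acyclic_of_no_adj {W : Type*} (G : SimpleGraph W) (h : ∀ u v, ¬ G.Adj u v) :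
    G.IsAcyclic := by
  intro v p hp
  cases p with
  | nil => exact hp.ne_nil rfl
  | cons h' q => exact h _ _ h'

lemma acyclic_of_star {W : Type*} (G : SimpleGraph W) (c : W)
    (h : ∀ u v, G.Adj u v → u = c ∨ v = c) : G.IsAcyclic := by
  intro v p hp
  have hlen := hp.three_le_length
  cases p with
  | nil => exact hp.ne_nil rfl
  | cons h1 q =>
    cases q with
    | nil => simp at hlen
    | cons h2 q2 =>
      cases q2 with
      | nil => simp at hlen
      | cons h3 p3 =>
        have hnd := hp.support_nodup
        simp only [Walk.support_cons, List.tail_cons, List.nodup_cons] at hnd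
        obtain ⟨ha, hb, _⟩ := hnd
        have hvmem : v ∈ p3.support := Walk.end_mem_support p3
        have hdmem : _ ∈ p3.support := Walk.start_mem_support p3
        simp only [List.mem_cons, not_or] at ha
        rcases h _ _ h1 with hv | hA
        · rcases h _ _ h2 with hA | hB
          · exact ha.2 (by rw [hA.trans hv.symm]; exact hvmem)
          · exact hb (by rw [hB.trans hv.symm]; exact hvmem)
        · rcases h _ _ h3 with hB | hD
          · exact ha.1 (hA.trans hB.symm)
          · exact ha.2 (by rw [hA.trans hD.symm]; exact hdmem)

lemma filter_eq_range (S : Finset ℕ)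
    (hdc : ∀ j ∈ S, ∀ k < j, k ∈ S) : S = Finset.range S.card := by
  ext j
  simp only [Finset.mem_range]
  constructor
  · intro hj
    by_contra hge
    push_neg at hge
    have hsub : Finset.range (j+1) ⊆ S := by
      intro x hx
      simp only [Finset.mem_range, Nat.lt_succ_iff] at hx
      rcases eq_or_lt_of_le hx with rfl | h
      · exact hj
      · exact hdc j hj x h
    have := Finset.card_le_card hsub
    simp only [Finset.card_range] at this
    omega
  · intro hj
    by_contra hnj
    have hsub : S ⊆ Finset.range j := by
      intro x hx
      simp only [Finset.mem_range]
      by_contra hxj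
      push_neg at hxj
      rcases eq_or_lt_of_le hxj with rfl | h
      · exact hnj hx
      · exact hnj (hdc x hx j h)
    have := Finset.card_le_card hsub
    simp only [Finset.card_range] at this
    omega

lemma master_s7 (n t q : ℕ) (hn : 5 ≤ n) (ht : 0 < t) (s : ℕ → ℕ)
    (h0 : s 0 = 0) (hT : s t = 3 * n)
    (hq : ∀ i < t, s i + q ≤ s (i+1) ∧ s (i+1) ≤ s i + q + 1)
    (hgood : ∀ i < t,
      (∀ B, (B = n ∨ B = 2*n) → ¬(s i < B ∧ B < s (i+1))) ∨
      (s (i+1) ≤ s i + 4 ∧ ∃ B, (B = n ∨ B = 2*n) ∧ s i < B ∧ B < s (i+1) ∧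
        (B = s i + 1 ∨ s (i+1) = B + 1))) :
    EqTreeColorable (K3 n) t 3 := by
  have hmono : ∀ i j, i ≤ j → j ≤ t → s i ≤ s j := by
    intro i j hij hjt
    induction j with
    | zero => obtain rfl := Nat.le_zero.mp hij; exact le_rfl
    | succ j ih =>
      rcases Nat.lt_succ_iff_lt_or_eq.mp (Nat.lt_succ_of_le hij) with h | h
      · exact le_trans (ih (by omega) (by omega)) (by have := hq j (by omega); omega)
      · exact h ▸ le_rfl
  classical
  set pos : (Σ _ : Fin 3, Fin n) → ℕ := fun v => n * v.1.val + v.2.val with hpos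
  have hkey : ∀ p x p' x' : ℕ, x < n → x' < n → p < 3 → p' < 3 →
      n*p+x = n*p'+x' → p = p' ∧ x = x' := by
    intro p x p' x' h1 h2 h3 h4 h5
    interval_cases p <;> interval_cases p' <;> omega
  have posinj : Function.Injective pos := by
    rintro ⟨⟨p, hp⟩, ⟨x, hx⟩⟩ ⟨⟨p', hp'⟩, ⟨x', hx'⟩⟩ h
    simp only [hpos] at h
    obtain ⟨h1, h2⟩ := hkey p x p' x' hx hx' hp hp' h
    subst h1; subst h2; rfl
  have hposlt : ∀ v, pos v < 3 * n := by
    rintro ⟨⟨p, hp⟩, ⟨x, hx⟩⟩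
    simp only [hpos]
    interval_cases p <;> omega
  have hsurj : ∀ x < 3 * n, ∃ v, pos v = x := by
    intro x hx
    refine ⟨⟨⟨x / n, ?_⟩, ⟨x % n, Nat.mod_lt _ (by omega)⟩⟩, ?_⟩
    · exact Nat.div_lt_of_lt_mul (by omega)
    · simp only [hpos]
      exact Nat.div_add_mod x n
  set cnt : (Σ _ : Fin 3, Fin n) → ℕ :=
    fun v => ((Finset.range t).filter (fun i => s (i+1) ≤ pos v)).card with hcntdef
  have hcnt : ∀ v, cnt v < t ∧ s (cnt v) ≤ pos v ∧ pos v < s (cnt v + 1) := by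
    intro v
    set S := (Finset.range t).filter (fun i => s (i+1) ≤ pos v) with hS
    have hmem : ∀ j, j ∈ S ↔ (j < t ∧ s (j+1) ≤ pos v) := by
      intro j; simp [hS, Finset.mem_filter]
    have hrange : S = Finset.range S.card := by
      apply filter_eq_range
      intro j hj k hk
      rw [hmem] at hj ⊢
      exact ⟨by omega, le_trans (hmono (k+1) (j+1) (by omega) (by omega)) hj.2⟩
    have hlt : S.card < t := by
      by_contra hge
      push_neg at hge
      have hsub : S ⊆ Finset.range t := Finset.filter_subset _ _
      have hle := Finset.card_le_card hsub
      rw [Finset.card_range] at hle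
      have hcardt : S.card = t := le_antisymm hle hge
      have : (t-1) ∈ S := by
        rw [hrange, hcardt, Finset.mem_range]; omega
      rw [hmem] at this
      have h2 : t - 1 + 1 = t := by omega
      rw [h2] at this
      have := hposlt v
      omega
    refine ⟨hlt, ?_, ?_⟩
    · show s S.card ≤ pos v
      rcases Nat.eq_zero_or_pos S.card with h | h
      · rw [h, h0]; omega
      · have hm : (S.card - 1) ∈ S := by
          rw [hrange]; simp only [Finset.card_range]
          exact Finset.mem_range.mpr (by omega)
        rw [hmem] at hm
        have h2 : S.card - 1 + 1 = S.card := by omega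
        rw [h2] at hm
        exact hm.2
    · show pos v < s (S.card + 1)
      have hns : S.card ∉ S := by
        intro hc
        rw [hrange] at hc
        simp only [Finset.card_range] at hc
        exact absurd (Finset.mem_range.mp hc) (lt_irrefl _)
      rw [hmem] at hns
      push_neg at hns
      exact hns hlt
  set f : (Σ _ : Fin 3, Fin n) → Fin t := fun v => ⟨cnt v, (hcnt v).1⟩ with hf
  have hclass : ∀ (i : Fin t) v, f v = i ↔ (s i.val ≤ pos v ∧ pos v < s (i.val+1)) := by
    intro i v
    constructor
    · intro h
      have := hcnt v
      rw [← h]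
      exact ⟨this.2.1, this.2.2⟩
    · rintro ⟨h1, h2⟩
      obtain ⟨hc1, hc2, hc3⟩ := hcnt v
      apply Fin.ext
      show cnt v = i.val
      by_contra hne
      rcases Nat.lt_or_ge (cnt v) i.val with h | h
      · have : s (cnt v + 1) ≤ s i.val := hmono _ _ (by omega) (by omega)
        omega
      · have : s (i.val + 1) ≤ s (cnt v) := hmono _ _ (by omega) (by omega)
        omega
  have hset : ∀ i : Fin t, {v | f v = i} = pos ⁻¹' (Set.Ico (s i.val) (s (i.val+1))) := by
    intro i
    ext v
    simp only [Set.mem_setOf_eq, Set.mem_preimage, Set.mem_Ico]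
    exact hclass i v
  have hcard : ∀ i : Fin t, ({v | f v = i} : Set _).ncard = s (i.val+1) - s i.val := by
    intro i
    rw [hset]
    have hsubrange : Set.Ico (s i.val) (s (i.val+1)) ⊆ Set.range pos := by
      intro x hx
      simp only [Set.mem_Ico] at hx
      have hxlt : x < 3 * n := by
        have := hmono (i.val+1) t (by omega) (by omega)
        omega
      obtain ⟨v, hv⟩ := hsurj x hxlt
      exact ⟨v, hv⟩
    have himg : pos '' (pos ⁻¹' (Set.Ico (s i.val) (s (i.val+1)))) =
        Set.Ico (s i.val) (s (i.val+1)) := Set.image_preimage_eq_of_subset hsubrange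
    rw [← Set.ncard_image_of_injective _ posinj, himg]
    rw [← Finset.coe_Ico, Set.ncard_coe_finset, Nat.card_Ico]
  have hsame : ∀ (u v : (Σ _ : Fin 3, Fin n)) (a b : ℕ), a ≤ pos u → pos u < b →
      a ≤ pos v → pos v < b → (∀ B, (B = n ∨ B = 2*n) → ¬(a < B ∧ B < b)) →
      u.1 = v.1 := by
    rintro ⟨⟨p, hp⟩, ⟨x, hx⟩⟩ ⟨⟨p', hp'⟩, ⟨x', hx'⟩⟩ a b h1 h2 h3 h4 hno
    simp only [hpos, Fin.val_mk] at h1 h2 h3 h4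
    simp only [Fin.mk.injEq]
    have hc1 := hno n (Or.inl rfl)
    have hc2 := hno (2*n) (Or.inr rfl)
    interval_cases p <;> interval_cases p' <;> omega
  have hstar1 : ∀ (u v : (Σ _ : Fin 3, Fin n)), ∀ a b B : ℕ, (B = n ∨ B = 2*n) →
      B = a + 1 → b ≤ a + 4 → a ≤ pos u → pos u < b → a ≤ pos v → pos v < b →
      u.1 ≠ v.1 → pos u = a ∨ pos v = a := by
    rintro ⟨⟨p, hp⟩, ⟨x, hx⟩⟩ ⟨⟨p', hp'⟩, ⟨x', hx'⟩⟩ a b B hB hBa hb h1 h2 h3 h4 hne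
    simp only [hpos, Fin.val_mk] at h1 h2 h3 h4 ⊢
    simp only [ne_eq, Fin.mk.injEq] at hne
    rcases hB with rfl | rfl <;> interval_cases p <;> interval_cases p' <;> omega
  have hstar2 : ∀ (u v : (Σ _ : Fin 3, Fin n)), ∀ a b B : ℕ, (B = n ∨ B = 2*n) →
      b = B + 1 → b ≤ a + 4 → a ≤ pos u → pos u < b → a ≤ pos v → pos v < b →
      u.1 ≠ v.1 → pos u = B ∨ pos v = B := by
    rintro ⟨⟨p, hp⟩, ⟨x, hx⟩⟩ ⟨⟨p', hp'⟩, ⟨x', hx'⟩⟩ a b B hB hBa hb h1 h2 h3 h4 hne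
    simp only [hpos, Fin.val_mk] at h1 h2 h3 h4 ⊢
    simp only [ne_eq, Fin.mk.injEq] at hne
    rcases hB with rfl | rfl <;> interval_cases p <;> interval_cases p' <;> omega
  refine ⟨f, ?_, ?_, ?_⟩
  · intro i j
    rw [hcard i, hcard j]
    have h1 := hq i.val i.isLt
    have h2 := hq j.val j.isLt
    omega
  · intro i
    rcases hgood i.val i.isLt with hno | ⟨hsz, B, hB, hB1, hB2, hB3⟩
    · apply acyclic_of_no_adj
      rintro ⟨u, hu⟩ ⟨v, hv⟩ hadj
      have hu' := (hclass i u).mp hu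
      have hv' := (hclass i v).mp hv
      have heq : u.1 = v.1 := hsame u v _ _ hu'.1 hu'.2 hv'.1 hv'.2 hno
      exact hadj heq
    · have hBlt : s i.val < 3 * n := by
        have := hmono (i.val + 1) t (by omega) (by omega)
        omega
      rcases hB3 with hB3 | hB3
      · obtain ⟨c0, hc0⟩ := hsurj (s i.val) hBlt
        have hc0mem : f c0 = i := (hclass i c0).mpr ⟨by omega, by omega⟩
        apply acyclic_of_star _ (⟨c0, hc0mem⟩ : {v | f v = i})
        rintro ⟨u, hu⟩ ⟨v, hv⟩ hadj
        have hu' := (hclass i u).mp hu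
        have hv' := (hclass i v).mp hv
        have hne : u.1 ≠ v.1 := hadj
        rcases hstar1 u v (s i.val) (s (i.val+1)) B hB hB3 hsz hu'.1 hu'.2 hv'.1 hv'.2 hne with h | h
        · exact Or.inl (Subtype.ext (posinj (h.trans hc0.symm)))
        · exact Or.inr (Subtype.ext (posinj (h.trans hc0.symm)))
      · have hBlt' : B < 3 * n := by
          have := hmono (i.val + 1) t (by omega) (by omega)
          omega
        obtain ⟨c0, hc0⟩ := hsurj B hBlt'
        have hc0mem : f c0 = i := (hclass i c0).mpr ⟨by omega, by omega⟩
        apply acyclic_of_star _ (⟨c0, hc0mem⟩ : {v | f v = i})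
        rintro ⟨u, hu⟩ ⟨v, hv⟩ hadj
        have hu' := (hclass i u).mp hu
        have hv' := (hclass i v).mp hv
        have hne : u.1 ≠ v.1 := hadj
        rcases hstar2 u v (s i.val) (s (i.val+1)) B hB hB3 hsz hu'.1 hu'.2 hv'.1 hv'.2 hne with h | h
        · exact Or.inl (Subtype.ext (posinj (h.trans hc0.symm)))
        · exact Or.inr (Subtype.ext (posinj (h.trans hc0.symm)))
  · intro i v0
    rcases hgood i.val i.isLt with hno | ⟨hsz, _⟩
    · have hempty : ((K3 n).induce {v | f v = i}).neighborSet v0 = ∅ := by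
        ext u
        simp only [mem_neighborSet, Set.mem_empty_iff_false, iff_false]
        intro hadj
        have hu' := (hclass i u.1).mp u.2
        have hv' := (hclass i v0.1).mp v0.2
        have heq : v0.1.1 = u.1.1 := hsame v0.1 u.1 _ _ hv'.1 hv'.2 hu'.1 hu'.2 hno
        exact hadj heq
      rw [hempty]
      simp
    · set G' := (K3 n).induce {v | f v = i}
      have hv0 : v0 ∉ G'.neighborSet v0 := fun h => G'.irrefl h
      have h1 : (G'.neighborSet v0).ncard + 1 = (insert v0 (G'.neighborSet v0)).ncard :=
        (Set.ncard_insert_of_notMem hv0 (Set.toFinite _)).symm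
      have h2 : (insert v0 (G'.neighborSet v0)).ncard ≤ (Set.univ : Set {v | f v = i}).ncard :=
        Set.ncard_le_ncard (Set.subset_univ _) (Set.toFinite _)
      have h3 : (Set.univ : Set {v | f v = i}).ncard = ({v | f v = i} : Set _).ncard := by
        rw [Set.ncard_univ, Nat.card_coe_set_eq]
      have h4 := hcard i
      omega

def s2 (P0 P1 P2 P3 P4 m i : ℕ) : ℕ :=
  if i ≤ P0 then 4*i
  else if i ≤ P1 then 4*P0 + 5*(i-P0)
  else if i ≤ P1+1 then 20*m+9 + 4*(i-P1)
  else if i ≤ P2 then 20*m+13 + 4*(i-(P1+1))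
  else if i ≤ P3 then 20*m+13 + 4*(P2-(P1+1)) + 5*(i-P2)
  else if i ≤ P3+1 then 40*m+23 + 4*(i-P3)
  else if i ≤ P4 then 40*m+27 + 4*(i-(P3+1))
  else 40*m+27 + 4*(P4-(P3+1)) + 5*(i-P4)

lemma s2_spec (P0 P1 P2 P3 P4 m i : ℕ) :
    (i ≤ P0 ∧ s2 P0 P1 P2 P3 P4 m i = 4*i) ∨
    (P0 ≤ i ∧ i ≤ P1 ∧ s2 P0 P1 P2 P3 P4 m i = 4*P0 + 5*(i-P0)) ∨
    (P1 ≤ i ∧ i ≤ P1+1 ∧ s2 P0 P1 P2 P3 P4 m i = 20*m+9 + 4*(i-P1)) ∨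
    (P1+1 ≤ i ∧ i ≤ P2 ∧ s2 P0 P1 P2 P3 P4 m i = 20*m+13 + 4*(i-(P1+1))) ∨
    (P2 ≤ i ∧ i ≤ P3 ∧ s2 P0 P1 P2 P3 P4 m i = 20*m+13 + 4*(P2-(P1+1)) + 5*(i-P2)) ∨
    (P3 ≤ i ∧ i ≤ P3+1 ∧ s2 P0 P1 P2 P3 P4 m i = 40*m+23 + 4*(i-P3)) ∨
    (P3+1 ≤ i ∧ i ≤ P4 ∧ s2 P0 P1 P2 P3 P4 m i = 40*m+27 + 4*(i-(P3+1))) ∨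
    (P4 ≤ i ∧ s2 P0 P1 P2 P3 P4 m i = 40*m+27 + 4*(P4-(P3+1)) + 5*(i-P4)) := by
  simp only [s2]
  split_ifs with h1 h2 h3 h4 h5 h6 h7
  · exact Or.inl ⟨h1, rfl⟩
  · exact Or.inr (Or.inl ⟨by omega, h2, rfl⟩)
  · exact Or.inr (Or.inr (Or.inl ⟨by omega, h3, rfl⟩))
  · exact Or.inr (Or.inr (Or.inr (Or.inl ⟨by omega, h4, rfl⟩)))
  · exact Or.inr (Or.inr (Or.inr (Or.inr (Or.inl ⟨by omega, h5, rfl⟩))))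
  · exact Or.inr (Or.inr (Or.inr (Or.inr (Or.inr (Or.inl ⟨by omega, h6, rfl⟩)))))
  · exact Or.inr (Or.inr (Or.inr (Or.inr (Or.inr (Or.inr (Or.inl ⟨by omega, h7, rfl⟩))))))
  · exact Or.inr (Or.inr (Or.inr (Or.inr (Or.inr (Or.inr (Or.inr ⟨by omega, rfl⟩))))))


def s1 (q r : ℕ) : ℕ → ℕ := fun i => q * i + min i r

lemma goodOf (n s0 e0 : ℕ)
    (h : ∀ B, (B = n ∨ B = 2*n) → s0 < B → B < e0 →
      (e0 ≤ s0 + 4 ∧ (B = s0+1 ∨ e0 = B+1))) :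
    (∀ B, (B = n ∨ B = 2*n) → ¬(s0 < B ∧ B < e0)) ∨
    (e0 ≤ s0 + 4 ∧ ∃ B, (B = n ∨ B = 2*n) ∧ s0 < B ∧ B < e0 ∧ (B = s0+1 ∨ e0 = B+1)) := by
  by_cases h1 : s0 < n ∧ n < e0
  · exact Or.inr ⟨(h n (Or.inl rfl) h1.1 h1.2).1, n, Or.inl rfl, h1.1, h1.2,
      (h n (Or.inl rfl) h1.1 h1.2).2⟩
  · by_cases h2 : s0 < 2*n ∧ 2*n < e0
    · exact Or.inr ⟨(h (2*n) (Or.inr rfl) h2.1 h2.2).1, 2*n, Or.inr rfl, h2.1, h2.2,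
        (h (2*n) (Or.inr rfl) h2.1 h2.2).2⟩
    · left
      intro B hB
      rcases hB with rfl | rfl
      · exact h1
      · exact h2

lemma caseIcore (n t q r m : ℕ) (hn : n = 20*m+12) (ht : 0 < t)
    (hqr : q * t + r = 3*n) (hrt : r < t)
    (hgood : ∀ i < t,
      (∀ B, (B = n ∨ B = 2*n) → ¬(s1 q r i < B ∧ B < s1 q r (i+1))) ∨
      (s1 q r (i+1) ≤ s1 q r i + 4 ∧ ∃ B, (B = n ∨ B = 2*n) ∧ s1 q r i < B ∧
        B < s1 q r (i+1) ∧ (B = s1 q r i + 1 ∨ s1 q r (i+1) = B + 1))) :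
    EqTreeColorable (K3 n) t 3 := by
  apply master_s7 n t q (by omega) ht (s1 q r) (by simp [s1]) ?_ ?_ hgood
  · show q * t + min t r = 3 * n
    rw [Nat.min_eq_right (Nat.le_of_lt hrt)]
    exact hqr
  · intro i hi
    show q*i + min i r + q ≤ q*(i+1) + min (i+1) r ∧
      q*(i+1) + min (i+1) r ≤ q*i + min i r + q + 1
    have e1 : q*(i+1) = q*i + q := by ring
    rw [e1]
    obtain ⟨X, hX⟩ : ∃ X, X = q * i := ⟨_, rfl⟩
    rw [← hX]
    omega

lemma caseI (n t q r m : ℕ) (hn : n = 20*m+12) (ht : 0 < t)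
    (hqr : q * t + r = 3*n) (hrt : r < t)
    (hcase : q ≤ 3 ∨ (q = 4 ∧ r ≤ 4*m+2 ∧ r % 4 = 0)) :
    EqTreeColorable (K3 n) t 3 := by
  apply caseIcore n t q r m hn ht hqr hrt
  intro i hi
  apply goodOf n
  intro B hB hB1 hB2
  have hq4 : q ≤ 4 := by omega
  interval_cases q <;> (simp only [s1] at hB1 hB2 ⊢; omega)



set_option maxHeartbeats 2000000 in
lemma caseII (n t a b c m : ℕ) (hn : n = 20*m+12) (ha : a ≤ m) (hb : b ≤ m)
    (hc : c ≤ m) (ht : t = 15*m+8-(a+b+c)) : EqTreeColorable (K3 n) t 3 := by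
  set P0 := 5*(m-a)+1 with hP0
  set P1 := P0+4*a+1 with hP1
  set P2 := P1+1+5*(m-b) with hP2
  set P3 := P2+4*b+2 with hP3
  set P4 := P3+1+5*(m-c)+1 with hP4
  have ht' : t = P4+4*c+1 := by omega
  apply master_s7 n t 4 (by omega) (by omega) (s2 P0 P1 P2 P3 P4 m)
  · have h := s2_spec P0 P1 P2 P3 P4 m 0
    omega
  · have h := s2_spec P0 P1 P2 P3 P4 m t
    omega
  · intro i hi
    have g1 := s2_spec P0 P1 P2 P3 P4 m i
    have g2 := s2_spec P0 P1 P2 P3 P4 m (i+1)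
    omega
  · intro i hi
    apply goodOf n
    intro B hB hB1 hB2
    have g1 := s2_spec P0 P1 P2 P3 P4 m i
    have g2 := s2_spec P0 P1 P2 P3 P4 m (i+1)
    omega

lemma main (m t n : ℕ) (hn : n = 20*m+12) (ht : 12*m+8 ≤ t) :
    EqTreeColorable (K3 n) t 3 := by
  have ht0 : 0 < t := by omega
  set q := 3*n/t with hq
  set r := 3*n%t with hr
  have h1 : t*q + r = 3*n := Nat.div_add_mod _ _
  have hrt : r < t := Nat.mod_lt _ ht0
  have hq4 : q ≤ 4 := by
    by_contra hgt
    push_neg at hgt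
    have h2 : t*5 ≤ t*q := Nat.mul_le_mul_left t hgt
    obtain ⟨X, hX⟩ : ∃ X, X = t*q := ⟨_, rfl⟩
    rw [← hX] at h1 h2
    omega
  rcases Nat.lt_or_ge q 4 with hq3 | hq4'
  · exact caseI n t q r m hn ht0 (by rw [Nat.mul_comm]; exact h1) hrt (Or.inl (by omega))
  · have hq'' : q = 4 := by omega
    rw [hq''] at h1
    have hr4 : r % 4 = 0 := by omega
    rcases Nat.lt_or_ge r (4*m+3) with hsmall | hbig
    · exact caseI n t 4 r m hn ht0 (by omega) hrt (Or.inr ⟨rfl, by omega, hr4⟩)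
    · have hrle : r ≤ 12*m+4 := by omega
      set R := r / 4 with hR
      have hr' : r = 4*R := by omega
      have hR1 : m+1 ≤ R := by omega
      have hR2 : R ≤ 3*m+1 := by omega
      set b := min (R-1-m) m with hb
      set c := R-1-m-b with hc
      exact caseII n t m b c m hn le_rfl (by omega) (by omega) (by omega)

theorem stmt7 (k m : ℕ) (hk : k = 5 * m + 3) :
    EqTreeColorable (K3 (4 * k)) (12 * m + 8) 3 ∧
    vaStrong (K3 (4 * k)) 3 ≤ (12 * k + 4) / 5 := by
  subst hk
  have hmem : ∀ t', 12*m+8 ≤ t' → EqTreeColorable (K3 (4*(5*m+3))) t' 3 :=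
    fun t' ht' => main m t' (4*(5*m+3)) (by omega) ht'
  refine ⟨hmem _ le_rfl, ?_⟩
  have h5 : (12*(5*m+3)+4)/5 = 12*m+8 := by omega
  rw [h5]
  exact Nat.sInf_le hmem
end

section
/- If k ≡ 3 (mod 5), say k = 5m+3, then K_{4k,4k,4k} has no equitable (12m+7, 3)-tree-coloring; hence va₃≡(K_{4k,4k,4k}) ≥ (12k+4)/5. -/
open SimpleGraph

lemma c4_false {W : Type} {G : SimpleGraph W} (hG : G.IsAcyclic) {a b c d : W}
    (hab : G.Adj a b) (hbc : G.Adj b c) (hcd : G.Adj c d) (hda : G.Adj d a)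
    (hac : a ≠ c) (hbd : b ≠ d) : False := by
  refine hG (Walk.cons hab (.cons hbc (.cons hcd (.cons hda .nil)))) ?_
  have h1 := hab.ne; have h2 := hbc.ne; have h3 := hcd.ne; have h4 := hda.ne
  constructor
  · constructor
    · simp [Walk.isTrail_def, Sym2.eq, Sym2.rel_iff']
      aesop
    · simp
  · simp
    aesop

lemma class_single_part {n : ℕ} (S : Set (Σ _ : Fin 3, Fin n))
    (hac : ((K3 n).induce S).IsAcyclic)
    (hdeg : ∀ v, (((K3 n).induce S).neighborSet v).ncard ≤ 3)
    (hcard : 5 ≤ S.ncard) : ∃ p, ∀ v ∈ S, v.1 = p := by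
  classical
  have hT : S.toFinite.toFinset.card = S.ncard := by
    rw [Set.ncard_eq_toFinset_card]
  obtain ⟨x1, hx1, x2, hx2, hx12, hpp⟩ :
      ∃ x1 ∈ S.toFinite.toFinset, ∃ x2 ∈ S.toFinite.toFinset, x1 ≠ x2 ∧ x1.1 = x2.1 := by
    apply Finset.exists_ne_map_eq_of_card_lt_of_maps_to (t := (Finset.univ : Finset (Fin 3)))
    · rw [hT]; simp only [Finset.card_univ, Fintype.card_fin]; omega
    · intro a _; exact Finset.mem_univ _
  rw [Set.Finite.mem_toFinset] at hx1 hx2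
  set p := x1.1 with hp
  refine ⟨p, ?_⟩
  by_contra hcon
  push_neg at hcon
  obtain ⟨v, hv, hvp⟩ := hcon
  have adj : ∀ (x y : ↥S), x.1.1 ≠ y.1.1 → ((K3 n).induce S).Adj x y := by
    intro x y h
    simp [K3, completeMultipartiteGraph]
    exact h
  by_cases hB : ∀ w ∈ S, w.1 ≠ p → w = v
  · -- degree argument
    have hvne : ∀ w ∈ S, w ≠ v → w.1 = p := by
      intro w hw hwv
      by_contra hwp
      exact hwv (hB w hw hwp)
    have hsub : {x : ↥S | x.1 ≠ v} ⊆ ((K3 n).induce S).neighborSet ⟨v, hv⟩ := by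
      intro x hx
      have : x.1.1 = p := hvne x.1 x.2 hx
      exact adj ⟨v, hv⟩ x (by rw [this]; exact hvp)
    have hA : {x : ↥S | x.1 ≠ v} = (Set.univ : Set ↥S) \ {⟨v, hv⟩} := by
      ext x
      simp [Subtype.ext_iff]
    have hAcard : ({x : ↥S | x.1 ≠ v}).ncard = S.ncard - 1 := by
      rw [hA, Set.ncard_diff_singleton_of_mem (Set.mem_univ _), Set.ncard_univ,
        Nat.card_coe_set_eq]
    have h1 : ({x : ↥S | x.1 ≠ v}).ncard ≤ (((K3 n).induce S).neighborSet ⟨v, hv⟩).ncard :=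
      Set.ncard_le_ncard hsub (Set.toFinite _)
    have h2 := hdeg ⟨v, hv⟩
    omega
  · push_neg at hB
    obtain ⟨w, hw, hwp, hwv⟩ := hB
    have hx2p : x2.1 = p := hpp.symm
    refine c4_false hac (a := (⟨x1, hx1⟩ : ↥S)) (b := ⟨v, hv⟩) (c := ⟨x2, hx2⟩) (d := ⟨w, hw⟩)
      (adj _ _ ?_) (adj _ _ ?_) (adj _ _ ?_) (adj _ _ ?_) ?_ ?_
    · exact fun h => hvp h.symm
    · rw [hx2p]; exact hvp
    · rw [hx2p]; exact fun h => hwp h.symm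
    · exact hwp
    · exact fun h => hx12 (by simpa [Subtype.ext_iff] using h)
    · exact fun h => hwv (by simpa [Subtype.ext_iff] using h.symm)

lemma no_col (k m : ℕ) (hk : k = 5 * m + 3) :
    ¬ EqTreeColorable (K3 (4 * k)) (12 * m + 7) 3 := by
  classical
  rintro ⟨f, heq, hacy, hdeg⟩
  set c : Fin (12 * m + 7) → ℕ :=
    fun i => (Finset.univ.filter (fun v : (Σ _ : Fin 3, Fin (4 * k)) => f v = i)).card with hc
  have hnc : ∀ i, ({v | f v = i} : Set (Σ _ : Fin 3, Fin (4 * k))).ncard = c i := by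
    intro i
    have : ({v | f v = i} : Set (Σ _ : Fin 3, Fin (4 * k)))
        = ↑(Finset.univ.filter (fun v : (Σ _ : Fin 3, Fin (4 * k)) => f v = i)) := by
      ext v; simp
    rw [this, Set.ncard_coe_finset]
  have hsum : ∑ i, c i = 12 * k := by
    have h1 : (Finset.univ : Finset (Σ _ : Fin 3, Fin (4 * k))).card = ∑ i, c i :=
      Finset.card_eq_sum_card_fiberwise (fun v _ => Finset.mem_univ (f v))
    have h2 : (Finset.univ : Finset (Σ _ : Fin 3, Fin (4 * k))).card = 12 * k := by
      simp [Finset.card_univ, Fintype.card_sigma]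
      omega
    omega
  have hge5 : ∀ i, 5 ≤ c i := by
    intro i
    by_contra h
    push_neg at h
    have hle : ∀ j, c j ≤ 5 := by
      intro j
      have := heq j i
      rw [hnc, hnc] at this
      omega
    have hs : ∑ j, c j ≤ (12 * m + 7) * 5 := by
      calc ∑ j, c j ≤ ∑ _j : Fin (12 * m + 7), 5 := Finset.sum_le_sum (fun j _ => hle j)
      _ = (12 * m + 7) * 5 := by simp [Finset.sum_const, Finset.card_univ]
    omega
  have hpart : ∀ i, ∃ p, ∀ v : (Σ _ : Fin 3, Fin (4 * k)), f v = i → v.1 = p := by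
    intro i
    obtain ⟨p, hp⟩ := class_single_part {v | f v = i} (hacy i) (hdeg i)
      (by rw [hnc]; exact hge5 i)
    exact ⟨p, fun v hv => hp v hv⟩
  choose g hg using hpart
  -- count part 0
  set P : Finset (Σ _ : Fin 3, Fin (4 * k)) :=
    Finset.univ.filter (fun v : (Σ _ : Fin 3, Fin (4 * k)) => v.1 = 0) with hPdef
  have hP : P.card = 4 * k := by
    have e : {v : (Σ _ : Fin 3, Fin (4 * k)) // v.1 = (0 : Fin 3)} ≃ Fin (4 * k) :=
      { toFun := fun x => x.1.2
        invFun := fun y => ⟨⟨0, y⟩, rfl⟩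
        left_inv := fun x => Subtype.ext (Sigma.ext x.2.symm (heq_of_eq rfl))
        right_inv := fun y => rfl }
    rw [hPdef, ← Fintype.card_subtype]
    rw [Fintype.card_congr e, Fintype.card_fin]
  have hPsum : P.card = ∑ i, (P.filter (fun v => f v = i)).card :=
    Finset.card_eq_sum_card_fiberwise (fun v _ => Finset.mem_univ (f v))
  have hfib : ∀ i, (P.filter (fun v => f v = i)).card = if g i = 0 then c i else 0 := by
    intro i
    by_cases hgi : g i = 0
    · rw [if_pos hgi]
      congr 1
      ext v
      simp only [hPdef, Finset.mem_filter, Finset.mem_univ, true_and]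
      constructor
      · rintro ⟨_, h⟩; exact h
      · intro h; exact ⟨by rw [hg i v h, hgi], h⟩
    · rw [if_neg hgi]
      rw [Finset.card_eq_zero]
      ext v
      simp only [hPdef, Finset.mem_filter, Finset.mem_univ, true_and, Finset.notMem_empty,
        iff_false, not_and]
      intro hv0 hfv
      exact hgi (by rw [← hg i v hfv, hv0])
  set A : Finset (Fin (12 * m + 7)) := Finset.univ.filter (fun i => g i = 0) with hA
  have hPA : P.card = ∑ i ∈ A, c i := by
    rw [hPsum]
    rw [Finset.sum_congr rfl (fun i _ => hfib i)]
    rw [← Finset.sum_filter]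
  have hlow : 5 * A.card ≤ ∑ i ∈ A, c i := by
    calc 5 * A.card = ∑ _i ∈ A, 5 := by simp [Finset.sum_const, Nat.mul_comm]
    _ ≤ ∑ i ∈ A, c i := Finset.sum_le_sum (fun i _ => hge5 i)
  have hE : ∑ i, (c i - 5) + (12 * m + 7) * 5 = 12 * k := by
    have : ∑ i, ((c i - 5) + 5) = ∑ i, c i :=
      Finset.sum_congr rfl (fun i _ => by have := hge5 i; omega)
    rw [Finset.sum_add_distrib] at this
    simp only [Finset.sum_const, Finset.card_univ, Fintype.card_fin, smul_eq_mul] at this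
    omega
  have hhigh : ∑ i ∈ A, c i ≤ 5 * A.card + 1 := by
    have h1 : ∑ i ∈ A, (c i - 5) ≤ ∑ i, (c i - 5) :=
      Finset.sum_le_sum_of_subset (Finset.subset_univ A)
    have h2 : ∑ i ∈ A, c i = ∑ i ∈ A, (c i - 5) + 5 * A.card := by
      have : ∑ i ∈ A, ((c i - 5) + 5) = ∑ i ∈ A, c i :=
        Finset.sum_congr rfl (fun i _ => by have := hge5 i; omega)
      rw [Finset.sum_add_distrib] at this
      simp only [Finset.sum_const, smul_eq_mul] at this
      omega
    omega
  omega

lemma col_big (k t' : ℕ) (h : 12 * k ≤ t') : EqTreeColorable (K3 (4 * k)) t' 3 := by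
  classical
  have hcard : Fintype.card (Σ _ : Fin 3, Fin (4 * k)) ≤ Fintype.card (Fin t') := by
    simp [Fintype.card_sigma]
    omega
  obtain ⟨e⟩ := Function.Embedding.nonempty_of_card_le hcard
  refine ⟨e, ?_, ?_, ?_⟩
  · intro i j
    have hss : ({v | e v = i} : Set (Σ _ : Fin 3, Fin (4 * k))).ncard ≤ 1 := by
      rw [Set.ncard_le_one (Set.toFinite _)]
      intro a ha b hb
      exact e.injective (ha.trans hb.symm)
    exact hss.trans (Nat.le_add_left 1 _)
  · intro i v w hw
    cases w with
    | nil => exact absurd rfl hw.ne_nil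
    | cons h q =>
      rename_i x
      exact h.ne (Subtype.ext (e.injective (v.2.trans x.2.symm)))
  · intro i v
    have : (((K3 (4 * k)).induce {v | e v = i}).neighborSet v) = ∅ := by
      apply Set.eq_empty_iff_forall_notMem.mpr
      intro x hx
      have hadj : ((K3 (4 * k)).induce {v | e v = i}).Adj v x := hx
      exact hadj.ne (Subtype.ext (e.injective ((v.prop).trans (x.prop).symm)))
    rw [this]
    simp

theorem stmt8 (k m : ℕ) (hk : k = 5 * m + 3) :
    ¬ EqTreeColorable (K3 (4 * k)) (12 * m + 7) 3 ∧
    (12 * k + 4) / 5 ≤ vaStrong (K3 (4 * k)) 3 := by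
  refine ⟨no_col k m hk, ?_⟩
  rw [vaStrong]
  set S := {t | ∀ t', t ≤ t' → EqTreeColorable (K3 (4 * k)) t' 3} with hS
  have hne : (12 * k) ∈ S := fun t' ht' => col_big k t' ht'
  have hmem : sInf S ∈ S := Nat.sInf_mem ⟨_, hne⟩
  by_contra hcon
  push_neg at hcon
  have hlt : sInf S ≤ 12 * m + 7 := by omega
  exact no_col k m hk (hmem (12 * m + 7) hlt)
end

section
/- If k = 5m with m ≥ 2q+1 and q ≥ 2, then va₃≡(K_{4k,4k,4k}) ≤ 12m − 3q − 3. -/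
open SimpleGraph

namespace Stmt10Aux


abbrev V (n : ℕ) := Σ _ : Fin 3, Fin n

def eidx {n : ℕ} (v : V n) : ℕ := n * v.1.val + v.2.val

lemma K3_adj {n : ℕ} {v w : V n} : (K3 n).Adj v w ↔ v.1 ≠ w.1 := Iff.rfl

lemma induce_adj {n : ℕ} {S : Set (V n)} {a b : ↥S} :
    ((K3 n).induce S).Adj a b ↔ (a : V n).1 ≠ (b : V n).1 := Iff.rfl

lemma eidx_lt {n : ℕ} (v : V n) : eidx v < 3 * n := by
  have h1 : v.1.val < 3 := v.1.isLt
  have h2 : v.2.val < n := v.2.isLt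
  have h3 : n * v.1.val ≤ n * 2 := Nat.mul_le_mul_left n (by omega)
  unfold eidx; omega

lemma eidx_div {n : ℕ} (hn : 0 < n) (v : V n) : eidx v / n = v.1.val := by
  unfold eidx
  rw [Nat.mul_add_div hn, Nat.div_eq_of_lt v.2.isLt, Nat.add_zero]

lemma eidx_inj {n : ℕ} (hn : 0 < n) : Function.Injective (eidx (n := n)) := by
  intro v w h
  have h1 : v.1 = w.1 := Fin.ext (by rw [← eidx_div hn v, ← eidx_div hn w, h])
  obtain ⟨i, j⟩ := v; obtain ⟨i', j'⟩ := w
  simp only at h1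
  subst h1
  simp only [eidx] at h
  have : j = j' := Fin.ext (by omega)
  rw [this]

lemma ncard_slice {n : ℕ} (hn : 0 < n) {a b : ℕ} (hb : b ≤ 3 * n) :
    {v : V n | a ≤ eidx v ∧ eidx v < b}.ncard = b - a := by
  have himg : eidx '' {v : V n | a ≤ eidx v ∧ eidx v < b} = Set.Ico a b := by
    ext x
    constructor
    · rintro ⟨v, ⟨h1, h2⟩, rfl⟩; exact ⟨h1, h2⟩
    · rintro ⟨h1, h2⟩
      have hx3 : x < 3 * n := lt_of_lt_of_le h2 hb
      have hdiv : x / n < 3 := by rw [Nat.div_lt_iff_lt_mul hn]; omega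
      refine ⟨⟨⟨x / n, hdiv⟩, ⟨x % n, Nat.mod_lt _ hn⟩⟩, ?_, ?_⟩
      · have : eidx (⟨⟨x / n, hdiv⟩, ⟨x % n, Nat.mod_lt _ hn⟩⟩ : V n) = x := Nat.div_add_mod x n
        simp only [Set.mem_setOf_eq, this]; exact ⟨h1, h2⟩
      · exact Nat.div_add_mod x n
  rw [← Set.ncard_image_of_injective _ (eidx_inj hn), himg, ← Finset.coe_Ico,
    Set.ncard_coe_finset, Nat.card_Ico]

lemma ceil_le {d a x : ℕ} (hd : 0 < d) : (a + d - 1) / d ≤ x ↔ a ≤ x * d := by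
  rw [← Nat.lt_succ_iff, Nat.div_lt_iff_lt_mul hd, Nat.succ_mul]
  omega

lemma div_slice {M d : ℕ} (hM : 0 < M) (hd : 0 < d) (x e : ℕ) :
    e * d / M = x ↔ (x * M + d - 1) / d ≤ e ∧ e < ((x + 1) * M + d - 1) / d := by
  have h1 : (x * M + d - 1) / d ≤ e ↔ x * M ≤ e * d := ceil_le hd
  have h2 : ((x + 1) * M + d - 1) / d ≤ e ↔ (x + 1) * M ≤ e * d := ceil_le hd
  have h3 : x ≤ e * d / M ↔ x * M ≤ e * d := Nat.le_div_iff_mul_le hM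
  have h4 : e * d / M < x + 1 ↔ e * d < (x + 1) * M := Nat.div_lt_iff_lt_mul hM
  have h5 : (x + 1) * M = x * M + M := by ring
  omega

lemma ceil_bounds {M d s : ℕ} (hd : 0 < d) (h1 : d * s ≤ M) (h2 : M ≤ d * (s + 1)) (x : ℕ) :
    (x * M + d - 1) / d + s ≤ ((x + 1) * M + d - 1) / d ∧
      ((x + 1) * M + d - 1) / d ≤ (x * M + d - 1) / d + (s + 1) := by
  have hx1 : (x + 1) * M = x * M + M := by ring
  have e1 : (x * M + d - 1 + d * s) / d = (x * M + d - 1) / d + s :=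
    Nat.add_mul_div_left _ _ hd
  have e2 : (x * M + d - 1 + d * (s + 1)) / d = (x * M + d - 1) / d + (s + 1) :=
    Nat.add_mul_div_left _ _ hd
  constructor
  · rw [← e1]
    exact Nat.div_le_div_right (by omega)
  · rw [← e2]
    exact Nat.div_le_div_right (by omega)

lemma ceil_ub {M d : ℕ} (hd : 0 < d) {y : ℕ} (hy : y ≤ d) : (y * M + d - 1) / d ≤ M := by
  have h1 : y * M ≤ d * M := Nat.mul_le_mul_right M hy
  calc (y * M + d - 1) / d ≤ (d * M + (d - 1)) / d := Nat.div_le_div_right (by omega)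
    _ = M + (d - 1) / d := Nat.mul_add_div hd M (d - 1)
    _ = M := by rw [Nat.div_eq_of_lt (by omega : d - 1 < d)]; omega

lemma div_lt_of_lt {n c e : ℕ} (hn : 0 < n) (hc : 0 < c) (he : e < n) : e * c / n < c := by
  rw [Nat.div_lt_iff_lt_mul hn]
  calc e * c < n * c := (Nat.mul_lt_mul_right hc).mpr he
    _ = c * n := Nat.mul_comm n c


lemma master {n : ℕ} (hn : 3 ≤ n) {t s : ℕ} (f : V n → Fin t) (A : ℕ → ℕ)
    (hfib : ∀ x : Fin t, ∀ v : V n, f v = x ↔ A x.val ≤ eidx v ∧ eidx v < A (x.val + 1))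
    (hub : ∀ x : ℕ, x < t → A (x + 1) ≤ 3 * n)
    (hlo : ∀ x : ℕ, x < t → A x + s ≤ A (x + 1))
    (hhi : ∀ x : ℕ, x < t → A (x + 1) ≤ A x + s + 1)
    (hsafe : ∀ x : ℕ, x < t →
      (∃ i, i * n ≤ A x ∧ A (x + 1) ≤ (i + 1) * n) ∨ A (x + 1) ≤ A x + 3) :
    EqTreeColorable (K3 n) t 3 := by
  have hn0 : 0 < n := by omega
  have hseteq : ∀ x : Fin t,
      ({v | f v = x} : Set (V n)) = {v : V n | A x.val ≤ eidx v ∧ eidx v < A (x.val + 1)} := by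
    intro x; ext v; exact hfib x v
  have hcard : ∀ x : Fin t,
      ({v | f v = x} : Set (V n)).ncard = A (x.val + 1) - A x.val := by
    intro x; rw [hseteq x, ncard_slice hn0 (hub x.val x.isLt)]
  refine ⟨f, ?_, ?_, ?_⟩
  · intro i j
    have l1 := hlo j.val j.isLt
    have l2 := hhi i.val i.isLt
    have l3 := hlo i.val i.isLt
    rw [hcard i, hcard j]; omega
  · -- acyclicity
    intro x
    rcases hsafe x.val x.isLt with ⟨i, hi1, hi2⟩ | hwin
    · -- within part: no edges
      have hpart : ∀ v : V n, f v = x → v.1.val = i := by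
        intro v hv
        have hb := (hfib x v).mp hv
        have : eidx v / n = i := by
          have lb : i * n ≤ eidx v := le_trans hi1 hb.1
          have ub : eidx v < (i + 1) * n := lt_of_lt_of_le hb.2 hi2
          have h1 : i ≤ eidx v / n := (Nat.le_div_iff_mul_le hn0).mpr lb
          have h2 : eidx v / n < i + 1 := (Nat.div_lt_iff_lt_mul hn0).mpr ub
          omega
        rw [← this, eidx_div hn0]
      intro u c hc
      cases c with
      | nil => simpa using hc.three_le_length
      | cons h p =>
        rename_i w
        rw [induce_adj] at h
        exact h (Fin.ext (by rw [hpart _ u.2, hpart _ w.2]))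
    · -- small window: any cycle needs 3 distinct parts in a 3-window
      intro u c hc
      have h3 := hc.three_le_length
      have hlen : c.length ≤ 3 := by
        have hnd := hc.support_nodup.length_le_card
        rw [← Nat.card_eq_fintype_card, Nat.card_coe_set_eq, hcard x] at hnd
        have hle := hwin
        have hts : c.support.tail.length = c.length := by
          rw [List.length_tail, SimpleGraph.Walk.length_support]
          omega
        omega
      have hw : ∀ w : ↥({v | f v = x} : Set (V n)),
          A x.val ≤ eidx (w : V n) ∧ eidx (w : V n) < A x.val + 3 := by
        intro w
        have h := (hfib x w).mp w.2
        exact ⟨h.1, lt_of_lt_of_le h.2 hwin⟩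
      have hdv : ∀ w : ↥({v | f v = x} : Set (V n)),
          A x.val / n ≤ (w : V n).1.val ∧ (w : V n).1.val ≤ A x.val / n + 1 := by
        intro w
        have hb := hw w
        rw [← eidx_div hn0 (w : V n)]
        constructor
        · exact Nat.div_le_div_right hb.1
        · calc eidx (w : V n) / n ≤ (A x.val + n) / n := Nat.div_le_div_right (by omega)
            _ = A x.val / n + 1 := Nat.add_div_right _ hn0
      cases c with
      | nil => simpa using h3
      | cons h1 p1 =>
        cases p1 with
        | nil => simpa using h3
        | cons h2 p2 =>
          cases p2 with
          | nil => simpa using h3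
          | cons h3' p3 =>
            cases p3 with
            | cons h4 p4 =>
              exfalso
              simp only [SimpleGraph.Walk.length_cons] at hlen
              omega
            | nil =>
              rename_i a b
              rw [induce_adj] at h1 h2 h3'
              have d1 := hdv u
              have d2 := hdv a
              have d3 := hdv b
              have n1 : (u : V n).1.val ≠ (a : V n).1.val := fun hh => h1 (Fin.ext hh)
              have n2 : (a : V n).1.val ≠ (b : V n).1.val := fun hh => h2 (Fin.ext hh)
              have n3 : (b : V n).1.val ≠ (u : V n).1.val := fun hh => h3' (Fin.ext hh)
              omega
  · -- degrees
    intro x v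
    rcases hsafe x.val x.isLt with ⟨i, hi1, hi2⟩ | hwin
    · have hpart : ∀ w : V n, f w = x → w.1.val = i := by
        intro w hv
        have hb := (hfib x w).mp hv
        have : eidx w / n = i := by
          have lb : i * n ≤ eidx w := le_trans hi1 hb.1
          have ub : eidx w < (i + 1) * n := lt_of_lt_of_le hb.2 hi2
          have h1 : i ≤ eidx w / n := (Nat.le_div_iff_mul_le hn0).mpr lb
          have h2 : eidx w / n < i + 1 := (Nat.div_lt_iff_lt_mul hn0).mpr ub
          omega
        rw [← this, eidx_div hn0]
      have hempty : ((K3 n).induce {v | f v = x}).neighborSet v = ∅ := by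
        rw [Set.eq_empty_iff_forall_notMem]
        intro y hy
        rw [SimpleGraph.mem_neighborSet, induce_adj] at hy
        exact hy (Fin.ext (by rw [hpart _ v.2, hpart _ y.2]))
      rw [hempty, Set.ncard_empty]
      omega
    · calc (((K3 n).induce {v | f v = x}).neighborSet v).ncard
          ≤ (Set.univ : Set ↥({v | f v = x} : Set (V n))).ncard :=
            Set.ncard_le_ncard (Set.subset_univ _) Set.finite_univ
        _ = Nat.card ↥({v | f v = x} : Set (V n)) := Set.ncard_univ _
        _ = ({v | f v = x} : Set (V n)).ncard := Nat.card_coe_set_eq _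
        _ ≤ 3 := by have := hlo x.val x.isLt; rw [hcard x]; omega

lemma caseA {n t : ℕ} (hn : 3 ≤ n) (ht : n ≤ t) : EqTreeColorable (K3 n) t 3 := by
  have hN : 0 < 3 * n := by omega
  have ht0 : 0 < t := by omega
  have hflt : ∀ v : V n, eidx v * t / (3 * n) < t := by
    intro v
    rw [Nat.div_lt_iff_lt_mul hN]
    calc eidx v * t < (3 * n) * t := (Nat.mul_lt_mul_right ht0).mpr (eidx_lt v)
      _ = t * (3 * n) := Nat.mul_comm _ _
  set s := (3 * n) / t with hs
  have hdm : t * s + (3 * n) % t = 3 * n := by rw [hs]; exact Nat.div_add_mod _ _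
  have hmod := Nat.mod_lt (3 * n) ht0
  have hts : t * s ≤ 3 * n := by omega
  have hts2 : 3 * n ≤ t * (s + 1) := by
    have : t * (s + 1) = t * s + t := by ring
    omega
  refine master hn (s := s) (fun v => ⟨eidx v * t / (3 * n), hflt v⟩)
    (fun x => (x * (3 * n) + t - 1) / t) ?_ ?_ ?_ ?_ ?_
  · intro x v
    rw [Fin.ext_iff]
    exact div_slice hN ht0 x.val (eidx v)
  · intro x hx
    exact ceil_ub ht0 (by omega : x + 1 ≤ t)
  · intro x hx
    exact (ceil_bounds ht0 hts hts2 x).1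
  · intro x hx
    exact (ceil_bounds ht0 hts hts2 x).2
  · intro x hx
    right
    have e3 : (x * (3 * n) + t - 1 + t * 3) / t = (x * (3 * n) + t - 1) / t + 3 :=
      Nat.add_mul_div_left _ _ ht0
    calc ((x + 1) * (3 * n) + t - 1) / t ≤ (x * (3 * n) + t - 1 + t * 3) / t := by
          apply Nat.div_le_div_right
          have : (x + 1) * (3 * n) = x * (3 * n) + 3 * n := by ring
          omega
      _ = (x * (3 * n) + t - 1) / t + 3 := e3

/-- within-part block coloring on global index -/
def BF (n c0 c1 c2 e : ℕ) : ℕ :=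
  if e < n then e * c0 / n
  else if e < 2 * n then c0 + (e - n) * c1 / n
  else c0 + c1 + (e - 2 * n) * c2 / n

/-- boundary function -/
def BA (n c0 c1 c2 x : ℕ) : ℕ :=
  if x < c0 then (x * n + c0 - 1) / c0
  else if x < c0 + c1 then n + ((x - c0) * n + c1 - 1) / c1
  else 2 * n + ((x - (c0 + c1)) * n + c2 - 1) / c2

section BAeval
variable {n c0 c1 c2 : ℕ}

lemma ceil_full {c : ℕ} (hc : 0 < c) : (c * n + c - 1) / c = n := by
  have h1 : c * n + c - 1 = c * n + (c - 1) := by omega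
  rw [h1, Nat.mul_add_div hc, Nat.div_eq_of_lt (by omega : c - 1 < c)]
  omega

lemma ceil_zero {c : ℕ} (hc : 0 < c) : (0 * n + c - 1) / c = 0 := by
  rw [Nat.zero_mul, Nat.zero_add, Nat.div_eq_of_lt (by omega : c - 1 < c)]

lemma BA_lo (h00 : 0 < c0) (h10 : 0 < c1) {y : ℕ} (hy : y ≤ c0) :
    BA n c0 c1 c2 y = (y * n + c0 - 1) / c0 := by
  unfold BA
  rcases Nat.lt_or_ge y c0 with h | h
  · rw [if_pos h]
  · have hyc : y = c0 := by omega
    subst hyc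
    rw [if_neg (by omega), if_pos (by omega), Nat.sub_self, ceil_zero h10, ceil_full h00]
    omega

lemma BA_mid (h10 : 0 < c1) (h20 : 0 < c2) {y : ℕ} (hy1 : c0 ≤ y) (hy2 : y ≤ c0 + c1) :
    BA n c0 c1 c2 y = n + ((y - c0) * n + c1 - 1) / c1 := by
  unfold BA
  rcases Nat.lt_or_ge y (c0 + c1) with h | h
  · rw [if_neg (by omega), if_pos h]
  · have hyc : y = c0 + c1 := by omega
    rw [if_neg (by omega), if_neg (by omega), (by omega : y - (c0 + c1) = 0),
      (by omega : y - c0 = c1), ceil_zero h20, ceil_full h10]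
    omega

lemma BA_hi (h20 : 0 < c2) {y : ℕ} (hy1 : c0 + c1 ≤ y) :
    BA n c0 c1 c2 y = 2 * n + ((y - (c0 + c1)) * n + c2 - 1) / c2 := by
  unfold BA
  rw [if_neg (by omega), if_neg (by omega)]

end BAeval

lemma caseB {n t c0 c1 c2 s : ℕ} (hn : 3 ≤ n) (hsum : c0 + c1 + c2 = t)
    (h00 : 0 < c0) (h10 : 0 < c1) (h20 : 0 < c2)
    (hb0 : c0 * s ≤ n ∧ n ≤ c0 * (s + 1))
    (hb1 : c1 * s ≤ n ∧ n ≤ c1 * (s + 1))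
    (hb2 : c2 * s ≤ n ∧ n ≤ c2 * (s + 1)) :
    EqTreeColorable (K3 n) t 3 := by
  have hn0 : 0 < n := by omega
  have hFlt : ∀ e, e < 3 * n → BF n c0 c1 c2 e < t := by
    intro e he
    unfold BF
    split_ifs with h1 h2
    · have := div_lt_of_lt hn0 h00 h1; omega
    · have := div_lt_of_lt hn0 h10 (show e - n < n by omega); omega
    · have := div_lt_of_lt hn0 h20 (show e - 2 * n < n by omega); omega
  have key : ∀ x, x < t → ∀ e, e < 3 * n →
      (BF n c0 c1 c2 e = x ↔ BA n c0 c1 c2 x ≤ e ∧ e < BA n c0 c1 c2 (x + 1)) := by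
    intro x hx e he
    rcases Nat.lt_or_ge x c0 with hx0 | hx0
    · rw [BA_lo h00 h10 (by omega : x ≤ c0), BA_lo h00 h10 (by omega : x + 1 ≤ c0)]
      have hub1 : ((x + 1) * n + c0 - 1) / c0 ≤ n := ceil_ub h00 (by omega)
      unfold BF
      rcases Nat.lt_or_ge e n with he0 | he0
      · rw [if_pos he0]
        exact div_slice hn0 h00 x e
      · rcases Nat.lt_or_ge e (2 * n) with he1 | he1
        · rw [if_neg (by omega), if_pos he1]
          apply iff_of_false
          · intro h
            have : c0 ≤ x := by rw [← h]; exact Nat.le_add_right _ _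
            omega
          · rintro ⟨-, h2⟩
            have : e < n := lt_of_lt_of_le h2 hub1
            omega
        · rw [if_neg (by omega), if_neg (by omega)]
          apply iff_of_false
          · intro h
            have : c0 ≤ x := by
              rw [← h]; exact le_trans (Nat.le_add_right _ _) (Nat.le_add_right _ _)
            omega
          · rintro ⟨-, h2⟩
            have : e < n := lt_of_lt_of_le h2 hub1
            omega
    · rcases Nat.lt_or_ge x (c0 + c1) with hx1 | hx1
      · rw [BA_mid h10 h20 (by omega) (by omega : x ≤ c0 + c1),
          BA_mid h10 h20 (by omega) (by omega : x + 1 ≤ c0 + c1)]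
        have hxx : x + 1 - c0 = (x - c0) + 1 := by omega
        rw [hxx]
        have hub1 : ((x - c0 + 1) * n + c1 - 1) / c1 ≤ n := ceil_ub h10 (by omega)
        unfold BF
        rcases Nat.lt_or_ge e n with he0 | he0
        · rw [if_pos he0]
          apply iff_of_false
          · intro h
            have hq := div_lt_of_lt hn0 h00 he0
            rw [h] at hq; omega
          · rintro ⟨h1, -⟩
            have : n ≤ e := le_trans (Nat.le_add_right _ _) h1
            omega
        · rcases Nat.lt_or_ge e (2 * n) with he1 | he1
          · rw [if_neg (by omega), if_pos he1]
            have hd := div_slice hn0 h10 (x - c0) (e - n)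
            omega
          · rw [if_neg (by omega), if_neg (by omega)]
            apply iff_of_false
            · intro h
              have : c0 + c1 ≤ x := by rw [← h]; exact Nat.le_add_right _ _
              omega
            · rintro ⟨-, h2⟩
              have : e < n + n := lt_of_lt_of_le h2 (Nat.add_le_add_left hub1 n)
              omega
      · rw [BA_hi h20 (by omega : c0 + c1 ≤ x), BA_hi h20 (by omega : c0 + c1 ≤ x + 1)]
        have hxx : x + 1 - (c0 + c1) = (x - (c0 + c1)) + 1 := by omega
        rw [hxx]
        have hub1 : ((x - (c0 + c1) + 1) * n + c2 - 1) / c2 ≤ n := ceil_ub h20 (by omega)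
        unfold BF
        rcases Nat.lt_or_ge e n with he0 | he0
        · rw [if_pos he0]
          apply iff_of_false
          · intro h
            have hq := div_lt_of_lt hn0 h00 he0
            rw [h] at hq; omega
          · rintro ⟨h1, -⟩
            have : 2 * n ≤ e := le_trans (Nat.le_add_right _ _) h1
            omega
        · rcases Nat.lt_or_ge e (2 * n) with he1 | he1
          · rw [if_neg (by omega), if_pos he1]
            apply iff_of_false
            · intro h
              have hw := div_lt_of_lt hn0 h10 (show e - n < n by omega)
              omega
            · rintro ⟨h1, -⟩
              have : 2 * n ≤ e := le_trans (Nat.le_add_right _ _) h1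
              omega
          · rw [if_neg (by omega), if_neg (by omega)]
            have hd := div_slice hn0 h20 (x - (c0 + c1)) (e - 2 * n)
            omega
  refine master hn (s := s) (fun v => ⟨BF n c0 c1 c2 (eidx v), hFlt _ (eidx_lt v)⟩)
    (BA n c0 c1 c2) ?_ ?_ ?_ ?_ ?_
  · intro x v
    rw [Fin.ext_iff]
    exact key x.val x.isLt (eidx v) (eidx_lt v)
  · -- hub
    intro x hx
    rcases Nat.lt_or_ge (x + 1) (c0 + 1) with h | h
    · rw [BA_lo h00 h10 (by omega)]
      have := ceil_ub (M := n) h00 (show x + 1 ≤ c0 by omega)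
      omega
    · rcases Nat.lt_or_ge x (c0 + c1) with h2 | h2
      · rw [BA_mid h10 h20 (by omega) (by omega)]
        have := ceil_ub (M := n) h10 (show x + 1 - c0 ≤ c1 by omega)
        omega
      · rw [BA_hi h20 (by omega)]
        have := ceil_ub (M := n) h20 (show x + 1 - (c0 + c1) ≤ c2 by omega)
        omega
  · -- hlo
    intro x hx
    rcases Nat.lt_or_ge x c0 with h | h
    · rw [BA_lo h00 h10 (by omega : x ≤ c0), BA_lo h00 h10 (by omega : x + 1 ≤ c0)]
      exact (ceil_bounds h00 hb0.1 hb0.2 x).1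
    · rcases Nat.lt_or_ge x (c0 + c1) with h2 | h2
      · rw [BA_mid h10 h20 (by omega) (by omega : x ≤ c0 + c1),
          BA_mid h10 h20 (by omega) (by omega : x + 1 ≤ c0 + c1),
          (by omega : x + 1 - c0 = (x - c0) + 1)]
        have := (ceil_bounds h10 hb1.1 hb1.2 (x - c0)).1
        omega
      · rw [BA_hi h20 (by omega : c0 + c1 ≤ x), BA_hi h20 (by omega : c0 + c1 ≤ x + 1),
          (by omega : x + 1 - (c0 + c1) = (x - (c0 + c1)) + 1)]
        have := (ceil_bounds h20 hb2.1 hb2.2 (x - (c0 + c1))).1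
        omega
  · -- hhi
    intro x hx
    rcases Nat.lt_or_ge x c0 with h | h
    · rw [BA_lo h00 h10 (by omega : x ≤ c0), BA_lo h00 h10 (by omega : x + 1 ≤ c0)]
      exact (ceil_bounds h00 hb0.1 hb0.2 x).2
    · rcases Nat.lt_or_ge x (c0 + c1) with h2 | h2
      · rw [BA_mid h10 h20 (by omega) (by omega : x ≤ c0 + c1),
          BA_mid h10 h20 (by omega) (by omega : x + 1 ≤ c0 + c1),
          (by omega : x + 1 - c0 = (x - c0) + 1)]
        have := (ceil_bounds h10 hb1.1 hb1.2 (x - c0)).2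
        omega
      · rw [BA_hi h20 (by omega : c0 + c1 ≤ x), BA_hi h20 (by omega : c0 + c1 ≤ x + 1),
          (by omega : x + 1 - (c0 + c1) = (x - (c0 + c1)) + 1)]
        have := (ceil_bounds h20 hb2.1 hb2.2 (x - (c0 + c1))).2
        omega
  · -- hsafe : always within a part
    intro x hx
    left
    rcases Nat.lt_or_ge x c0 with h | h
    · refine ⟨0, ?_, ?_⟩
      · omega
      · rw [BA_lo h00 h10 (by omega : x + 1 ≤ c0)]
        have := ceil_ub (M := n) h00 (show x + 1 ≤ c0 by omega)
        omega
    · rcases Nat.lt_or_ge x (c0 + c1) with h2 | h2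
      · refine ⟨1, ?_, ?_⟩
        · rw [BA_mid h10 h20 (by omega) (by omega : x ≤ c0 + c1)]
          exact le_trans (le_of_eq (Nat.one_mul n)) (Nat.le_add_right _ _)
        · rw [BA_mid h10 h20 (by omega) (by omega : x + 1 ≤ c0 + c1)]
          have := ceil_ub (M := n) h10 (show x + 1 - c0 ≤ c1 by omega)
          omega
      · refine ⟨2, ?_, ?_⟩
        · rw [BA_hi h20 (by omega : c0 + c1 ≤ x)]
          exact Nat.le_add_right _ _
        · rw [BA_hi h20 (by omega : c0 + c1 ≤ x + 1)]
          have := ceil_ub (M := n) h20 (show x + 1 - (c0 + c1) ≤ c2 by omega)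
          omega

/-- special coloring for `t = n - 1` when `n ≡ 2 mod 3` -/
def CF (n e : ℕ) : ℕ :=
  if e < n - 2 then e / 3
  else if e < n + 1 then (n - 2) / 3
  else if e < n + 5 then (n - 2) / 3 + 1
  else if e < 2 * n then (n - 2) / 3 + 2 + (e - (n + 5)) / 3
  else if e < 2 * n + 8 then (n - 2) / 3 + 2 + (n - 5) / 3 + (e - 2 * n) / 4
  else (n - 2) / 3 + 4 + (n - 5) / 3 + (e - (2 * n + 8)) / 3

def CA (n x : ℕ) : ℕ :=
  if x < (n - 2) / 3 then 3 * x
  else if x = (n - 2) / 3 then n - 2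
  else if x = (n - 2) / 3 + 1 then n + 1
  else if x ≤ (n - 2) / 3 + 2 + (n - 5) / 3 then n + 5 + 3 * (x - ((n - 2) / 3 + 2))
  else if x ≤ (n - 2) / 3 + 4 + (n - 5) / 3 then
    2 * n + 4 * (x - ((n - 2) / 3 + 2 + (n - 5) / 3))
  else 2 * n + 8 + 3 * (x - ((n - 2) / 3 + 4 + (n - 5) / 3))

set_option maxHeartbeats 3000000 in
lemma caseC {n t : ℕ} (hn : 11 ≤ n) (hmod : n % 3 = 2) (ht : t = n - 1) :
    EqTreeColorable (K3 n) t 3 := by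
  subst ht
  have hFlt : ∀ e, e < 3 * n → CF n e < n - 1 := by
    intro e he
    unfold CF
    split_ifs <;> omega
  have key : ∀ x, x < n - 1 → ∀ e, e < 3 * n →
      (CF n e = x ↔ CA n x ≤ e ∧ e < CA n (x + 1)) := by
    intro x hx e he
    unfold CF CA
    split_ifs <;> omega
  refine master (by omega) (s := 3) (fun v => ⟨CF n (eidx v), hFlt _ (eidx_lt v)⟩)
    (CA n) ?_ ?_ ?_ ?_ ?_
  · intro x v
    rw [Fin.ext_iff]
    exact key x.val x.isLt (eidx v) (eidx_lt v)
  · intro x hx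
    unfold CA
    split_ifs <;> omega
  · intro x hx
    unfold CA
    split_ifs <;> omega
  · intro x hx
    unfold CA
    split_ifs <;> omega
  · intro x hx
    rcases Nat.lt_or_ge x ((n - 2) / 3) with h0 | h0
    · refine Or.inl ⟨0, ?_, ?_⟩ <;> (unfold CA; split_ifs <;> omega)
    · rcases Nat.eq_or_lt_of_le h0 with h1 | h1
      · refine Or.inr ?_
        unfold CA
        split_ifs <;> omega
      · rcases Nat.lt_or_ge x ((n - 2) / 3 + 2 + (n - 5) / 3) with h2 | h2
        · refine Or.inl ⟨1, ?_, ?_⟩ <;> (unfold CA; split_ifs <;> omega)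
        · refine Or.inl ⟨2, ?_, ?_⟩ <;> (unfold CA; split_ifs <;> omega)

lemma exists_c {m q t : ℕ} (hm : 2 * q + 1 ≤ m) (hq : 2 ≤ q)
    (h1 : 12 * m - 3 * q - 3 ≤ t) (h2 : t < 20 * m)
    (h3 : ¬(t = 20 * m - 1 ∧ m % 3 = 1)) :
    ∃ s c0 c1 c2, 0 < c0 ∧ 0 < c1 ∧ 0 < c2 ∧ c0 + c1 + c2 = t ∧
      (c0 * s ≤ 20 * m ∧ 20 * m ≤ c0 * (s + 1)) ∧
      (c1 * s ≤ 20 * m ∧ 20 * m ≤ c1 * (s + 1)) ∧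
      (c2 * s ≤ 20 * m ∧ 20 * m ≤ c2 * (s + 1)) := by
  have ht0 : 0 < t := by omega
  obtain ⟨s, hs⟩ : ∃ s, 60 * m / t = s := ⟨_, rfl⟩
  have hs3 : 3 ≤ s := by
    rw [← hs]
    exact (Nat.le_div_iff_mul_le ht0).mpr (by omega)
  have hs5 : s < 6 := by
    rw [← hs]
    rw [Nat.div_lt_iff_lt_mul ht0]
    omega
  have hdm : t * s + 60 * m % t = 60 * m := by rw [← hs]; exact Nat.div_add_mod _ _
  have hmd : 60 * m % t < t := Nat.mod_lt _ ht0
  rcases (by omega : s = 3 ∨ s = 4 ∨ s = 5) with rfl | rfl | rfl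
  · exact ⟨3, (t + 1) / 3, (t + 1) / 3, t - 2 * ((t + 1) / 3), by omega, by omega, by omega,
      by omega, ⟨by omega, by omega⟩, ⟨by omega, by omega⟩, ⟨by omega, by omega⟩⟩
  · exact ⟨4, (t + 1) / 3, (t + 1) / 3, t - 2 * ((t + 1) / 3), by omega, by omega, by omega,
      by omega, ⟨by omega, by omega⟩, ⟨by omega, by omega⟩, ⟨by omega, by omega⟩⟩
  · exact ⟨5, (t + 1) / 3, (t + 1) / 3, t - 2 * ((t + 1) / 3), by omega, by omega, by omega,
      by omega, ⟨by omega, by omega⟩, ⟨by omega, by omega⟩, ⟨by omega, by omega⟩⟩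

end Stmt10Aux

theorem stmt10 (k m q : ℕ) (hk : k = 5 * m) (hm : 2 * q + 1 ≤ m) (hq : 2 ≤ q) :
    vaStrong (K3 (4 * k)) 3 ≤ 12 * m - 3 * q - 3 := by
  subst hk
  rw [show 4 * (5 * m) = 20 * m by ring]
  unfold vaStrong
  apply Nat.sInf_le
  intro t' ht'
  have hn3 : 3 ≤ 20 * m := by omega
  rcases Nat.lt_or_ge t' (20 * m) with hlt | hge
  · by_cases hbad : t' = 20 * m - 1 ∧ m % 3 = 1
    · obtain ⟨hb1, hb2⟩ := hbad
      exact Stmt10Aux.caseC (by omega) (by omega) hb1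
    · obtain ⟨s, c0, c1, c2, p0, p1, p2, psum, q0, q1, q2⟩ :=
        Stmt10Aux.exists_c hm hq ht' hlt hbad
      exact Stmt10Aux.caseB hn3 psum p0 p1 p2 q0 q1 q2
  · exact Stmt10Aux.caseA hn3 hge
end

section
/- If k = 5m with m ≥ 2q and q ≥ 0, then va₃≡(K_{4k,4k,4k}) ≤ 12m − 3q. -/
open SimpleGraph

/-! Write `n = 4k = 20m` and let `t ≥ 12m - 3q` be the number of colours.

If `t ≤ 15m`, cut each part separately into `⌊t/3⌋` or `⌈t/3⌉` runs of consecutive vertices of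
near-equal length. Since `s ⌈t/3⌉ ≤ n ≤ (s+1) ⌊t/3⌋` for `s = 5` (when `t ≤ 12m`, using `2q ≤ m`)
or `s = 4` (when `t > 12m`), every run has `s` or `s + 1` vertices, and being inside one part it is
independent.

If `t > 15m`, list the `3n` vertices part by part and cut the list into `t` consecutive blocks,
the longer ones first. Every block has at most `4` vertices. A block of at most `3` consecutive
vertices meets at most two parts, one of them in a single vertex, so it induces a star. A block of
`4` vertices starts at a multiple of `4`, and since `4 ∣ n` it lies inside one part. -/

section ForestClass

variable {V : Type*} (G : SimpleGraph V) (k : ℕ)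

def IsForestClass (S : Set V) : Prop :=
  (G.induce S).IsAcyclic ∧ ∀ v, ((G.induce S).neighborSet v).ncard ≤ k

variable {G k}

lemma isForestClass_of_forall_not_adj {S : Set V} (h : ∀ u ∈ S, ∀ v ∈ S, ¬ G.Adj u v) :
    IsForestClass G k S := by
  have hbot : G.induce S = ⊥ := by
    ext u v
    simpa using h u u.2 v v.2
  refine ⟨hbot ▸ isAcyclic_bot, fun v => ?_⟩
  simp [hbot]

lemma isForestClass_of_forall_adj [Finite V] {S : Set V} {x : V} (hx : x ∈ S)
    (hS : S.ncard ≤ k + 1) (h : ∀ u ∈ S, ∀ v ∈ S, G.Adj u v → u = x ∨ v = x) :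
    IsForestClass G k S := by
  refine ⟨(isAcyclic_starGraph (⟨x, hx⟩ : S)).anti fun u v huv => ?_, fun v => ?_⟩
  · rw [starGraph_adj]
    exact ⟨huv.ne, by simpa [Subtype.ext_iff] using h u u.2 v v.2 huv⟩
  · have hlt : ((G.induce S).neighborSet v).ncard < Nat.card S :=
      Set.ncard_lt_card fun huniv => (G.induce S).irrefl (huniv ▸ Set.mem_univ v : v ∈ _)
    rw [Nat.card_coe_set_eq] at hlt
    omega

end ForestClass

lemma eqTreeColorable_of_coloring {V : Type} {ι : Type*} [Fintype V] {G : SimpleGraph V}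
    {t k : ℕ} (e : ι ≃ Fin t) (f : V → ι) (s : ℕ)
    (hsize : ∀ i, {v | f v = i}.ncard ∈ Set.Icc s (s + 1))
    (hclass : ∀ i, IsForestClass G k {v | f v = i}) : EqTreeColorable G t k := by
  have hfiber : ∀ i, {v | e (f v) = i} = {v | f v = e.symm i} := fun i => by
    ext v
    exact e.eq_symm_apply.symm
  have hclass' : ∀ i, IsForestClass G k {v | e (f v) = i} := fun i => hfiber i ▸ hclass _
  refine ⟨e ∘ f, fun i j => ?_, fun i => (hclass' i).1, fun i => (hclass' i).2⟩
  have hi := hsize (e.symm i)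
  have hj := hsize (e.symm j)
  simp only [Function.comp_apply, hfiber, Set.mem_Icc] at hi hj ⊢
  omega

section CompleteMultipartite

variable {ι : Type*} {V : ι → Type*} {k : ℕ} {S : Set (Σ i, V i)}

lemma isForestClass_completeMultipartiteGraph_of_fst_eq (h : ∀ u ∈ S, ∀ v ∈ S, u.1 = v.1) :
    IsForestClass (completeMultipartiteGraph V) k S :=
  isForestClass_of_forall_not_adj fun u hu v hv huv => huv (h u hu v hv)

lemma isForestClass_completeMultipartiteGraph_of_fst_eq_of_ne [Finite (Σ i, V i)]
    {x : Σ i, V i} (hx : x ∈ S) (hS : S.ncard ≤ k + 1)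
    (h : ∀ u ∈ S, ∀ v ∈ S, u ≠ x → v ≠ x → u.1 = v.1) :
    IsForestClass (completeMultipartiteGraph V) k S :=
  isForestClass_of_forall_adj hx hS fun u hu v hv huv => by
    by_contra! hne
    exact huv (h u hu v hv hne.1 hne.2)

end CompleteMultipartite

/-- Cutting `[0, N)` into `t` consecutive blocks, the first `N % t` of length `N / t + 1` and the
others of length `N / t`, the `c`-th block starts at `blockStart N t c`. -/
def blockStart (N t c : ℕ) : ℕ := N / t * c + min c (N % t)

def blockIndex (N t y : ℕ) : ℕ := Nat.findGreatest (fun c => blockStart N t c ≤ y) (t - 1)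

section Blocks

variable {N t : ℕ}

lemma blockStart_mono (N t : ℕ) : Monotone (blockStart N t) := fun _ _ h =>
  add_le_add (Nat.mul_le_mul_left _ h) (min_le_min_right _ h)

lemma blockStart_succ (N t c : ℕ) :
    blockStart N t (c + 1) = blockStart N t c + (N / t + if c < N % t then 1 else 0) := by
  unfold blockStart
  split_ifs <;> rw [mul_add] <;> omega

lemma blockStart_self (ht : 0 < t) : blockStart N t t = N := by
  rw [blockStart, min_eq_right (Nat.mod_lt N ht).le, mul_comm]
  exact Nat.div_add_mod N t

lemma blockStart_succ_sub_mem_Icc {s : ℕ} (c : ℕ) (ht : 0 < t) (h₁ : s * t ≤ N)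
    (h₂ : N ≤ (s + 1) * t) :
    blockStart N t (c + 1) - blockStart N t c ∈ Set.Icc s (s + 1) := by
  have hdiv := Nat.div_add_mod N t
  have hs : s ≤ N / t := (Nat.le_div_iff_mul_le ht).2 h₁
  have hs' : N / t ≤ s + 1 := Nat.div_le_of_le_mul (by rwa [mul_comm])
  rw [blockStart_succ, Nat.add_sub_cancel_left, Set.mem_Icc]
  rcases hs'.lt_or_eq with hlt | heq
  · split_ifs <;> omega
  · have : N % t = 0 := by rw [heq, mul_comm] at hdiv; omega
    simp [this, heq]

lemma blockIndex_lt (y : ℕ) (ht : 0 < t) : blockIndex N t y < t :=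
  (Nat.findGreatest_le _).trans_lt (by omega)

lemma blockIndex_eq_iff {y c : ℕ} (hy : y < N) (hc : c < t) :
    blockIndex N t y = c ↔ blockStart N t c ≤ y ∧ y < blockStart N t (c + 1) := by
  rw [blockIndex, Nat.findGreatest_eq_iff]
  constructor
  · rintro ⟨-, hle, hgt⟩
    refine ⟨?_, ?_⟩
    · rcases Nat.eq_zero_or_pos c with rfl | hc0
      · simp [blockStart]
      · exact hle hc0.ne'
    · by_contra! h
      rcases (show c + 1 ≤ t by omega).lt_or_eq with h' | h'
      · exact hgt (Nat.lt_succ_self c) (by omega) h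
      · rw [h', blockStart_self (by omega)] at h
        omega
  · rintro ⟨hle, hlt⟩
    exact ⟨by omega, fun _ => hle, fun d hcd _ hd =>
      (hlt.trans_le (blockStart_mono N t (Nat.succ_le_of_lt hcd))).not_ge hd⟩

end Blocks

lemma ncard_preimage_val_Ico {N A B : ℕ} (h : B ≤ N) :
    (Fin.val ⁻¹' Set.Ico A B : Set (Fin N)).ncard = B - A := by
  rw [Set.ncard_preimage_of_injective_subset_range Fin.val_injective, Set.ncard_Ico_nat]
  rw [Fin.range_val]
  exact fun y hy => lt_of_lt_of_le hy.2 h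

lemma div_eq_div_of_mem_Ico_of_dvd {n A L y : ℕ} (hA : L ∣ A) (hn : L ∣ n)
    (hy : y ∈ Set.Ico A (A + L)) : y / n = A / n := by
  obtain ⟨α, rfl⟩ := hA
  obtain ⟨ν, rfl⟩ := hn
  have hL : 0 < L := by rcases hy with ⟨h1, h2⟩; omega
  have hyL : y / L = α := Nat.div_eq_of_lt_le (by rw [mul_comm]; exact hy.1)
    (by rw [add_mul, mul_comm, one_mul]; exact hy.2)
  rw [← Nat.div_div_eq_div_mul, ← Nat.div_div_eq_div_mul, hyL, Nat.mul_div_cancel_left _ hL]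

lemma window_div_eq_or_exists_center {n A L : ℕ} (hn : n ≠ 1)
    (hL : L ≤ 3 ∨ L ∣ A ∧ L ∣ n) :
    (∀ y ∈ Set.Ico A (A + L), ∀ z ∈ Set.Ico A (A + L), y / n = z / n) ∨
    ∃ x ∈ Set.Ico A (A + L), ∀ y ∈ Set.Ico A (A + L), ∀ z ∈ Set.Ico A (A + L),
      y ≠ x → z ≠ x → y / n = z / n := by
  rcases hL with hL | ⟨hA, hn'⟩
  swap
  · exact Or.inl fun y hy z hz => by
      rw [div_eq_div_of_mem_Ico_of_dvd hA hn' hy, div_eq_div_of_mem_Ico_of_dvd hA hn' hz]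
  rcases Nat.eq_zero_or_pos L with rfl | hL0
  · exact Or.inl fun y hy => by simp at hy
  right
  have hwin : ∀ y ∈ Set.Ico A (A + L), y = A ∨ y = A + 1 ∨ y = A + 2 := fun y hy => by
    simp only [Set.mem_Ico] at hy; omega
  have h₁ : (A + 1) / n = A / n + if n ∣ A + 1 then 1 else 0 := Nat.succ_div
  have h₂ : (A + 2) / n = (A + 1) / n + if n ∣ A + 2 then 1 else 0 := Nat.succ_div
  have hboth : ¬ (n ∣ A + 1 ∧ n ∣ A + 2) := fun ⟨h, h'⟩ =>
    hn (Nat.dvd_one.1 ((Nat.dvd_add_right h).1 h'))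
  by_cases h12 : (A + 1) / n = (A + 2) / n
  · refine ⟨A, ⟨le_rfl, by omega⟩, fun y hy z hz hyA hzA => ?_⟩
    rcases hwin y hy with rfl | rfl | rfl <;> rcases hwin z hz with rfl | rfl | rfl <;> omega
  · refine ⟨A + L - 1, ⟨by omega, by omega⟩, fun y hy z hz hyA hzA => ?_⟩
    split_ifs at h₁ h₂ <;> simp only [Set.mem_Ico] at hy hz <;>
      rcases hwin y hy with rfl | rfl | rfl <;> rcases hwin z hz with rfl | rfl | rfl <;> omega

lemma eqTreeColorable_K3_of_mul_le_of_le_mul {n t k : ℕ} (s : ℕ)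
    (h₁ : s * ((t + 2) / 3) ≤ n) (h₂ : n ≤ (s + 1) * (t / 3)) : EqTreeColorable (K3 n) t k := by
  set c : Fin 3 → ℕ := fun p => (t + p) / 3 with hc
  have hsum : ∑ p, c p = t := by
    simp only [hc, Fin.sum_univ_three]
    omega
  have hc_le : ∀ p, t / 3 ≤ c p ∧ c p ≤ (t + 2) / 3 := fun p => by
    have := p.isLt
    simp only [hc]
    omega
  have hpos : ∀ v : Σ _ : Fin 3, Fin n, 0 < c v.1 := fun v => by
    have := v.2.isLt
    have := (hc_le v.1).1
    by_contra! h
    nlinarith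
  let f : (Σ _ : Fin 3, Fin n) → Σ p, Fin (c p) := fun v =>
    ⟨v.1, blockIndex n (c v.1) v.2, blockIndex_lt _ (hpos v)⟩
  have hclass : ∀ i : Σ p, Fin (c p), {v | f v = i} =
      Sigma.mk i.1 '' (Fin.val ⁻¹'
        Set.Ico (blockStart n (c i.1) i.2) (blockStart n (c i.1) (i.2 + 1))) := by
    rintro ⟨p, i⟩
    ext ⟨p', j⟩
    simp only [Set.mem_ofPred_eq, Set.mem_image, Set.mem_preimage, f, Sigma.mk.inj_iff]
    constructor
    · rintro ⟨rfl, h⟩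
      exact ⟨j, (blockIndex_eq_iff j.isLt i.isLt).1 (Fin.ext_iff.1 (eq_of_heq h)), rfl, HEq.rfl⟩
    · rintro ⟨j', hj', rfl, h⟩
      obtain rfl := eq_of_heq h
      exact ⟨rfl, heq_of_eq (Fin.ext ((blockIndex_eq_iff j'.isLt i.isLt).2 hj'))⟩
  refine eqTreeColorable_of_coloring (finSigmaFinEquiv.trans (finCongr hsum)) f s (fun i => ?_)
    (fun i => ?_)
  · obtain ⟨p, i⟩ := i
    have hlt : (i : ℕ) < c p := i.isLt
    have hend := (blockStart_mono n _ hlt).trans (blockStart_self (by omega)).le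
    rw [hclass, Set.ncard_image_of_injective _ sigma_mk_injective, ncard_preimage_val_Ico hend]
    exact blockStart_succ_sub_mem_Icc _ (by omega) ((Nat.mul_le_mul_left s (hc_le p).2).trans h₁)
      (h₂.trans (Nat.mul_le_mul_left _ (hc_le p).1))
  · rw [hclass]
    exact isForestClass_completeMultipartiteGraph_of_fst_eq fun _ ⟨_, _, hu⟩ _ ⟨_, _, hv⟩ =>
      hu ▸ hv ▸ rfl

namespace K3

def position (n : ℕ) : (Σ _ : Fin 3, Fin n) ≃ Fin (3 * n) :=
  (Equiv.sigmaEquivProd _ _).trans finProdFinEquiv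

lemma position_div {n : ℕ} (v : Σ _ : Fin 3, Fin n) : (position n v : ℕ) / n = v.1 := by
  have hv := v.2.isLt
  simp only [position, Equiv.trans_apply, Equiv.sigmaEquivProd_apply, finProdFinEquiv_apply_val]
  rw [Nat.add_mul_div_left _ _ (by omega), Nat.div_eq_of_lt hv, zero_add]

lemma ncard_position_preimage_Ico {n A B : ℕ} (hB : B ≤ 3 * n) :
    (position n ⁻¹' (Fin.val ⁻¹' Set.Ico A B)).ncard = B - A := by
  rw [Set.ncard_preimage_of_injective_subset_range (position n).injective (by simp),
    ncard_preimage_val_Ico hB]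

lemma isForestClass_position_preimage_Ico {n A L : ℕ} (hn : n ≠ 1) (hAL : A + L ≤ 3 * n)
    (hL₄ : L ≤ 4) (hL : L ≤ 3 ∨ L ∣ A ∧ L ∣ n) :
    IsForestClass (K3 n) 3 (position n ⁻¹' (Fin.val ⁻¹' Set.Ico A (A + L))) := by
  obtain hsame | ⟨x, hx, hcenter⟩ := window_div_eq_or_exists_center hn hL
  · exact isForestClass_completeMultipartiteGraph_of_fst_eq fun u hu v hv =>
      Fin.ext (by rw [← position_div u, ← position_div v]; exact hsame _ hu _ hv)
  · have hx' : x < 3 * n := hx.2.trans_le hAL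
    refine isForestClass_completeMultipartiteGraph_of_fst_eq_of_ne
      (x := (position n).symm ⟨x, hx'⟩) (by simpa using hx)
      (by rw [ncard_position_preimage_Ico hAL]; omega) fun u hu v hv hux hvx => ?_
    have hne : ∀ w, w ≠ (position n).symm ⟨x, hx'⟩ → (position n w : ℕ) ≠ x :=
      fun w hw h => hw ((position n).eq_symm_apply.2 (Fin.ext h))
    have hpart := hcenter _ hu _ hv (hne u hux) (hne v hvx)
    rw [position_div u, position_div v] at hpart
    exact Fin.ext hpart

end K3

lemma eqTreeColorable_K3_of_lt {n t : ℕ} (hn : 4 ∣ n) (ht : 3 * n < 4 * t) :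
    EqTreeColorable (K3 n) t 3 := by
  have ht0 : 0 < t := by omega
  let f : (Σ _ : Fin 3, Fin n) → Fin t := fun v =>
    ⟨blockIndex (3 * n) t (K3.position n v), blockIndex_lt _ ht0⟩
  have hclass : ∀ c : Fin t, {v | f v = c} = K3.position n ⁻¹'
      (Fin.val ⁻¹' Set.Ico (blockStart (3 * n) t c) (blockStart (3 * n) t (c + 1))) :=
    fun c => Set.ext fun v => by
      simp only [Set.mem_ofPred_eq, Set.mem_preimage, f, Fin.ext_iff,
        blockIndex_eq_iff (K3.position n v).isLt c.isLt, Set.mem_Ico]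
  have hend : ∀ c : Fin t, blockStart (3 * n) t (c + 1) ≤ 3 * n := fun c =>
    (blockStart_mono _ t c.isLt).trans (blockStart_self ht0).le
  have hsize : ∀ c : Fin t, blockStart (3 * n) t (c + 1) - blockStart (3 * n) t c ∈
      Set.Icc (3 * n / t) (3 * n / t + 1) := fun c =>
    blockStart_succ_sub_mem_Icc _ ht0 (Nat.div_mul_le_self _ _)
      (by rw [add_mul, one_mul]; exact (Nat.lt_div_mul_add ht0).le)
  refine eqTreeColorable_of_coloring (Equiv.refl _) f (3 * n / t)
    (fun c => by rw [hclass, K3.ncard_position_preimage_Ico (hend c)]; exact hsize c) fun c => ?_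
  have hs : 3 * n / t ≤ 3 := Nat.lt_succ_iff.1 ((Nat.div_lt_iff_lt_mul ht0).2 (by omega))
  obtain ⟨L, hL⟩ :=
    Nat.exists_eq_add_of_le (blockStart_mono (3 * n) t (Nat.le_add_right (c : ℕ) 1))
  have hLs := hsize c
  rw [hclass, hL]
  rw [hL, Nat.add_sub_cancel_left] at hLs
  refine K3.isForestClass_position_preimage_Ico (by omega) (hL ▸ hend c)
    (by simp only [Set.mem_Icc] at hLs; omega) ?_
  have hsucc := blockStart_succ (3 * n) t c
  rw [hL] at hsucc
  by_cases hL₃ : L ≤ 3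
  · exact Or.inl hL₃
  split_ifs at hsucc with hca
  · have hL₄ : L = 4 := by omega
    refine Or.inr ⟨⟨c, ?_⟩, hL₄ ▸ hn⟩
    rw [hL₄, blockStart, min_eq_left hca.le, show 3 * n / t = 3 by omega]
    ring
  · omega

theorem stmt11 (k m q : ℕ) (hk : k = 5 * m) (hm : 2 * q ≤ m) :
    vaStrong (K3 (4 * k)) 3 ≤ 12 * m - 3 * q := by
  subst hk
  refine Nat.sInf_le fun t ht => ?_
  rcases le_or_gt t (15 * m) with h₁₅ | h₁₅
  · rcases le_or_gt t (12 * m) with h₁₂ | h₁₂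
    · exact eqTreeColorable_K3_of_mul_le_of_le_mul 5 (by omega) (by omega)
    · exact eqTreeColorable_K3_of_mul_le_of_le_mul 4 (by omega) (by omega)
  · exact eqTreeColorable_K3_of_lt (by omega) (by omega)
end

section
/- If k ≡ 2 (mod 5), say k = 5m+2, then K_{4k+1,4k+1,4k+1} has no equitable (12m+5, 3)-tree-coloring (since every color class would have size exactly 5 while the part size 20m+9 is not divisible by 5); hence va₃≡(K_{4k+1,4k+1,4k+1}) ≥ (12k+6)/5. -/
open SimpleGraph
open Finset

set_option maxHeartbeats 1000000

lemma eqTree_of_card_le {V : Type} [Fintype V] (G : SimpleGraph V) (t k : ℕ)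
    (h : Fintype.card V ≤ t) : EqTreeColorable G t k := by
  obtain ⟨f⟩ := Function.Embedding.nonempty_of_card_le
    (by simpa using h : Fintype.card V ≤ Fintype.card (Fin t))
  have hsub : ∀ i : Fin t, ∀ a b : {v | f v = i}, a = b := by
    rintro i ⟨a, ha⟩ ⟨b, hb⟩
    exact Subtype.ext (f.injective (ha.trans hb.symm))
  refine ⟨f, ?_, ?_, ?_⟩
  · intro i j
    have : ({v | f v = i} : Set V).ncard ≤ 1 :=
      (Set.ncard_le_one_iff (Set.toFinite _)).mpr
        (fun ha hb => congrArg Subtype.val (hsub i ⟨_, ha⟩ ⟨_, hb⟩))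
    omega
  · intro i v p hp
    cases p with
    | nil => exact hp.ne_nil rfl
    | cons h q => exact h.ne (hsub i _ _)
  · intro i v
    have : (G.induce {v | f v = i}).neighborSet v = ∅ := by
      ext w; simp only [mem_neighborSet, Set.mem_empty_iff_false, iff_false]
      intro h; exact h.ne (hsub i v w)
    simp [this]

lemma main_lem (m : ℕ) : ¬ EqTreeColorable (K3 (20*m+9)) (12*m+5) 3 := by
  rintro ⟨f, h1, h2, h3⟩
  classical
  let C : Fin (12*m+5) → ℕ :=
    fun i => (univ.filter (fun v : (Σ _ : Fin 3, Fin (20*m+9)) => f v = i)).card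
  have hCn : ∀ i, ({v | f v = i} : Set (Σ _ : Fin 3, Fin (20*m+9))).ncard = C i := by
    intro i
    rw [Set.ncard_eq_toFinset_card']
    congr 1
    ext v
    simp
  have h1' : ∀ i j, C i ≤ C j + 1 := by
    intro i j
    have := h1 i j
    rwa [hCn, hCn] at this
  have hsum : ∑ i, C i = 60*m+27 := by
    have := Finset.card_eq_sum_card_fiberwise
      (fun (x : (Σ _ : Fin 3, Fin (20*m+9))) (_ : x ∈ univ) => Finset.mem_univ (f x))
    rw [← this, card_univ]
    simp [Fintype.card_sigma]
    ring
  have hC : ∀ i, C i = 5 ∨ C i = 6 := by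
    intro i
    have hub : (12*m+5) * C i ≤ 60*m+27 + (12*m+5) := by
      calc (12*m+5) * C i = ∑ _j : Fin (12*m+5), C i := by simp [mul_comm]
        _ ≤ ∑ j, (C j + 1) := Finset.sum_le_sum (fun j _ => h1' i j)
        _ = 60*m+27 + (12*m+5) := by rw [Finset.sum_add_distrib, hsum]; simp
    have hlb : 60*m+27 ≤ (12*m+5) * (C i + 1) := by
      calc (60*m+27 : ℕ) = ∑ j, C j := hsum.symm
        _ ≤ ∑ _j : Fin (12*m+5), (C i + 1) := Finset.sum_le_sum (fun j _ => h1' j i)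
        _ = (12*m+5) * (C i + 1) := by simp [mul_comm]
    by_contra hcon
    rcases Nat.lt_or_ge (C i) 5 with h5 | h5
    · have : (12*m+5) * (C i + 1) ≤ (12*m+5) * 5 := Nat.mul_le_mul_left _ (by omega)
      omega
    · have h7 : 7 ≤ C i := by omega
      have : (12*m+5) * 7 ≤ (12*m+5) * C i := Nat.mul_le_mul_left _ h7
      omega
  -- degree bound: at most 3 class members outside a member's part
  have hdeg : ∀ (i : Fin (12*m+5)) (u : (Σ _ : Fin 3, Fin (20*m+9))) (hu : f u = i),
      (univ.filter (fun x : (Σ _ : Fin 3, Fin (20*m+9)) => f x = i ∧ x.1 ≠ u.1)).card ≤ 3 := by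
    intro i u hu
    have h3' := h3 i ⟨u, hu⟩
    have himg : (Subtype.val '' (((K3 (20*m+9)).induce {v | f v = i}).neighborSet ⟨u, hu⟩))
        = {x : (Σ _ : Fin 3, Fin (20*m+9)) | f x = i ∧ x.1 ≠ u.1} := by
      ext x
      simp only [Set.mem_image, mem_neighborSet, comap_adj, top_adj, K3, Set.mem_setOf_eq]
      constructor
      · rintro ⟨⟨y, hy⟩, hadj, rfl⟩
        exact ⟨hy, fun hxx => hadj (by simpa using hxx.symm)⟩
      · rintro ⟨hx, hne⟩
        exact ⟨⟨x, hx⟩, by simpa using fun hxx => hne hxx.symm, rfl⟩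
    have hle : ({x : (Σ _ : Fin 3, Fin (20*m+9)) | f x = i ∧ x.1 ≠ u.1}).ncard ≤ 3 := by
      rw [← himg, Set.ncard_image_of_injective _ Subtype.val_injective]
      exact h3'
    rwa [Set.ncard_eq_toFinset_card', Set.toFinset_setOf] at hle
  -- at least 2 class members in a member's own part
  have htwo : ∀ (i : Fin (12*m+5)) (u : (Σ _ : Fin 3, Fin (20*m+9))) (hu : f u = i),
      2 ≤ (univ.filter (fun x : (Σ _ : Fin 3, Fin (20*m+9)) => f x = i ∧ x.1 = u.1)).card := by
    intro i u hu
    have hsplit := Finset.card_filter_add_card_filter_not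
      (s := univ.filter (fun x : (Σ _ : Fin 3, Fin (20*m+9)) => f x = i))
      (p := fun x => x.1 = u.1)
    rw [Finset.filter_filter, Finset.filter_filter] at hsplit
    have hde := hdeg i u hu
    simp only [ne_eq] at hde
    have hCi : C i = (univ.filter (fun x : (Σ _ : Fin 3, Fin (20*m+9)) => f x = i)).card := rfl
    rcases hC i with h5 | h5 <;> rw [hCi] at h5 <;> omega
  -- every class lies in one part
  have hpart : ∀ (i : Fin (12*m+5)) (v w : (Σ _ : Fin 3, Fin (20*m+9))),
      f v = i → f w = i → v.1 = w.1 := by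
    intro i v w hv hw
    by_contra hvw
    obtain ⟨v1, hv1m, v2, hv2m, hvne⟩ := Finset.one_lt_card.mp (htwo i v hv)
    obtain ⟨w1, hw1m, w2, hw2m, hwne⟩ := Finset.one_lt_card.mp (htwo i w hw)
    simp only [mem_filter, mem_univ, true_and] at hv1m hv2m hw1m hw2m
    obtain ⟨hv1, hv1p⟩ := hv1m
    obtain ⟨hv2, hv2p⟩ := hv2m
    obtain ⟨hw1, hw1p⟩ := hw1m
    obtain ⟨hw2, hw2p⟩ := hw2m
    have hvv : v1.1 = v2.1 := hv1p.trans hv2p.symm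
    have hww : w1.1 = w2.1 := hw1p.trans hw2p.symm
    have hvw1 : v1.1 ≠ w1.1 := by rw [hv1p, hw1p]; exact hvw
    -- two distinct paths
    set S : Set (Σ _ : Fin 3, Fin (20*m+9)) := {v | f v = i} with hS
    let a1 : S := ⟨v1, hv1⟩
    let a2 : S := ⟨v2, hv2⟩
    let b1 : S := ⟨w1, hw1⟩
    let b2 : S := ⟨w2, hw2⟩
    have hadj : ∀ (a b : S), (a : (Σ _ : Fin 3, Fin (20*m+9))).1 ≠ (b : (Σ _ : Fin 3, Fin (20*m+9))).1 →
        ((K3 (20*m+9)).induce S).Adj a b := by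
      intro a b h
      simpa [K3] using h
    have e1 : ((K3 (20*m+9)).induce S).Adj a1 b1 := hadj _ _ hvw1
    have e2 : ((K3 (20*m+9)).induce S).Adj b1 a2 := hadj _ _ (by
      simp only [a2, b1, ← hvv]; exact fun h => hvw1 h.symm)
    have e3 : ((K3 (20*m+9)).induce S).Adj a1 b2 := hadj _ _ (by
      simp only [a1, b2, ← hww]; exact hvw1)
    have e4 : ((K3 (20*m+9)).induce S).Adj b2 a2 := hadj _ _ (by
      simp only [a2, b2, ← hvv, ← hww]; exact fun h => hvw1 h.symm)
    let p1 : ((K3 (20*m+9)).induce S).Walk a1 a2 := Walk.cons e1 (Walk.cons e2 Walk.nil)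
    let p2 : ((K3 (20*m+9)).induce S).Walk a1 a2 := Walk.cons e3 (Walk.cons e4 Walk.nil)
    have hp1 : p1.IsPath := by
      simp [p1, Walk.isPath_def]
      refine ⟨⟨?_, ?_⟩, ?_⟩
      · exact fun h => e1.ne h
      · exact fun h => hvne (congrArg Subtype.val h)
      · exact fun h => e2.ne h
    have hp2 : p2.IsPath := by
      simp [p2, Walk.isPath_def]
      refine ⟨⟨?_, ?_⟩, ?_⟩
      · exact fun h => e3.ne h
      · exact fun h => hvne (congrArg Subtype.val h)
      · exact fun h => e4.ne h
    have hupq := isAcyclic_iff_path_unique.mp (h2 i) ⟨p1, hp1⟩ ⟨p2, hp2⟩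
    have hsup := congrArg
      (fun q : ((K3 (20*m+9)).induce S).Path a1 a2 =>
        (q : ((K3 (20*m+9)).induce S).Walk a1 a2).support) hupq
    simp [p1, p2, Walk.support_cons] at hsup
    exact hwne (by simpa [b1, b2] using hsup)
  -- choose a representative part for each class
  have hex : ∀ i : Fin (12*m+5), ∃ u, f u = i := by
    intro i
    rcases Finset.card_pos.mp (show 0 < C i by rcases hC i with h | h <;> omega) with ⟨u, hu⟩
    exact ⟨u, (Finset.mem_filter.mp hu).2⟩
  choose u hu using hex
  let g : Fin (12*m+5) → Fin 3 := fun i => (u i).1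
  have hg : ∀ x : (Σ _ : Fin 3, Fin (20*m+9)), x.1 = g (f x) :=
    fun x => hpart (f x) x (u (f x)) rfl (hu _)
  -- part 0 count
  let P : Finset (Σ _ : Fin 3, Fin (20*m+9)) := univ.filter (fun v => v.1 = 0)
  have hPcard : P.card = 20*m+9 := by
    have hPu : P.card = (univ : Finset (Fin (20*m+9))).card := by
      apply Finset.card_bij' (fun (v : (Σ _ : Fin 3, Fin (20*m+9))) _ => v.2)
        (fun (x : Fin (20*m+9)) _ => ⟨0, x⟩)
      · intro a ha
        exact mem_univ _
      · intro a ha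
        simp [P]
      · rintro ⟨p, x⟩ ha
        simp only [P, mem_filter, mem_univ, true_and] at ha
        subst ha
        rfl
      · intro a ha
        rfl
    rw [hPu]
    simp
  have hPsum : ∑ i ∈ univ.filter (fun i => g i = 0), C i = 20*m+9 := by
    rw [← hPcard]
    have hfib : ∀ x ∈ P, f x ∈ univ.filter (fun i => g i = 0) := by
      intro x hx
      simp only [mem_filter, mem_univ, true_and]
      have hx0 : x.1 = 0 := by simpa [P] using hx
      rw [← hg x]
      exact hx0
    rw [Finset.card_eq_sum_card_fiberwise hfib]
    apply Finset.sum_congr rfl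
    intro i hi
    simp only [mem_filter, mem_univ, true_and] at hi
    have hPf : P.filter (fun x => f x = i) = univ.filter (fun v => f v = i) := by
      ext x
      simp only [P, mem_filter, mem_univ, true_and, Finset.filter_filter]
      constructor
      · rintro ⟨h1x, h2x⟩
        exact h2x
      · intro hxf
        refine ⟨?_, hxf⟩
        rw [hg x, hxf, hi]
    rw [hPf]
  -- final counting contradiction
  have key : ∀ (s : Finset (Fin (12*m+5))),
      ∑ i ∈ s, C i = 5 * s.card + (s.filter (fun i => C i = 6)).card := by
    intro s
    rw [← Finset.sum_filter_add_sum_filter_not s (fun i => C i = 6)]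
    have e1 : ∑ i ∈ s.filter (fun i => C i = 6), C i
        = 6 * (s.filter (fun i => C i = 6)).card := by
      rw [Finset.sum_congr rfl (fun i hi => (Finset.mem_filter.mp hi).2)]
      simp [mul_comm]
    have e2 : ∑ i ∈ s.filter (fun i => ¬ C i = 6), C i
        = 5 * (s.filter (fun i => ¬ C i = 6)).card := by
      rw [Finset.sum_congr rfl (fun i hi => by
        have := (Finset.mem_filter.mp hi).2; rcases hC i with h | h; exact h; omega)]
      simp [mul_comm]
    have e3 := Finset.card_filter_add_card_filter_not (s := s) (p := fun i => C i = 6)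
    omega
  have hglob := key univ
  rw [hsum, card_univ] at hglob
  have hcardt : Fintype.card (Fin (12*m+5)) = 12*m+5 := by simp
  have hloc := key (univ.filter (fun i => g i = 0))
  rw [hPsum] at hloc
  have hsub2 : ((univ.filter (fun i => g i = 0)).filter (fun i => C i = 6)).card
      ≤ (univ.filter (fun i => C i = 6)).card := by
    apply Finset.card_le_card
    intro x hx
    simp only [mem_filter, mem_univ, true_and] at hx ⊢
    exact hx.2
  omega

theorem stmt13 (k m : ℕ) (hk : k = 5 * m + 2) :
    ¬ EqTreeColorable (K3 (4 * k + 1)) (12 * m + 5) 3 ∧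
    (12 * k + 6) / 5 ≤ vaStrong (K3 (4 * k + 1)) 3 := by
  have hkk : 4 * k + 1 = 20 * m + 9 := by omega
  have hmain : ¬ EqTreeColorable (K3 (4 * k + 1)) (12 * m + 5) 3 := by
    rw [hkk]
    exact main_lem m
  refine ⟨hmain, ?_⟩
  have hdiv : (12 * k + 6) / 5 = 12 * m + 6 := by omega
  rw [hdiv, vaStrong]
  apply le_csInf
  · exact ⟨Fintype.card _, fun t' ht' => eqTree_of_card_le _ _ _ ht'⟩
  · intro b hb
    by_contra hlt
    push_neg at hlt
    exact hmain (hb (12*m+5) (by omega))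
end

section
/- If k ≡ 4 (mod 5), say k = 5m+4, then K_{4k+1,4k+1,4k+1} has no equitable (12m+10, 3)-tree-coloring; hence va₃≡(K_{4k+1,4k+1,4k+1}) ≥ (12k+7)/5. -/
open SimpleGraph

/-!
Since `3n = 5t + 1`, an equitable `t`-coloring of `K_{n,n,n}` has all classes of size `5` or `6`,
exactly one of size `6`. An induced forest of maximum degree `3` on at least five vertices of a
complete multipartite graph cannot meet two parts: every vertex would see at least two vertices of its own
part, and two vertices in different parts with two such partners each span a `4`-cycle. Hence each
part is a union of classes and has size `≡ 0` or `1 (mod 5)`, whereas `3n = 5t + 1` forces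
`n ≡ 2 (mod 5)`.
-/

open Finset

lemma SimpleGraph.IsAcyclic.eq_of_adj_of_adj {V : Type*} {G : SimpleGraph V} (hG : G.IsAcyclic)
    {x₁ x₂ y₁ y₂ : V} (hx : x₁ ≠ x₂) (h₁ : G.Adj x₁ y₁) (h₁' : G.Adj y₁ x₂)
    (h₂ : G.Adj x₁ y₂) (h₂' : G.Adj y₂ x₂) : y₁ = y₂ := by
  have hpath : ∀ {y} (h : G.Adj x₁ y) (h' : G.Adj y x₂), (Walk.cons h (Walk.cons h' .nil)).IsPath :=
    fun h h' => by simp [Walk.isPath_def, hx, h.ne, h'.ne]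
  simpa using congrArg (fun p : G.Path x₁ x₂ => p.1.snd)
    ((hG.subsingleton_path x₁ x₂).elim ⟨_, hpath h₁ h₁'⟩ ⟨_, hpath h₂ h₂'⟩)

namespace SimpleGraph.completeMultipartiteGraph

variable {ι : Type*} {V : ι → Type*} {S : Set (Σ i, V i)}

lemma induce_adj {a b : S} :
    ((completeMultipartiteGraph V).induce S).Adj a b ↔ a.1.1 ≠ b.1.1 := by
  simp

lemma ncard_neighborSet_induce (u : S) :
    (((completeMultipartiteGraph V).induce S).neighborSet u).ncard =
      {x ∈ S | x.1 ≠ u.1.1}.ncard := by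
  rw [← Set.ncard_image_of_injective _ Subtype.val_injective]
  congr 1
  ext x
  simp only [Set.mem_image, mem_neighborSet, induce_adj, Set.mem_ofPred_eq]
  constructor
  · rintro ⟨y, hy, rfl⟩
    exact ⟨y.2, hy.symm⟩
  · rintro ⟨hxS, hx⟩
    exact ⟨⟨x, hxS⟩, Ne.symm hx, rfl⟩

lemma exists_ne_fst_eq_of_ncard_neighborSet_induce_le {d : ℕ} (hS : d + 2 ≤ S.ncard)
    (hdeg : ∀ v, (((completeMultipartiteGraph V).induce S).neighborSet v).ncard ≤ d) (u : S) :
    ∃ a b, a ∈ S ∧ a.1 = u.1.1 ∧ b ∈ S ∧ b.1 = u.1.1 ∧ a ≠ b := by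
  have hunion : {x ∈ S | x.1 = u.1.1} ∪ {x ∈ S | x.1 ≠ u.1.1} = S := by
    ext x
    by_cases h : x.1 = u.1.1 <;> simp [h]
  have hle := Set.ncard_union_le {x ∈ S | x.1 = u.1.1} {x ∈ S | x.1 ≠ u.1.1}
  have hu := hdeg u
  rw [hunion] at hle
  rw [ncard_neighborSet_induce] at hu
  have hlt : 1 < {x ∈ S | x.1 = u.1.1}.ncard := by omega
  obtain ⟨a, b, ⟨ha, ha'⟩, ⟨hb, hb'⟩, hab⟩ :=
    (Set.one_lt_ncard_iff (Set.finite_of_ncard_pos (by omega))).mp hlt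
  exact ⟨a, b, ha, ha', hb, hb', hab⟩

lemma fst_eq_of_isAcyclic_induce {d : ℕ} (hS : d + 2 ≤ S.ncard)
    (hac : ((completeMultipartiteGraph V).induce S).IsAcyclic)
    (hdeg : ∀ v, (((completeMultipartiteGraph V).induce S).neighborSet v).ncard ≤ d) :
    ∀ v ∈ S, ∀ w ∈ S, v.1 = w.1 := by
  intro v hv w hw
  by_contra hne
  obtain ⟨x₁, x₂, hx₁, hx₁', hx₂, hx₂', hx⟩ :=
    exists_ne_fst_eq_of_ncard_neighborSet_induce_le hS hdeg ⟨v, hv⟩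
  obtain ⟨y₁, y₂, hy₁, hy₁', hy₂, hy₂', hy⟩ :=
    exists_ne_fst_eq_of_ncard_neighborSet_induce_le hS hdeg ⟨w, hw⟩
  refine hy (congrArg Subtype.val (hac.eq_of_adj_of_adj (x₁ := ⟨x₁, hx₁⟩) (x₂ := ⟨x₂, hx₂⟩)
    (y₁ := ⟨y₁, hy₁⟩) (y₂ := ⟨y₂, hy₂⟩) (fun h => hx (congrArg Subtype.val h)) ?_ ?_ ?_ ?_)) <;>
  simp only [induce_adj, hx₁', hx₂', hy₁', hy₂'] <;> first | exact hne | exact Ne.symm hne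

end SimpleGraph.completeMultipartiteGraph

section Counting

variable {ι : Type*} [Fintype ι] {c : ι → ℕ} {q : ℕ}

lemma le_of_le_add_one_of_mul_card_le_sum (hc : ∀ i j, c i ≤ c j + 1)
    (hsum : q * Fintype.card ι ≤ ∑ i, c i) (i : ι) : q ≤ c i := by
  by_contra! hi
  have : ∑ j, c j < ∑ _j : ι, q :=
    sum_lt_sum (fun j _ => (hc j i).trans hi) ⟨i, mem_univ i, hi⟩
  simp only [sum_const, card_univ, smul_eq_mul] at this
  rw [mul_comm] at this
  omega

lemma sum_le_mul_card_add_of_le [DecidableEq ι] {r : ℕ} (hq : ∀ i, q ≤ c i)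
    (hsum : ∑ i, c i = q * Fintype.card ι + r) (T : Finset ι) : ∑ i ∈ T, c i ≤ q * #T + r := by
  have hTc : #Tᶜ • q ≤ ∑ i ∈ Tᶜ, c i := card_nsmul_le_sum Tᶜ c q fun i _ => hq i
  have hsplit := sum_add_sum_compl T c
  rw [card_compl, smul_eq_mul] at hTc
  have hT := card_le_univ T
  have : q * Fintype.card ι = q * #T + (Fintype.card ι - #T) * q := by
    rw [mul_comm _ q, ← mul_add, Nat.add_sub_cancel' hT]
  omega

end Counting

lemma Finset.card_eq_sum_card_fiber_of_saturated {α β : Type*} [Fintype α] [DecidableEq β]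
    (f : α → β) (P : Finset α) (hP : ∀ v w, f v = f w → w ∈ P → v ∈ P) :
    #P = ∑ i ∈ P.image f, #{v | f v = i} := by
  rw [card_eq_sum_card_image f P]
  refine sum_congr rfl fun i hi => ?_
  obtain ⟨w, hw, rfl⟩ := mem_image.mp hi
  congr 1
  ext v
  simp only [mem_filter, mem_univ, true_and, and_iff_right_iff_imp]
  exact fun hvw => hP v w hvw hw

lemma lt_vaStrong_of_not_eqTreeColorable {V : Type} [Fintype V] {G : SimpleGraph V} {t k : ℕ}
    (h : ¬ EqTreeColorable G t k) : t < vaStrong G k := by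
  have hne : {s | ∀ t', s ≤ t' → EqTreeColorable G t' k}.Nonempty :=
    ⟨Fintype.card V, fun t' ht' => eqTreeColorable_of_card_le G k ht'⟩
  by_contra! hle
  exact h (Nat.sInf_mem hne t hle)

theorem not_eqTreeColorable_K3_s14 {n t : ℕ} (h : 3 * n = 5 * t + 1) :
    ¬ EqTreeColorable (K3 n) t 3 := by
  classical
  rintro ⟨f, heq, hac, hdeg⟩
  set c : Fin t → ℕ := fun i => #{v | f v = i}
  have hc : ∀ i, ({v | f v = i} : Set _).ncard = c i := fun i => by
    simp only [c]
    rw [← Set.ncard_coe_finset, coe_filter]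
    simp
  have hsum : ∑ i, c i = 5 * Fintype.card (Fin t) + 1 := by
    rw [Fintype.card_fin, ← h, ← card_eq_sum_card_fiberwise fun v _ => mem_coe.mpr (mem_univ (f v))]
    simp
  have hfive : ∀ i, 5 ≤ c i :=
    le_of_le_add_one_of_mul_card_le_sum (fun i j => by simpa [hc] using heq i j) (by omega)
  have hclass : ∀ v w, f v = f w → v.1 = w.1 := fun v w hvw =>
    completeMultipartiteGraph.fst_eq_of_isAcyclic_induce (d := 3) (by rw [hc]; exact hfive _)
      (hac (f w)) (hdeg (f w)) v hvw w rfl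
  set P : Finset (Σ _ : Fin 3, Fin n) := {v | v.1 = 0}
  have hP : #P = n := by
    rw [← Fintype.card_subtype, Fintype.card_congr (Equiv.sigmaSubtype 0), Fintype.card_fin]
  have hPT : #P = ∑ i ∈ P.image f, c i :=
    card_eq_sum_card_fiber_of_saturated f P fun v w hvw hw => by
      simpa [P, hclass v w hvw] using hw
  have hlow : #(P.image f) • 5 ≤ ∑ i ∈ P.image f, c i :=
    card_nsmul_le_sum _ c 5 fun i _ => hfive i
  have hup := sum_le_mul_card_add_of_le hfive hsum (P.image f)
  rw [smul_eq_mul] at hlow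
  omega

theorem stmt14 (k m : ℕ) (hk : k = 5 * m + 4) :
    ¬ EqTreeColorable (K3 (4 * k + 1)) (12 * m + 10) 3 ∧
    (12 * k + 7) / 5 ≤ vaStrong (K3 (4 * k + 1)) 3 := by
  have hnot : ¬ EqTreeColorable (K3 (4 * k + 1)) (12 * m + 10) 3 :=
    not_eqTreeColorable_K3_s14 (by omega)
  have := lt_vaStrong_of_not_eqTreeColorable hnot
  exact ⟨hnot, by omega⟩
end
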